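/- arXiv:math/0406043 — 9 statements merged into one kernel-verified Lean document; each statement's English description precedes it below -/
import Mathlib

section
/- The group V̂ is isomorphic to the group presented by three generators λ_0, σ_0, σ_1 subject to the relations λ_1^{-1}λ_2λ_1 = λ_3, λ_1^{-1}λ_3λ_1 = λ_4, σ_0^2 = 1, σ_1^2 = 1, [σ_0,σ_2] = [σ_0,σ_3] = 1, [σ_1,σ_3] = [σ_1,σ_4] = 1, σ_0σ_1σ_0 = σ_1σ_0σ_1, σ_1σ_2σ_1 = σ_2σ_1σ_2, λ_1^{-1}σ_2λ_1 = σ_3, λ_1^{-1}σ_3λ_1 = σ_4, σ_0λ_0 = λ_1σ_0σ_1, σ_1λ_1 = λ_2σ_1σ_2, [σ_0,λ_2] = [σ_0,λ_3] = 1, [σ_1,λ_3] = [σ_1,λ_4] = 1, where in these relations λ_1 abbreviates the word σ_0λ_0σ_1^{-1}σ_0^{-1}, and for i ≥ 2 the symbols λ_i and σ_i abbreviate the words λ_0^{1-i}λ_1λ_0^{i-1} and λ_0^{1-i}σ_1λ_0^{i-1} respectively. Moreover, an isomorphism is given by sending the generators λ_0, σ_0, σ_1 of the finite presentation to the elements λ_0,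 σ_0, σ_1 of V̂. -/
namespace BrinStmt0

/-- The free-group generators for the infinite presentation of `Vhat`:
`Sum.inl i` is the generator `λ_i` and `Sum.inr i` is the generator `σ_i`. -/
def lamF (i : ℕ) : FreeGroup (ℕ ⊕ ℕ) := FreeGroup.of (Sum.inl i)
def sigF (i : ℕ) : FreeGroup (ℕ ⊕ ℕ) := FreeGroup.of (Sum.inr i)

/-- The relators of the infinite presentation of the group `V̂`. -/
def vhatRels : Set (FreeGroup (ℕ ⊕ ℕ)) :=
  { r | (∃ m q : ℕ, m < q ∧ r = lamF q * lamF m * (lamF m * lamF (q+1))⁻¹) ∨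
        (∃ m : ℕ, r = sigF m * sigF m) ∨
        (∃ m n : ℕ, (m + 2 ≤ n ∨ n + 2 ≤ m) ∧
            r = sigF m * sigF n * (sigF n * sigF m)⁻¹) ∨
        (∃ m : ℕ, r = sigF m * sigF (m+1) * sigF m *
            (sigF (m+1) * sigF m * sigF (m+1))⁻¹) ∨
        (∃ m q : ℕ, m < q ∧ r = sigF q * lamF m * (lamF m * sigF (q+1))⁻¹) ∨
        (∃ m : ℕ, r = sigF m * lamF m * (lamF (m+1) * sigF m * sigF (m+1))⁻¹) ∨
        (∃ m : ℕ, r = sigF m * lamF (m+1) * (lamF m * sigF (m+1) * sigF m)⁻¹) ∨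
        (∃ m q : ℕ, q + 1 < m ∧ r = sigF q * lamF m * (lamF m * sigF q)⁻¹) }

/-- The group `V̂`, given by its infinite presentation. -/
abbrev Vhat := PresentedGroup vhatRels

/-- The generator `λ_i` of `V̂`. -/
def lamV (i : ℕ) : Vhat := PresentedGroup.of (Sum.inl i)
/-- The generator `σ_i` of `V̂`. -/
def sigV (i : ℕ) : Vhat := PresentedGroup.of (Sum.inr i)

/-- The element `v_n = λ_0^{n+1} λ_1 λ_0^{-n-2}` of `V̂`. -/
def vV (n : ℕ) : Vhat := lamV 0 ^ (n+1) * lamV 1 * lamV 0 ^ (-((n : ℤ) + 2))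
/-- The element `π_n = λ_0^{n+2} σ_1 λ_0^{-n-2}` of `V̂`. -/
def piV (n : ℕ) : Vhat := lamV 0 ^ (n+2) * sigV 1 * lamV 0 ^ (-((n : ℤ) + 2))
/-- The element `π̄_n = λ_0^{n+1} σ_0 λ_0^{-n-1}` of `V̂`. -/
def opiV (n : ℕ) : Vhat := lamV 0 ^ (n+1) * sigV 0 * lamV 0 ^ (-((n : ℤ) + 1))

/-- The three generators of the finite presentation: `0 ↦ λ_0`, `1 ↦ σ_0`, `2 ↦ σ_1`. -/
def L0 : FreeGroup (Fin 3) := FreeGroup.of 0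
def S0 : FreeGroup (Fin 3) := FreeGroup.of 1
def S1 : FreeGroup (Fin 3) := FreeGroup.of 2

/-- In the finite presentation `λ_1` abbreviates the word `σ_0 λ_0 σ_1⁻¹ σ_0⁻¹`. -/
def L1 : FreeGroup (Fin 3) := S0 * L0 * S1⁻¹ * S0⁻¹

/-- The word `λ_i`: `λ_0` for `i = 0`, and `λ_0^{1-i} λ_1 λ_0^{i-1}` for `i ≥ 1`
(for `i = 1` this is the word `λ_1` itself). -/
def LW : ℕ → FreeGroup (Fin 3)
  | 0 => L0
  | n + 1 => L0 ^ (-(n : ℤ)) * L1 * L0 ^ (n : ℤ)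

/-- The word `σ_i`: `σ_0` for `i = 0`, and `λ_0^{1-i} σ_1 λ_0^{i-1}` for `i ≥ 1`
(for `i = 1` this is `σ_1` itself). -/
def SW : ℕ → FreeGroup (Fin 3)
  | 0 => S0
  | n + 1 => L0 ^ (-(n : ℤ)) * S1 * L0 ^ (n : ℤ)

/-- The commutator `[x,y] = x⁻¹ y⁻¹ x y`. -/
def commW (x y : FreeGroup (Fin 3)) : FreeGroup (Fin 3) := x⁻¹ * y⁻¹ * x * y

/-- The relators of the finite presentation of `V̂` on the generators `λ_0, σ_0, σ_1`. -/
def finVhatRels : Set (FreeGroup (Fin 3)) :=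
  { (LW 1)⁻¹ * LW 2 * LW 1 * (LW 3)⁻¹,
    (LW 1)⁻¹ * LW 3 * LW 1 * (LW 4)⁻¹,
    SW 0 * SW 0,
    SW 1 * SW 1,
    commW (SW 0) (SW 2), commW (SW 0) (SW 3),
    commW (SW 1) (SW 3), commW (SW 1) (SW 4),
    SW 0 * SW 1 * SW 0 * (SW 1 * SW 0 * SW 1)⁻¹,
    SW 1 * SW 2 * SW 1 * (SW 2 * SW 1 * SW 2)⁻¹,
    (LW 1)⁻¹ * SW 2 * LW 1 * (SW 3)⁻¹,
    (LW 1)⁻¹ * SW 3 * LW 1 * (SW 4)⁻¹,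
    SW 0 * LW 0 * (LW 1 * SW 0 * SW 1)⁻¹,
    SW 1 * LW 1 * (LW 2 * SW 1 * SW 2)⁻¹,
    commW (SW 0) (LW 2), commW (SW 0) (LW 3),
    commW (SW 1) (LW 3), commW (SW 1) (LW 4) }

/-!
Conjugation by `λ_0 ^ j` raises the index of every `λ_i` and `σ_i` with `i ≥ 1` by `j`: in `V̂` this
is the case `m = 0` of the relations, and in the finitely presented group it is the definition of
the words `λ_i`, `σ_i`. So in the finitely presented group every family of relations of `V̂` follows
from its members of smallest index, except conjugation by `λ_1`, which is carried from `q = 2, 3`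
to all `q` by induction using `λ_2 λ_1 = λ_1 λ_3`. Conjugation by `λ_2` and `λ_3` then spreads the
finitely many commutation relations to all indices. The two presentations thus give mutually
inverse homomorphisms.
-/

section GroupLemmas

variable {G : Type*} [Group G]

theorem inv_mul_mul_eq_iff_semiconjBy {a b c : G} : a⁻¹ * b * a = c ↔ SemiconjBy a c b := by
  rw [mul_assoc, inv_mul_eq_iff_eq_mul, SemiconjBy, eq_comm]

theorem inv_mul_inv_mul_mul_eq_one_iff {a b : G} :
    a⁻¹ * b⁻¹ * a * b = 1 ↔ Commute a b := by
  rw [← Commute.inv_inv_iff, ← commutatorElement_eq_one_iff_commute, commutatorElement_def,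
    inv_inv, inv_inv]

theorem zpow_neg_mul_mul_zpow_of_semiconjBy {t : G} {x : ℕ → G}
    (hx : ∀ k, SemiconjBy t (x (k + 1)) (x k)) (n : ℕ) :
    t ^ (-(n : ℤ)) * x 0 * t ^ (n : ℤ) = x n := by
  induction n with
  | zero => simp
  | succ n ih =>
    rw [eq_inv_mul_of_mul_eq (hx n).eq, ← ih]
    push_cast
    group

theorem commute_of_semiconjBy_succ {a c : G} {x : ℕ → G} (hc : Commute a c)
    (h0 : Commute a (x 0)) (hx : ∀ n, SemiconjBy c (x (n + 1)) (x n)) (n : ℕ) :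
    Commute a (x n) := by
  induction n with
  | zero => exact h0
  | succ n ih =>
    rw [eq_inv_mul_of_mul_eq (hx n).eq]
    exact hc.inv_right.mul_right (ih.mul_right hc)

end GroupLemmas

section Vhat

@[simp] theorem mk_lamF (i : ℕ) : PresentedGroup.mk vhatRels (lamF i) = lamV i := rfl
@[simp] theorem mk_sigF (i : ℕ) : PresentedGroup.mk vhatRels (sigF i) = sigV i := rfl

theorem lamV_mul_lamV_of_lt {m q : ℕ} (h : m < q) : lamV q * lamV m = lamV m * lamV (q + 1) := by
  simpa using PresentedGroup.mk_eq_mk_of_mul_inv_mem (rels := vhatRels) <| .inl ⟨m, q, h, rfl⟩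

theorem sigV_mul_self (m : ℕ) : sigV m * sigV m = 1 := by
  simpa using PresentedGroup.one_of_mem (rels := vhatRels) <| .inr <| .inl ⟨m, rfl⟩

theorem sigV_commute {m n : ℕ} (h : m + 2 ≤ n) : Commute (sigV m) (sigV n) := by
  simpa [commute_iff_eq] using PresentedGroup.mk_eq_mk_of_mul_inv_mem (rels := vhatRels) <|
    .inr <| .inr <| .inl ⟨m, n, .inl h, rfl⟩

theorem sigV_braid (m : ℕ) :
    sigV m * sigV (m + 1) * sigV m = sigV (m + 1) * sigV m * sigV (m + 1) := by
  simpa using PresentedGroup.mk_eq_mk_of_mul_inv_mem (rels := vhatRels) <|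
    .inr <| .inr <| .inr <| .inl ⟨m, rfl⟩

theorem sigV_mul_lamV_of_lt {m q : ℕ} (h : m < q) : sigV q * lamV m = lamV m * sigV (q + 1) := by
  simpa using PresentedGroup.mk_eq_mk_of_mul_inv_mem (rels := vhatRels) <|
    .inr <| .inr <| .inr <| .inr <| .inl ⟨m, q, h, rfl⟩

theorem sigV_mul_lamV_self (m : ℕ) : sigV m * lamV m = lamV (m + 1) * sigV m * sigV (m + 1) := by
  simpa using PresentedGroup.mk_eq_mk_of_mul_inv_mem (rels := vhatRels) <|
    .inr <| .inr <| .inr <| .inr <| .inr <| .inl ⟨m, rfl⟩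

theorem sigV_commute_lamV {q m : ℕ} (h : q + 1 < m) : Commute (sigV q) (lamV m) := by
  simpa [commute_iff_eq] using PresentedGroup.mk_eq_mk_of_mul_inv_mem (rels := vhatRels) <|
    .inr <| .inr <| .inr <| .inr <| .inr <| .inr <| .inr ⟨m, q, h, rfl⟩

theorem lamV_succ (n : ℕ) : lamV (n + 1) = lamV 0 ^ (-(n : ℤ)) * lamV 1 * lamV 0 ^ (n : ℤ) :=
  (zpow_neg_mul_mul_zpow_of_semiconjBy (x := fun k ↦ lamV (k + 1))
    (fun k ↦ (lamV_mul_lamV_of_lt k.succ_pos).symm) n).symm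

theorem sigV_succ (n : ℕ) : sigV (n + 1) = lamV 0 ^ (-(n : ℤ)) * sigV 1 * lamV 0 ^ (n : ℤ) :=
  (zpow_neg_mul_mul_zpow_of_semiconjBy (x := fun k ↦ sigV (k + 1))
    (fun k ↦ (sigV_mul_lamV_of_lt k.succ_pos).symm) n).symm

theorem lamV_one : lamV 1 = sigV 0 * lamV 0 * (sigV 1)⁻¹ * (sigV 0)⁻¹ := by
  rw [sigV_mul_lamV_self 0]
  group

def wordToVhat : FreeGroup (Fin 3) →* Vhat := FreeGroup.lift ![lamV 0, sigV 0, sigV 1]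

theorem wordToVhat_LW (n : ℕ) : wordToVhat (LW n) = lamV n := by
  cases n with
  | zero => rfl
  | succ n => simp [wordToVhat, LW, L1, L0, S0, S1, lamV_succ n, ← lamV_one]

theorem wordToVhat_SW (n : ℕ) : wordToVhat (SW n) = sigV n := by
  cases n with
  | zero => rfl
  | succ n => simp [wordToVhat, SW, L0, S1, sigV_succ n]

theorem wordToVhat_finVhatRels : ∀ r ∈ finVhatRels, wordToVhat r = 1 := by
  simp only [finVhatRels, Set.mem_insert_iff, Set.mem_singleton_iff, forall_eq_or_imp, forall_eq,
    commW, map_mul, map_inv, wordToVhat_LW, wordToVhat_SW, mul_inv_eq_one,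
    inv_mul_mul_eq_iff_semiconjBy, inv_mul_inv_mul_mul_eq_one_iff]
  exact ⟨(lamV_mul_lamV_of_lt (by norm_num)).symm, (lamV_mul_lamV_of_lt (by norm_num)).symm,
    sigV_mul_self 0, sigV_mul_self 1,
    sigV_commute le_rfl, sigV_commute (by norm_num),
    sigV_commute le_rfl, sigV_commute (by norm_num),
    sigV_braid 0, sigV_braid 1,
    (sigV_mul_lamV_of_lt (by norm_num)).symm, (sigV_mul_lamV_of_lt (by norm_num)).symm,
    sigV_mul_lamV_self 0, sigV_mul_lamV_self 1,
    sigV_commute_lamV (by norm_num), sigV_commute_lamV (by norm_num),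
    sigV_commute_lamV (by norm_num), sigV_commute_lamV (by norm_num)⟩

end Vhat

section FinVhat

abbrev FinVhat := PresentedGroup finVhatRels

def lamG (n : ℕ) : FinVhat := PresentedGroup.mk finVhatRels (LW n)
def sigG (n : ℕ) : FinVhat := PresentedGroup.mk finVhatRels (SW n)

@[simp] theorem mk_LW (n : ℕ) : PresentedGroup.mk finVhatRels (LW n) = lamG n := rfl
@[simp] theorem mk_SW (n : ℕ) : PresentedGroup.mk finVhatRels (SW n) = sigG n := rfl

-- `SemiconjBy (lamG m) (x (q + 1)) (x q)` is the relation `λ_m⁻¹ x_q λ_m = x_{q+1}`.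
theorem semiconjBy_lamG_one_lamG_two : SemiconjBy (lamG 1) (lamG 3) (lamG 2) := by
  simpa [mul_inv_eq_one, inv_mul_mul_eq_iff_semiconjBy] using
    PresentedGroup.one_of_mem (rels := finVhatRels) (x := (LW 1)⁻¹ * LW 2 * LW 1 * (LW 3)⁻¹)
      (by simp [finVhatRels])

theorem semiconjBy_lamG_one_lamG_three : SemiconjBy (lamG 1) (lamG 4) (lamG 3) := by
  simpa [mul_inv_eq_one, inv_mul_mul_eq_iff_semiconjBy] using
    PresentedGroup.one_of_mem (rels := finVhatRels) (x := (LW 1)⁻¹ * LW 3 * LW 1 * (LW 4)⁻¹)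
      (by simp [finVhatRels])

theorem sigG_zero_mul_self : sigG 0 * sigG 0 = 1 := by
  simpa using PresentedGroup.one_of_mem (rels := finVhatRels) (x := SW 0 * SW 0)
    (by simp [finVhatRels])

theorem sigG_one_mul_self : sigG 1 * sigG 1 = 1 := by
  simpa using PresentedGroup.one_of_mem (rels := finVhatRels) (x := SW 1 * SW 1)
    (by simp [finVhatRels])

theorem commute_sigG_zero_sigG_two : Commute (sigG 0) (sigG 2) := by
  simpa [commW, inv_mul_inv_mul_mul_eq_one_iff] using
    PresentedGroup.one_of_mem (rels := finVhatRels) (x := commW (SW 0) (SW 2))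
      (by simp [finVhatRels])

theorem commute_sigG_zero_sigG_three : Commute (sigG 0) (sigG 3) := by
  simpa [commW, inv_mul_inv_mul_mul_eq_one_iff] using
    PresentedGroup.one_of_mem (rels := finVhatRels) (x := commW (SW 0) (SW 3))
      (by simp [finVhatRels])

theorem commute_sigG_one_sigG_three : Commute (sigG 1) (sigG 3) := by
  simpa [commW, inv_mul_inv_mul_mul_eq_one_iff] using
    PresentedGroup.one_of_mem (rels := finVhatRels) (x := commW (SW 1) (SW 3))
      (by simp [finVhatRels])

theorem commute_sigG_one_sigG_four : Commute (sigG 1) (sigG 4) := by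
  simpa [commW, inv_mul_inv_mul_mul_eq_one_iff] using
    PresentedGroup.one_of_mem (rels := finVhatRels) (x := commW (SW 1) (SW 4))
      (by simp [finVhatRels])

theorem sigG_braid_zero : sigG 0 * sigG 1 * sigG 0 = sigG 1 * sigG 0 * sigG 1 := by
  simpa using PresentedGroup.mk_eq_mk_of_mul_inv_mem (rels := finVhatRels)
    (x := SW 0 * SW 1 * SW 0) (y := SW 1 * SW 0 * SW 1) (by simp [finVhatRels])

theorem sigG_braid_one : sigG 1 * sigG 2 * sigG 1 = sigG 2 * sigG 1 * sigG 2 := by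
  simpa using PresentedGroup.mk_eq_mk_of_mul_inv_mem (rels := finVhatRels)
    (x := SW 1 * SW 2 * SW 1) (y := SW 2 * SW 1 * SW 2) (by simp [finVhatRels])

theorem semiconjBy_lamG_one_sigG_two : SemiconjBy (lamG 1) (sigG 3) (sigG 2) := by
  simpa [mul_inv_eq_one, inv_mul_mul_eq_iff_semiconjBy] using
    PresentedGroup.one_of_mem (rels := finVhatRels) (x := (LW 1)⁻¹ * SW 2 * LW 1 * (SW 3)⁻¹)
      (by simp [finVhatRels])

theorem semiconjBy_lamG_one_sigG_three : SemiconjBy (lamG 1) (sigG 4) (sigG 3) := by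
  simpa [mul_inv_eq_one, inv_mul_mul_eq_iff_semiconjBy] using
    PresentedGroup.one_of_mem (rels := finVhatRels) (x := (LW 1)⁻¹ * SW 3 * LW 1 * (SW 4)⁻¹)
      (by simp [finVhatRels])

theorem sigG_zero_mul_lamG_zero : sigG 0 * lamG 0 = lamG 1 * sigG 0 * sigG 1 := by
  simpa using PresentedGroup.mk_eq_mk_of_mul_inv_mem (rels := finVhatRels)
    (x := SW 0 * LW 0) (y := LW 1 * SW 0 * SW 1) (by simp [finVhatRels])

theorem sigG_one_mul_lamG_one : sigG 1 * lamG 1 = lamG 2 * sigG 1 * sigG 2 := by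
  simpa using PresentedGroup.mk_eq_mk_of_mul_inv_mem (rels := finVhatRels)
    (x := SW 1 * LW 1) (y := LW 2 * SW 1 * SW 2) (by simp [finVhatRels])

theorem commute_sigG_zero_lamG_two : Commute (sigG 0) (lamG 2) := by
  simpa [commW, inv_mul_inv_mul_mul_eq_one_iff] using
    PresentedGroup.one_of_mem (rels := finVhatRels) (x := commW (SW 0) (LW 2))
      (by simp [finVhatRels])

theorem commute_sigG_zero_lamG_three : Commute (sigG 0) (lamG 3) := by
  simpa [commW, inv_mul_inv_mul_mul_eq_one_iff] using
    PresentedGroup.one_of_mem (rels := finVhatRels) (x := commW (SW 0) (LW 3))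
      (by simp [finVhatRels])

theorem commute_sigG_one_lamG_three : Commute (sigG 1) (lamG 3) := by
  simpa [commW, inv_mul_inv_mul_mul_eq_one_iff] using
    PresentedGroup.one_of_mem (rels := finVhatRels) (x := commW (SW 1) (LW 3))
      (by simp [finVhatRels])

theorem commute_sigG_one_lamG_four : Commute (sigG 1) (lamG 4) := by
  simpa [commW, inv_mul_inv_mul_mul_eq_one_iff] using
    PresentedGroup.one_of_mem (rels := finVhatRels) (x := commW (SW 1) (LW 4))
      (by simp [finVhatRels])

def shift (j : ℕ) : MulAut FinVhat := MulAut.conj (lamG 0 ^ j)⁻¹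

theorem lamG_succ (n : ℕ) :
    lamG (n + 1) = lamG 0 ^ (-(n : ℤ)) * lamG 1 * lamG 0 ^ (n : ℤ) := by
  simp [lamG, LW]

theorem sigG_succ (n : ℕ) :
    sigG (n + 1) = lamG 0 ^ (-(n : ℤ)) * sigG 1 * lamG 0 ^ (n : ℤ) := by
  simp [lamG, sigG, LW, SW]

theorem shift_lamG (j k : ℕ) : shift j (lamG (k + 1)) = lamG (k + 1 + j) := by
  rw [shift, MulAut.conj_apply, lamG_succ k, show k + 1 + j = k + j + 1 by omega,
    lamG_succ (k + j)]
  push_cast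
  group

theorem shift_sigG (j k : ℕ) : shift j (sigG (k + 1)) = sigG (k + 1 + j) := by
  rw [shift, MulAut.conj_apply, sigG_succ k, show k + 1 + j = k + j + 1 by omega,
    sigG_succ (k + j)]
  push_cast
  group

theorem sigG_mul_self : ∀ m, sigG m * sigG m = 1
  | 0 => sigG_zero_mul_self
  | k + 1 => by simpa [shift_sigG, Nat.add_comm _ k] using congrArg (shift k) sigG_one_mul_self

theorem sigG_braid : ∀ m, sigG m * sigG (m + 1) * sigG m = sigG (m + 1) * sigG m * sigG (m + 1)
  | 0 => sigG_braid_zero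
  | k + 1 => by simpa [shift_sigG, Nat.add_comm _ k] using congrArg (shift k) sigG_braid_one

theorem sigG_mul_lamG_self : ∀ m, sigG m * lamG m = lamG (m + 1) * sigG m * sigG (m + 1)
  | 0 => sigG_zero_mul_lamG_zero
  | k + 1 => by
    simpa [shift_sigG, shift_lamG, Nat.add_comm _ k] using congrArg (shift k) sigG_one_mul_lamG_one

theorem sigG_mul_lamG_succ (m : ℕ) : sigG m * lamG (m + 1) = lamG m * sigG (m + 1) * sigG m := by
  have hm := sigG_mul_self m
  have hm' := sigG_mul_self (m + 1)
  calc sigG m * lamG (m + 1)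
      = sigG m * (lamG (m + 1) * sigG m * sigG (m + 1)) * sigG (m + 1) * sigG m := by
        simp only [mul_assoc, hm', mul_one, hm]
    _ = lamG m * sigG (m + 1) * sigG m := by
        rw [← sigG_mul_lamG_self]; simp only [← mul_assoc, hm, one_mul]

theorem semiconjBy_lamG_one {x : ℕ → FinVhat}
    (hx : ∀ j k, shift j (x (k + 1)) = x (k + 1 + j))
    (h2 : SemiconjBy (lamG 1) (x 3) (x 2)) (h3 : SemiconjBy (lamG 1) (x 4) (x 3)) (k : ℕ) :
    SemiconjBy (lamG 1) (x (k + 3)) (x (k + 2)) := by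
  suffices ∀ k, SemiconjBy (lamG 1) (x (k + 3)) (x (k + 2)) ∧
      SemiconjBy (lamG 1) (x (k + 4)) (x (k + 3)) from (this k).1
  intro k
  induction k with
  | zero => exact ⟨h2, h3⟩
  | succ k ih =>
    obtain ⟨hk, hk'⟩ := ih
    refine ⟨hk', ?_⟩
    have h2k : SemiconjBy (lamG 2) (x (k + 4)) (x (k + 3)) := by
      simpa [shift_lamG, hx] using hk.map (shift 1)
    have h3k : SemiconjBy (lamG 3) (x (k + 5)) (x (k + 4)) := by
      simpa [shift_lamG, hx] using hk.map (shift 2)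
    have h := hk'.mul_left h3k
    -- `λ_1 = λ_2⁻¹ (λ_1 λ_3)`, and conjugation by `λ_2`, `λ_1`, `λ_3` is known at lower indices
    rw [semiconjBy_lamG_one_lamG_two.eq] at h
    simpa using h2k.inv_symm_left.mul_left h

theorem semiconjBy_lamG_of_lt {x : ℕ → FinVhat}
    (hx : ∀ j k, shift j (x (k + 1)) = x (k + 1 + j))
    (h2 : SemiconjBy (lamG 1) (x 3) (x 2)) (h3 : SemiconjBy (lamG 1) (x 4) (x 3)) {m q : ℕ}
    (h : m < q) : SemiconjBy (lamG m) (x (q + 1)) (x q) := by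
  cases m with
  | zero =>
    obtain ⟨k, rfl⟩ : ∃ k, q = k + 1 := ⟨q - 1, by omega⟩
    rw [SemiconjBy, ← hx 1 k, shift, MulAut.conj_apply]
    group
  | succ m =>
    obtain ⟨k, rfl⟩ : ∃ k, q = k + 2 + m := ⟨q - m - 2, by omega⟩
    rw [show k + 2 + m + 1 = k + 3 + m by omega]
    simpa [shift_lamG, hx, Nat.add_comm 1 m] using (semiconjBy_lamG_one hx h2 h3 k).map (shift m)

theorem commute_sigG_of_add_two_le {x : ℕ → FinVhat}
    (hx : ∀ j k, shift j (x (k + 1)) = x (k + 1 + j))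
    (hconj : ∀ {m q : ℕ}, m < q → SemiconjBy (lamG m) (x (q + 1)) (x q))
    (h02 : Commute (sigG 0) (x 2)) (h03 : Commute (sigG 0) (x 3))
    (h13 : Commute (sigG 1) (x 3)) (h14 : Commute (sigG 1) (x 4)) {q m : ℕ} (h : q + 2 ≤ m) :
    Commute (sigG q) (x m) := by
  have h0 : ∀ n, Commute (sigG 0) (x (n + 3)) :=
    commute_of_semiconjBy_succ commute_sigG_zero_lamG_two h03 fun _ ↦ hconj (by omega)
  have h1 : ∀ n, Commute (sigG 1) (x (n + 3)) := fun
    | 0 => h13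
    | n + 1 => commute_of_semiconjBy_succ (x := fun k ↦ x (k + 4))
        commute_sigG_one_lamG_three h14 (fun _ ↦ hconj (by omega)) n
  cases q with
  | zero =>
    obtain ⟨n, rfl⟩ : ∃ n, m = n + 2 := ⟨m - 2, by omega⟩
    cases n with
    | zero => exact h02
    | succ n => exact h0 n
  | succ q =>
    obtain ⟨n, rfl⟩ : ∃ n, m = n + 3 + q := ⟨m - q - 3, by omega⟩
    simpa [shift_sigG, hx, Nat.add_comm 1 q] using (h1 n).map (shift q)

theorem semiconjBy_lamG_lamG_of_lt {m q : ℕ} (h : m < q) :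
    SemiconjBy (lamG m) (lamG (q + 1)) (lamG q) :=
  semiconjBy_lamG_of_lt shift_lamG semiconjBy_lamG_one_lamG_two semiconjBy_lamG_one_lamG_three h

theorem semiconjBy_lamG_sigG_of_lt {m q : ℕ} (h : m < q) :
    SemiconjBy (lamG m) (sigG (q + 1)) (sigG q) :=
  semiconjBy_lamG_of_lt shift_sigG semiconjBy_lamG_one_sigG_two semiconjBy_lamG_one_sigG_three h

theorem sigG_commute {m n : ℕ} (h : m + 2 ≤ n) : Commute (sigG m) (sigG n) :=
  commute_sigG_of_add_two_le shift_sigG semiconjBy_lamG_sigG_of_lt commute_sigG_zero_sigG_two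
    commute_sigG_zero_sigG_three commute_sigG_one_sigG_three commute_sigG_one_sigG_four h

theorem sigG_commute_lamG {q m : ℕ} (h : q + 1 < m) : Commute (sigG q) (lamG m) :=
  commute_sigG_of_add_two_le shift_lamG semiconjBy_lamG_lamG_of_lt commute_sigG_zero_lamG_two
    commute_sigG_zero_lamG_three commute_sigG_one_lamG_three commute_sigG_one_lamG_four h

theorem lift_vhatRels_eq_one : ∀ r ∈ vhatRels, FreeGroup.lift (Sum.elim lamG sigG) r = 1 := by
  rintro r (⟨m, q, h, rfl⟩ | ⟨m, rfl⟩ | ⟨m, n, h, rfl⟩ | ⟨m, rfl⟩ | ⟨m, q, h, rfl⟩ | ⟨m, rfl⟩ |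
    ⟨m, rfl⟩ | ⟨m, q, h, rfl⟩) <;>
    simp only [lamF, sigF, map_mul, map_inv, FreeGroup.lift_apply_of, Sum.elim_inl, Sum.elim_inr,
      mul_inv_eq_one]
  · exact (semiconjBy_lamG_lamG_of_lt h).eq.symm
  · exact sigG_mul_self m
  · exact h.elim (fun h ↦ (sigG_commute h).eq) (fun h ↦ (sigG_commute h).eq.symm)
  · exact sigG_braid m
  · exact (semiconjBy_lamG_sigG_of_lt h).eq.symm
  · exact sigG_mul_lamG_self m
  · exact sigG_mul_lamG_succ m
  · exact (sigG_commute_lamG h).eq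

def ofVhat : Vhat →* FinVhat := PresentedGroup.toGroup lift_vhatRels_eq_one

theorem ofVhat_lamV (i : ℕ) : ofVhat (lamV i) = lamG i := PresentedGroup.toGroup.of _
theorem ofVhat_sigV (i : ℕ) : ofVhat (sigV i) = sigG i := PresentedGroup.toGroup.of _

end FinVhat

def toVhat : FinVhat →* Vhat := PresentedGroup.toGroup wordToVhat_finVhatRels

theorem toVhat_lamG (n : ℕ) : toVhat (lamG n) = lamV n := wordToVhat_LW n
theorem toVhat_sigG (n : ℕ) : toVhat (sigG n) = sigV n := wordToVhat_SW n

theorem ofVhat_comp_toVhat : ofVhat.comp toVhat = MonoidHom.id FinVhat := by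
  ext i
  fin_cases i
  · exact (congrArg ofVhat (toVhat_lamG 0)).trans (ofVhat_lamV 0)
  · exact (congrArg ofVhat (toVhat_sigG 0)).trans (ofVhat_sigV 0)
  · exact (congrArg ofVhat (toVhat_sigG 1)).trans (ofVhat_sigV 1)

theorem toVhat_comp_ofVhat : toVhat.comp ofVhat = MonoidHom.id Vhat := by
  ext (i | i)
  · exact (congrArg toVhat (ofVhat_lamV i)).trans (toVhat_lamG i)
  · exact (congrArg toVhat (ofVhat_sigV i)).trans (toVhat_sigG i)

/-- Lemma: `V̂` is isomorphic to the finitely presented group above, via an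
isomorphism sending the generators `λ_0, σ_0, σ_1` of the finite presentation
to the elements `λ_0, σ_0, σ_1` of `V̂`. -/
theorem Vhat_finitely_presented :
    ∃ e : PresentedGroup finVhatRels ≃* Vhat,
      e (PresentedGroup.of 0) = lamV 0 ∧
      e (PresentedGroup.of 1) = sigV 0 ∧
      e (PresentedGroup.of 2) = sigV 1 :=
  ⟨MonoidHom.toMulEquiv toVhat ofVhat ofVhat_comp_toVhat toVhat_comp_ofVhat,
    toVhat_lamG 0, toVhat_sigG 0, toVhat_sigG 1⟩

end BrinStmt0
end

section
/- Let g be an element of BV̂ of the form g = (Fβ)(Gγ)^{-1}, where for some integer n ≥ 0: F = λ_{i_1}λ_{i_2}⋯λ_{i_n} and G = λ_{j_1}λ_{j_2}⋯λ_{j_n} for sequences of natural numbers satisfying i_k < k and j_k < k for all 1 ≤ k ≤ n, and β and γ lie in the subgroup of BV̂ generated by σ_0, σ_1, …, σ_{n-1}. Then g lies in the subgroup of BV̂ generated by the set {v_n, π_n, π̄_n : n ∈ ℕ}. -/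
namespace BrinStmt2

/-- The free-group generators for the infinite presentation of `BVhat`:
`Sum.inl i` is the generator `λ_i` and `Sum.inr i` is the generator `σ_i`. -/
def lamF (i : ℕ) : FreeGroup (ℕ ⊕ ℕ) := FreeGroup.of (Sum.inl i)
def sigF (i : ℕ) : FreeGroup (ℕ ⊕ ℕ) := FreeGroup.of (Sum.inr i)

/-- The relators of the infinite presentation of the group `BV̂`. -/
def bvhatRels : Set (FreeGroup (ℕ ⊕ ℕ)) :=
  { r | (∃ m q : ℕ, m < q ∧ r = lamF q * lamF m * (lamF m * lamF (q+1))⁻¹) ∨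
        (∃ m n : ℕ, (m + 2 ≤ n ∨ n + 2 ≤ m) ∧
            r = sigF m * sigF n * (sigF n * sigF m)⁻¹) ∨
        (∃ m : ℕ, r = sigF m * sigF (m+1) * sigF m *
            (sigF (m+1) * sigF m * sigF (m+1))⁻¹) ∨
        (∃ (m q : ℕ) (e : ℤ), (e = 1 ∨ e = -1) ∧ m < q ∧
            r = (sigF q) ^ e * lamF m * (lamF m * (sigF (q+1)) ^ e)⁻¹) ∨
        (∃ (m : ℕ) (e : ℤ), (e = 1 ∨ e = -1) ∧
            r = (sigF m) ^ e * lamF m *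
              (lamF (m+1) * (sigF m) ^ e * (sigF (m+1)) ^ e)⁻¹) ∨
        (∃ (m : ℕ) (e : ℤ), (e = 1 ∨ e = -1) ∧
            r = (sigF m) ^ e * lamF (m+1) *
              (lamF m * (sigF (m+1)) ^ e * (sigF m) ^ e)⁻¹) ∨
        (∃ (m q : ℕ) (e : ℤ), (e = 1 ∨ e = -1) ∧ q + 1 < m ∧
            r = (sigF q) ^ e * lamF m * (lamF m * (sigF q) ^ e)⁻¹) }

/-- The group `BV̂`, given by its infinite presentation. -/
abbrev BVhat := PresentedGroup bvhatRels

/-- The generator `λ_i` of `BV̂`. -/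
def lamB (i : ℕ) : BVhat := PresentedGroup.of (Sum.inl i)
/-- The generator `σ_i` of `BV̂`. -/
def sigB (i : ℕ) : BVhat := PresentedGroup.of (Sum.inr i)

/-- The element `v_n = λ_0^{n+1} λ_1 λ_0^{-n-2}` of `BV̂`. -/
def vB (n : ℕ) : BVhat := lamB 0 ^ (n+1) * lamB 1 * lamB 0 ^ (-((n : ℤ) + 2))
/-- The element `π_n = λ_0^{n+2} σ_1 λ_0^{-n-2}` of `BV̂`. -/
def piB (n : ℕ) : BVhat := lamB 0 ^ (n+2) * sigB 1 * lamB 0 ^ (-((n : ℤ) + 2))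
/-- The element `π̄_n = λ_0^{n+1} σ_0 λ_0^{-n-1}` of `BV̂`. -/
def opiB (n : ℕ) : BVhat := lamB 0 ^ (n+1) * sigB 0 * lamB 0 ^ (-((n : ℤ) + 1))

/-! ### Auxiliary lemmas -/

private lemma relB {r : FreeGroup (ℕ ⊕ ℕ)} (hr : r ∈ bvhatRels) :
    PresentedGroup.mk bvhatRels r = 1 :=
  (QuotientGroup.eq_one_iff r).mpr (Subgroup.subset_normalClosure hr)

/-- The relation `λ_q λ_m = λ_m λ_{q+1}` for `m < q`. -/
private lemma lam_comm {m q : ℕ} (h : m < q) :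
    lamB q * lamB m = lamB m * lamB (q+1) := by
  have h1 := relB (Or.inl ⟨m, q, h, rfl⟩)
  simp only [map_mul, map_inv] at h1
  exact mul_inv_eq_one.mp h1

/-- The relation `σ_q λ_m = λ_m σ_{q+1}` for `m < q`. -/
private lemma sig_lam {m q : ℕ} (h : m < q) :
    sigB q * lamB m = lamB m * sigB (q+1) := by
  have h1 := relB (Or.inr (Or.inr (Or.inr (Or.inl ⟨m, q, 1, Or.inl rfl, h, rfl⟩))))
  simp only [map_mul, map_inv, map_zpow, zpow_one] at h1
  exact mul_inv_eq_one.mp h1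

/-- `λ_q · λ_0^m = λ_0^m · λ_{q+m}` for `q ≥ 1`. -/
private lemma lam_pow_comm (a m : ℕ) :
    lamB (a+1) * lamB 0 ^ m = lamB 0 ^ m * lamB (a+1+m) := by
  induction m with
  | zero => simp
  | succ m ih =>
    calc lamB (a+1) * lamB 0 ^ (m+1)
        = (lamB (a+1) * lamB 0 ^ m) * lamB 0 := by rw [pow_succ, mul_assoc]
      _ = lamB 0 ^ m * (lamB (a+1+m) * lamB 0) := by rw [ih, mul_assoc]
      _ = lamB 0 ^ m * (lamB 0 * lamB (a+1+m+1)) := by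
            rw [lam_comm (show (0:ℕ) < a+1+m by omega)]
      _ = (lamB 0 ^ m * lamB 0) * lamB (a+1+(m+1)) := by
            rw [← mul_assoc, show a+1+m+1 = a+1+(m+1) by omega]
      _ = lamB 0 ^ (m+1) * lamB (a+1+(m+1)) := by rw [← pow_succ]

/-- `σ_q · λ_0^m = λ_0^m · σ_{q+m}` for `q ≥ 1`. -/
private lemma sig_pow_comm (a m : ℕ) :
    sigB (a+1) * lamB 0 ^ m = lamB 0 ^ m * sigB (a+1+m) := by
  induction m with
  | zero => simp
  | succ m ih =>
    calc sigB (a+1) * lamB 0 ^ (m+1)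
        = (sigB (a+1) * lamB 0 ^ m) * lamB 0 := by rw [pow_succ, mul_assoc]
      _ = lamB 0 ^ m * (sigB (a+1+m) * lamB 0) := by rw [ih, mul_assoc]
      _ = lamB 0 ^ m * (lamB 0 * sigB (a+1+m+1)) := by
            rw [sig_lam (show (0:ℕ) < a+1+m by omega)]
      _ = (lamB 0 ^ m * lamB 0) * sigB (a+1+(m+1)) := by
            rw [← mul_assoc, show a+1+m+1 = a+1+(m+1) by omega]
      _ = lamB 0 ^ (m+1) * sigB (a+1+(m+1)) := by rw [← pow_succ]

/-- `λ_{a+1} = λ_0^{-a} λ_1 λ_0^{a}`. -/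
private lemma lam_conj (a : ℕ) :
    lamB (a+1) = (lamB 0 ^ a)⁻¹ * lamB 1 * lamB 0 ^ a := by
  have h : lamB 1 * lamB 0 ^ a = lamB 0 ^ a * lamB (a+1) := by
    have := lam_pow_comm 0 a
    rw [show (0:ℕ)+1+a = a+1 by omega] at this
    simpa using this
  rw [mul_assoc, h, inv_mul_cancel_left]

/-- `σ_{a+1} = λ_0^{-a} σ_1 λ_0^{a}`. -/
private lemma sig_conj (a : ℕ) :
    sigB (a+1) = (lamB 0 ^ a)⁻¹ * sigB 1 * lamB 0 ^ a := by
  have h : sigB 1 * lamB 0 ^ a = lamB 0 ^ a * sigB (a+1) := by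
    have := sig_pow_comm 0 a
    rw [show (0:ℕ)+1+a = a+1 by omega] at this
    simpa using this
  rw [mul_assoc, h, inv_mul_cancel_left]

private lemma key_lam (a b : ℕ) :
    lamB 0 ^ (a+b+1) * lamB (a+1) = vB b * lamB 0 ^ (a+b+2) := by
  rw [lam_conj a, vB]
  group

private lemma key_sig (a b : ℕ) :
    lamB 0 ^ (a+b+2) * sigB (a+1) = piB b * lamB 0 ^ (a+b+2) := by
  rw [sig_conj a, piB]
  group

private lemma key_sig0 (a : ℕ) :
    lamB 0 ^ (a+1) * sigB 0 = opiB a * lamB 0 ^ (a+1) := by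
  rw [opiB]
  group

/-- The target subgroup. -/
private def H : Subgroup BVhat :=
  Subgroup.closure {x : BVhat | ∃ m, x = vB m ∨ x = piB m ∨ x = opiB m}

private lemma vB_mem (m : ℕ) : vB m ∈ H :=
  Subgroup.subset_closure ⟨m, Or.inl rfl⟩
private lemma piB_mem (m : ℕ) : piB m ∈ H :=
  Subgroup.subset_closure ⟨m, Or.inr (Or.inl rfl)⟩
private lemma opiB_mem (m : ℕ) : opiB m ∈ H :=
  Subgroup.subset_closure ⟨m, Or.inr (Or.inr rfl)⟩

/-- Decomposition of an admissible product of `λ`'s. -/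
private lemma lam_prod_decomp : ∀ (n : ℕ) (i : Fin n → ℕ), (∀ k, i k ≤ k.val) →
    ∃ h ∈ H, ((List.ofFn i).map lamB).prod = h * lamB 0 ^ n := by
  intro n
  induction n with
  | zero => intro i _; exact ⟨1, one_mem _, by simp⟩
  | succ n ih =>
    intro i hi
    obtain ⟨h, hh, hprod⟩ := ih (fun k => i k.castSucc) (fun k => hi k.castSucc)
    rw [List.ofFn_succ', List.concat_eq_append, List.map_append, List.prod_append]
    simp only [List.map_cons, List.map_nil, List.prod_cons, List.prod_nil, mul_one]
    rw [hprod]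
    rcases Nat.eq_zero_or_pos (i (Fin.last n)) with h0 | hpos
    · exact ⟨h, hh, by rw [h0, mul_assoc, ← pow_succ]⟩
    · obtain ⟨a, ha⟩ : ∃ a, i (Fin.last n) = a + 1 := ⟨i (Fin.last n) - 1, by omega⟩
      have hile : a + 1 ≤ n := by have := hi (Fin.last n); omega
      obtain ⟨b, hb⟩ : ∃ b, n = a + b + 1 := ⟨n - a - 1, by omega⟩
      have e1 : lamB 0 ^ n * lamB (a+1) = vB b * lamB 0 ^ (n+1) := by
        rw [hb, key_lam a b, show a+b+1+1 = a+b+2 by omega]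
      exact ⟨h * vB b, mul_mem hh (vB_mem b),
        by rw [ha, mul_assoc, e1, ← mul_assoc]⟩

/-- Conjugating an element of `⟨σ_0, …, σ_{n-1}⟩` by `λ_0^n` lands in `H`. -/
private lemma conj_mem (n : ℕ) {δ : BVhat}
    (hδ : δ ∈ Subgroup.closure {x : BVhat | ∃ m, m < n ∧ x = sigB m}) :
    lamB 0 ^ n * δ * (lamB 0 ^ n)⁻¹ ∈ H := by
  induction hδ using Subgroup.closure_induction with
  | mem x hx =>
    obtain ⟨m, hm, rfl⟩ := hx
    rcases Nat.eq_zero_or_pos m with rfl | hpos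
    · obtain ⟨c, rfl⟩ : ∃ c, n = c + 1 := ⟨n - 1, by omega⟩
      rw [key_sig0 c, mul_assoc, mul_inv_cancel, mul_one]
      exact opiB_mem c
    · obtain ⟨a, rfl⟩ : ∃ a, m = a + 1 := ⟨m - 1, by omega⟩
      obtain ⟨b, rfl⟩ : ∃ b, n = a + b + 2 := ⟨n - a - 2, by omega⟩
      rw [key_sig a b, mul_assoc, mul_inv_cancel, mul_one]
      exact piB_mem b
  | one => simpa using one_mem H
  | mul x y hx hy px py =>
    have hxy : lamB 0 ^ n * (x * y) * (lamB 0 ^ n)⁻¹ =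
        (lamB 0 ^ n * x * (lamB 0 ^ n)⁻¹) * (lamB 0 ^ n * y * (lamB 0 ^ n)⁻¹) := by
      group
    rw [hxy]
    exact mul_mem px py
  | inv x hx px =>
    have hxi : lamB 0 ^ n * x⁻¹ * (lamB 0 ^ n)⁻¹ =
        (lamB 0 ^ n * x * (lamB 0 ^ n)⁻¹)⁻¹ := by group
    rw [hxi]
    exact inv_mem px

/-- Lemma: if `g = (Fβ)(Gγ)⁻¹` in `BV̂` where `F = λ_{i_1}⋯λ_{i_n}` and
`G = λ_{j_1}⋯λ_{j_n}` with `i_k < k` and `j_k < k` for `1 ≤ k ≤ n` (here the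
`k`-th index, `1 ≤ k ≤ n`, is given by evaluating at `k-1 : Fin n`), and `β, γ`
lie in the subgroup generated by `σ_0, …, σ_{n-1}`, then `g` lies in the
subgroup of `BV̂` generated by `{v_n, π_n, π̄_n : n ∈ ℕ}`. -/
theorem mem_closure_of_form (n : ℕ) (i j : Fin n → ℕ)
    (hi : ∀ k : Fin n, i k < k.val + 1) (hj : ∀ k : Fin n, j k < k.val + 1)
    (β γ : BVhat)
    (hβ : β ∈ Subgroup.closure {x : BVhat | ∃ m, m < n ∧ x = sigB m})
    (hγ : γ ∈ Subgroup.closure {x : BVhat | ∃ m, m < n ∧ x = sigB m}) :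
    ((List.ofFn i).map lamB).prod * β * (((List.ofFn j).map lamB).prod * γ)⁻¹ ∈
      Subgroup.closure {x : BVhat | ∃ m, x = vB m ∨ x = piB m ∨ x = opiB m} := by
  obtain ⟨h1, hh1, hp1⟩ := lam_prod_decomp n i (fun k => Nat.lt_succ_iff.mp (hi k))
  obtain ⟨h2, hh2, hp2⟩ := lam_prod_decomp n j (fun k => Nat.lt_succ_iff.mp (hj k))
  rw [hp1, hp2]
  have hδ : β * γ⁻¹ ∈ Subgroup.closure {x : BVhat | ∃ m, m < n ∧ x = sigB m} :=
    mul_mem hβ (inv_mem hγ)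
  have hc : lamB 0 ^ n * (β * γ⁻¹) * (lamB 0 ^ n)⁻¹ ∈ H := conj_mem n hδ
  have heq : h1 * lamB 0 ^ n * β * (h2 * lamB 0 ^ n * γ)⁻¹ =
      h1 * (lamB 0 ^ n * (β * γ⁻¹) * (lamB 0 ^ n)⁻¹) * h2⁻¹ := by group
  rw [heq]
  exact mul_mem (mul_mem hh1 hc) (inv_mem hh2)

end BrinStmt2
end

section
/- In BV̂, the elements v_n, π_n, π̄_n satisfy the following relations (for ε = ±1): (R1) v_q v_m = v_m v_{q+1} for m < q; (R2) π_q v_m = v_m π_{q+1} for m < q; (R3) π_m^ε v_m = v_{m+1} π_m^ε π_{m+1}^ε for m ≥ 0; (R4) π_q v_m = v_m π_q for m > q+1; (R5) π̄_q v_m = v_m π̄_{q+1} for m < q; (R6) π̄_m^ε v_m = π_m^ε π̄_{m+1}^ε for m ≥ 0; (R7) π_q π_m = π_m π_q for |m−q| ≥ 2; (R8) π_m π_{m+1} π_m = π_{m+1} π_m π_{m+1} for m ≥ 0; (R9) π̄_q π_m = π_m π̄_q for q ≥ m+2; (R10) π_m π̄_{m+1} π_m = π̄_{m+1} π_m π̄_{m+1}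 for m ≥ 0. -/
namespace BrinStmt3

/-- The free-group generators for the infinite presentation of `BVhat`:
`Sum.inl i` is the generator `λ_i` and `Sum.inr i` is the generator `σ_i`. -/
def lamF (i : ℕ) : FreeGroup (ℕ ⊕ ℕ) := FreeGroup.of (Sum.inl i)
def sigF (i : ℕ) : FreeGroup (ℕ ⊕ ℕ) := FreeGroup.of (Sum.inr i)

/-- The relators of the infinite presentation of the group `BV̂`. -/
def bvhatRels : Set (FreeGroup (ℕ ⊕ ℕ)) :=
  { r | (∃ m q : ℕ, m < q ∧ r = lamF q * lamF m * (lamF m * lamF (q+1))⁻¹) ∨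
        (∃ m n : ℕ, (m + 2 ≤ n ∨ n + 2 ≤ m) ∧
            r = sigF m * sigF n * (sigF n * sigF m)⁻¹) ∨
        (∃ m : ℕ, r = sigF m * sigF (m+1) * sigF m *
            (sigF (m+1) * sigF m * sigF (m+1))⁻¹) ∨
        (∃ (m q : ℕ) (e : ℤ), (e = 1 ∨ e = -1) ∧ m < q ∧
            r = (sigF q) ^ e * lamF m * (lamF m * (sigF (q+1)) ^ e)⁻¹) ∨
        (∃ (m : ℕ) (e : ℤ), (e = 1 ∨ e = -1) ∧
            r = (sigF m) ^ e * lamF m *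
              (lamF (m+1) * (sigF m) ^ e * (sigF (m+1)) ^ e)⁻¹) ∨
        (∃ (m : ℕ) (e : ℤ), (e = 1 ∨ e = -1) ∧
            r = (sigF m) ^ e * lamF (m+1) *
              (lamF m * (sigF (m+1)) ^ e * (sigF m) ^ e)⁻¹) ∨
        (∃ (m q : ℕ) (e : ℤ), (e = 1 ∨ e = -1) ∧ q + 1 < m ∧
            r = (sigF q) ^ e * lamF m * (lamF m * (sigF q) ^ e)⁻¹) }

/-- The group `BV̂`, given by its infinite presentation. -/
abbrev BVhat := PresentedGroup bvhatRels

/-- The generator `λ_i` of `BV̂`. -/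
def lamB (i : ℕ) : BVhat := PresentedGroup.of (Sum.inl i)
/-- The generator `σ_i` of `BV̂`. -/
def sigB (i : ℕ) : BVhat := PresentedGroup.of (Sum.inr i)

/-- The element `v_n = λ_0^{n+1} λ_1 λ_0^{-n-2}` of `BV̂`. -/
def vB (n : ℕ) : BVhat := lamB 0 ^ (n+1) * lamB 1 * lamB 0 ^ (-((n : ℤ) + 2))
/-- The element `π_n = λ_0^{n+2} σ_1 λ_0^{-n-2}` of `BV̂`. -/
def piB (n : ℕ) : BVhat := lamB 0 ^ (n+2) * sigB 1 * lamB 0 ^ (-((n : ℤ) + 2))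
/-- The element `π̄_n = λ_0^{n+1} σ_0 λ_0^{-n-1}` of `BV̂`. -/
def opiB (n : ℕ) : BVhat := lamB 0 ^ (n+1) * sigB 0 * lamB 0 ^ (-((n : ℤ) + 1))

/-! Conjugation by `λ_0` raises the index of every generator `λ_q`, `σ_q` with `q ≥ 1` by one, so
`λ_{j+1}` and `σ_{j+1}` are the conjugates of `λ_1` and `σ_1` by `λ_0^j`. The elements `v_n`, `π_n`,
`π̄_n` are conjugates of `λ_1 λ_0⁻¹`, `σ_1`, `σ_0` by powers of `λ_0`, and once the generators of
higher index are written as such conjugates, each of the relations (R1)–(R10) becomes the conjugate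
by a power of `λ_0` of a single defining relation of `BV̂`. -/

theorem eq_inv_pow_mul_mul_pow_of_succ {G : Type*} [Group G] {g : G} {x : ℕ → G}
    (h : ∀ q, x (q + 1) = g⁻¹ * x q * g) (j : ℕ) : x j = (g ^ j)⁻¹ * x 0 * g ^ j := by
  induction j with
  | zero => simp
  | succ j ih => rw [h, ih]; group

theorem lamB_mul_lamB_of_lt {m q : ℕ} (h : m < q) : lamB q * lamB m = lamB m * lamB (q + 1) :=
  PresentedGroup.mk_eq_mk_of_mul_inv_mem (Or.inl ⟨m, q, h, rfl⟩)

theorem sigB_mul_sigB_comm {m n : ℕ} (h : m + 2 ≤ n ∨ n + 2 ≤ m) :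
    sigB m * sigB n = sigB n * sigB m :=
  PresentedGroup.mk_eq_mk_of_mul_inv_mem (Or.inr <| Or.inl ⟨m, n, h, rfl⟩)

theorem sigB_braid (m : ℕ) :
    sigB m * sigB (m + 1) * sigB m = sigB (m + 1) * sigB m * sigB (m + 1) :=
  PresentedGroup.mk_eq_mk_of_mul_inv_mem (Or.inr <| Or.inr <| Or.inl ⟨m, rfl⟩)

theorem sigB_mul_lamB_of_lt {m q : ℕ} (h : m < q) : sigB q * lamB m = lamB m * sigB (q + 1) := by
  rw [← zpow_one (sigB q), ← zpow_one (sigB (q + 1))]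
  exact PresentedGroup.mk_eq_mk_of_mul_inv_mem
    (Or.inr <| Or.inr <| Or.inr <| Or.inl ⟨m, q, 1, Or.inl rfl, h, rfl⟩)

theorem sigB_zpow_mul_lamB_succ {e : ℤ} (he : e = 1 ∨ e = -1) (m : ℕ) :
    sigB m ^ e * lamB (m + 1) = lamB m * sigB (m + 1) ^ e * sigB m ^ e :=
  PresentedGroup.mk_eq_mk_of_mul_inv_mem
    (Or.inr <| Or.inr <| Or.inr <| Or.inr <| Or.inr <| Or.inl ⟨m, e, he, rfl⟩)

theorem sigB_mul_lamB_of_succ_lt {m q : ℕ} (h : q + 1 < m) : sigB q * lamB m = lamB m * sigB q := by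
  rw [← zpow_one (sigB q)]
  exact PresentedGroup.mk_eq_mk_of_mul_inv_mem
    (Or.inr <| Or.inr <| Or.inr <| Or.inr <| Or.inr <| Or.inr ⟨m, q, 1, Or.inl rfl, h, rfl⟩)

theorem lamB_succ_eq_conj (j : ℕ) : lamB (j + 1) = (lamB 0 ^ j)⁻¹ * lamB 1 * lamB 0 ^ j :=
  eq_inv_pow_mul_mul_pow_of_succ (x := fun q => lamB (q + 1))
    (fun q => by rw [mul_assoc, lamB_mul_lamB_of_lt (by omega : 0 < q + 1), inv_mul_cancel_left]) j

theorem sigB_succ_eq_conj (j : ℕ) : sigB (j + 1) = (lamB 0 ^ j)⁻¹ * sigB 1 * lamB 0 ^ j :=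
  eq_inv_pow_mul_mul_pow_of_succ (x := fun q => sigB (q + 1))
    (fun q => by rw [mul_assoc, sigB_mul_lamB_of_lt (by omega : 0 < q + 1), inv_mul_cancel_left]) j

theorem sigB_zpow_succ_eq_conj (e : ℤ) (j : ℕ) :
    sigB (j + 1) ^ e = (lamB 0 ^ j)⁻¹ * sigB 1 ^ e * lamB 0 ^ j := by
  rw [sigB_succ_eq_conj]
  simpa only [inv_inv] using conj_zpow (a := (lamB 0 ^ j)⁻¹) (b := sigB 1) (i := e)

theorem piB_zpow (n : ℕ) (e : ℤ) :
    piB n ^ e = lamB 0 ^ (n + 2) * sigB 1 ^ e * (lamB 0 ^ (n + 2))⁻¹ := by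
  rw [← conj_zpow, piB]
  group

theorem opiB_zpow (n : ℕ) (e : ℤ) :
    opiB n ^ e = lamB 0 ^ (n + 1) * sigB 0 ^ e * (lamB 0 ^ (n + 1))⁻¹ := by
  rw [← conj_zpow, opiB]
  group

theorem vB_mul_vB_of_lt {m q : ℕ} (h : m < q) : vB q * vB m = vB m * vB (q + 1) := by
  obtain ⟨k, rfl⟩ := Nat.exists_eq_add_of_lt h
  calc vB (m + k + 1) * vB m
      = lamB 0 ^ (m + k + 2) * (lamB 1 * lamB (k + 3)) * (lamB 0 ^ (m + k + 4))⁻¹ := by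
        rw [lamB_succ_eq_conj (k + 2)]; simp only [vB]; group
    _ = lamB 0 ^ (m + k + 2) * (lamB (k + 2) * lamB 1) * (lamB 0 ^ (m + k + 4))⁻¹ := by
        rw [lamB_mul_lamB_of_lt (by omega : 1 < k + 2)]
    _ = vB m * vB (m + k + 1 + 1) := by
        rw [lamB_succ_eq_conj (k + 1)]; simp only [vB]; group

theorem piB_mul_vB_of_lt {m q : ℕ} (h : m < q) : piB q * vB m = vB m * piB (q + 1) := by
  obtain ⟨k, rfl⟩ := Nat.exists_eq_add_of_lt h
  calc piB (m + k + 1) * vB m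
      = lamB 0 ^ (m + k + 3) * (sigB 1 * lamB (k + 3)) * (lamB 0 ^ (m + k + 4))⁻¹ := by
        rw [lamB_succ_eq_conj (k + 2)]; simp only [piB, vB]; group
    _ = lamB 0 ^ (m + k + 3) * (lamB (k + 3) * sigB 1) * (lamB 0 ^ (m + k + 4))⁻¹ := by
        rw [sigB_mul_lamB_of_succ_lt (by omega : 1 + 1 < k + 3)]
    _ = vB m * piB (m + k + 1 + 1) := by
        rw [lamB_succ_eq_conj (k + 2)]; simp only [piB, vB]; group

theorem piB_zpow_mul_vB {e : ℤ} (he : e = 1 ∨ e = -1) (m : ℕ) :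
    piB m ^ e * vB m = vB (m + 1) * piB m ^ e * piB (m + 1) ^ e := by
  calc piB m ^ e * vB m
      = lamB 0 ^ (m + 2) * (sigB 1 ^ e * lamB 2) * (lamB 0 ^ (m + 3))⁻¹ := by
        rw [lamB_succ_eq_conj 1]; simp only [piB_zpow, vB]; group
    _ = lamB 0 ^ (m + 2) * (lamB 1 * sigB 2 ^ e * sigB 1 ^ e) * (lamB 0 ^ (m + 3))⁻¹ := by
        rw [sigB_zpow_mul_lamB_succ he 1]
    _ = vB (m + 1) * piB m ^ e * piB (m + 1) ^ e := by
        rw [sigB_zpow_succ_eq_conj e 1]; simp only [piB_zpow, vB]; group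

theorem piB_mul_vB_of_succ_lt {m q : ℕ} (h : q + 1 < m) : piB q * vB m = vB m * piB q := by
  obtain ⟨k, rfl⟩ : ∃ k, m = q + k + 2 := ⟨m - q - 2, by omega⟩
  calc piB q * vB (q + k + 2)
      = lamB 0 ^ (q + k + 3) * (sigB (k + 2) * lamB 1) * (lamB 0 ^ (q + k + 4))⁻¹ := by
        rw [sigB_succ_eq_conj (k + 1)]; simp only [piB, vB]; group
    _ = lamB 0 ^ (q + k + 3) * (lamB 1 * sigB (k + 3)) * (lamB 0 ^ (q + k + 4))⁻¹ := by
        rw [sigB_mul_lamB_of_lt (by omega : 1 < k + 2)]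
    _ = vB (q + k + 2) * piB q := by
        rw [sigB_succ_eq_conj (k + 2)]; simp only [piB, vB]; group

theorem opiB_mul_vB_of_lt {m q : ℕ} (h : m < q) : opiB q * vB m = vB m * opiB (q + 1) := by
  obtain ⟨k, rfl⟩ := Nat.exists_eq_add_of_lt h
  calc opiB (m + k + 1) * vB m
      = lamB 0 ^ (m + k + 2) * (sigB 0 * lamB (k + 2)) * (lamB 0 ^ (m + k + 3))⁻¹ := by
        rw [lamB_succ_eq_conj (k + 1)]; simp only [opiB, vB]; group
    _ = lamB 0 ^ (m + k + 2) * (lamB (k + 2) * sigB 0) * (lamB 0 ^ (m + k + 3))⁻¹ := by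
        rw [sigB_mul_lamB_of_succ_lt (by omega : 0 + 1 < k + 2)]
    _ = vB m * opiB (m + k + 1 + 1) := by
        rw [lamB_succ_eq_conj (k + 1)]; simp only [opiB, vB]; group

theorem opiB_zpow_mul_vB {e : ℤ} (he : e = 1 ∨ e = -1) (m : ℕ) :
    opiB m ^ e * vB m = piB m ^ e * opiB (m + 1) ^ e := by
  calc opiB m ^ e * vB m
      = lamB 0 ^ (m + 1) * (sigB 0 ^ e * lamB 1) * (lamB 0 ^ (m + 2))⁻¹ := by
        simp only [opiB_zpow, vB]; group
    _ = lamB 0 ^ (m + 1) * (lamB 0 * sigB 1 ^ e * sigB 0 ^ e) * (lamB 0 ^ (m + 2))⁻¹ := by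
        rw [sigB_zpow_mul_lamB_succ he 0]
    _ = piB m ^ e * opiB (m + 1) ^ e := by
        simp only [piB_zpow, opiB_zpow]; group

theorem piB_mul_piB_of_add_two_le {m q : ℕ} (h : m + 2 ≤ q) : piB q * piB m = piB m * piB q := by
  obtain ⟨k, rfl⟩ : ∃ k, q = m + k + 2 := ⟨q - m - 2, by omega⟩
  calc piB (m + k + 2) * piB m
      = lamB 0 ^ (m + k + 4) * (sigB 1 * sigB (k + 3)) * (lamB 0 ^ (m + k + 4))⁻¹ := by
        rw [sigB_succ_eq_conj (k + 2)]; simp only [piB]; group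
    _ = lamB 0 ^ (m + k + 4) * (sigB (k + 3) * sigB 1) * (lamB 0 ^ (m + k + 4))⁻¹ := by
        rw [sigB_mul_sigB_comm (Or.inl (by omega : 1 + 2 ≤ k + 3))]
    _ = piB m * piB (m + k + 2) := by
        rw [sigB_succ_eq_conj (k + 2)]; simp only [piB]; group

theorem piB_braid (m : ℕ) :
    piB m * piB (m + 1) * piB m = piB (m + 1) * piB m * piB (m + 1) := by
  calc piB m * piB (m + 1) * piB m
      = lamB 0 ^ (m + 3) * (sigB 2 * sigB 1 * sigB 2) * (lamB 0 ^ (m + 3))⁻¹ := by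
        rw [sigB_succ_eq_conj 1]; simp only [piB]; group
    _ = lamB 0 ^ (m + 3) * (sigB 1 * sigB 2 * sigB 1) * (lamB 0 ^ (m + 3))⁻¹ := by
        rw [sigB_braid 1]
    _ = piB (m + 1) * piB m * piB (m + 1) := by
        rw [sigB_succ_eq_conj 1]; simp only [piB]; group

theorem opiB_mul_piB_of_add_two_le {m q : ℕ} (h : m + 2 ≤ q) :
    opiB q * piB m = piB m * opiB q := by
  obtain ⟨k, rfl⟩ : ∃ k, q = m + k + 2 := ⟨q - m - 2, by omega⟩
  calc opiB (m + k + 2) * piB m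
      = lamB 0 ^ (m + k + 3) * (sigB 0 * sigB (k + 2)) * (lamB 0 ^ (m + k + 3))⁻¹ := by
        rw [sigB_succ_eq_conj (k + 1)]; simp only [opiB, piB]; group
    _ = lamB 0 ^ (m + k + 3) * (sigB (k + 2) * sigB 0) * (lamB 0 ^ (m + k + 3))⁻¹ := by
        rw [sigB_mul_sigB_comm (Or.inl (by omega : 0 + 2 ≤ k + 2))]
    _ = piB m * opiB (m + k + 2) := by
        rw [sigB_succ_eq_conj (k + 1)]; simp only [opiB, piB]; group

theorem piB_opiB_braid (m : ℕ) :
    piB m * opiB (m + 1) * piB m = opiB (m + 1) * piB m * opiB (m + 1) := by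
  calc piB m * opiB (m + 1) * piB m
      = lamB 0 ^ (m + 2) * (sigB 1 * sigB 0 * sigB 1) * (lamB 0 ^ (m + 2))⁻¹ := by
        simp only [piB, opiB]; group
    _ = lamB 0 ^ (m + 2) * (sigB 0 * sigB 1 * sigB 0) * (lamB 0 ^ (m + 2))⁻¹ := by
        rw [sigB_braid 0]
    _ = opiB (m + 1) * piB m * opiB (m + 1) := by
        simp only [piB, opiB]; group

/-- Lemma (relations in `BV̂`): the elements `v_n`, `π_n`, `π̄_n` of `BV̂`
satisfy relations (R1)–(R10). -/
theorem relations_in_BVhat :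
    (∀ m q : ℕ, m < q → vB q * vB m = vB m * vB (q+1)) ∧
    (∀ m q : ℕ, m < q → piB q * vB m = vB m * piB (q+1)) ∧
    (∀ (m : ℕ) (e : ℤ), (e = 1 ∨ e = -1) →
      (piB m) ^ e * vB m = vB (m+1) * (piB m) ^ e * (piB (m+1)) ^ e) ∧
    (∀ m q : ℕ, q + 1 < m → piB q * vB m = vB m * piB q) ∧
    (∀ m q : ℕ, m < q → opiB q * vB m = vB m * opiB (q+1)) ∧
    (∀ (m : ℕ) (e : ℤ), (e = 1 ∨ e = -1) →
      (opiB m) ^ e * vB m = (piB m) ^ e * (opiB (m+1)) ^ e) ∧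
    (∀ m q : ℕ, m + 2 ≤ q ∨ q + 2 ≤ m → piB q * piB m = piB m * piB q) ∧
    (∀ m : ℕ, piB m * piB (m+1) * piB m = piB (m+1) * piB m * piB (m+1)) ∧
    (∀ m q : ℕ, m + 2 ≤ q → opiB q * piB m = piB m * opiB q) ∧
    (∀ m : ℕ, piB m * opiB (m+1) * piB m = opiB (m+1) * piB m * opiB (m+1)) :=
  ⟨fun _ _ => vB_mul_vB_of_lt, fun _ _ => piB_mul_vB_of_lt, fun _ _ he => piB_zpow_mul_vB he _,
    fun _ _ => piB_mul_vB_of_succ_lt, fun _ _ => opiB_mul_vB_of_lt,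
    fun _ _ he => opiB_zpow_mul_vB he _,
    fun _ _ h => h.elim piB_mul_piB_of_add_two_le fun h => (piB_mul_piB_of_add_two_le h).symm,
    piB_braid, fun _ _ => opiB_mul_piB_of_add_two_le, piB_opiB_braid⟩

end BrinStmt3
end

section
/- In V̂, the elements v_n, π_n, π̄_n satisfy the following relations (for ε = ±1): (R1) v_q v_m = v_m v_{q+1} for m < q; (R2) π_q v_m = v_m π_{q+1} for m < q; (R3) π_m^ε v_m = v_{m+1} π_m^ε π_{m+1}^ε for m ≥ 0; (R4) π_q v_m = v_m π_q for m > q+1; (R5) π̄_q v_m = v_m π̄_{q+1} for m < q; (R6) π̄_m^ε v_m = π_m^ε π̄_{m+1}^ε for m ≥ 0; (R7) π_q π_m = π_m π_q for |m−q| ≥ 2; (R8) π_m π_{m+1} π_m = π_{m+1} π_m π_{m+1} for m ≥ 0; (R9) π̄_q π_m = π_m π̄_q for q ≥ m+2; (R10) π_m π̄_{m+1} π_m = π̄_{m+1} π_m π̄_{m+1} for m ≥ 0; (R11) π_m^2 = 1 for m ≥ 0; (R12) π̄_m^2 = 1 for m ≥ 0. -/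
namespace BrinStmt4

/-- The free-group generators for the infinite presentation of `Vhat`:
`Sum.inl i` is the generator `λ_i` and `Sum.inr i` is the generator `σ_i`. -/
def lamF (i : ℕ) : FreeGroup (ℕ ⊕ ℕ) := FreeGroup.of (Sum.inl i)
def sigF (i : ℕ) : FreeGroup (ℕ ⊕ ℕ) := FreeGroup.of (Sum.inr i)

/-- The relators of the infinite presentation of the group `V̂`. -/
def vhatRels : Set (FreeGroup (ℕ ⊕ ℕ)) :=
  { r | (∃ m q : ℕ, m < q ∧ r = lamF q * lamF m * (lamF m * lamF (q+1))⁻¹) ∨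
        (∃ m : ℕ, r = sigF m * sigF m) ∨
        (∃ m n : ℕ, (m + 2 ≤ n ∨ n + 2 ≤ m) ∧
            r = sigF m * sigF n * (sigF n * sigF m)⁻¹) ∨
        (∃ m : ℕ, r = sigF m * sigF (m+1) * sigF m *
            (sigF (m+1) * sigF m * sigF (m+1))⁻¹) ∨
        (∃ m q : ℕ, m < q ∧ r = sigF q * lamF m * (lamF m * sigF (q+1))⁻¹) ∨
        (∃ m : ℕ, r = sigF m * lamF m * (lamF (m+1) * sigF m * sigF (m+1))⁻¹) ∨
        (∃ m : ℕ, r = sigF m * lamF (m+1) * (lamF m * sigF (m+1) * sigF m)⁻¹) ∨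
        (∃ m q : ℕ, q + 1 < m ∧ r = sigF q * lamF m * (lamF m * sigF q)⁻¹) }

/-- The group `V̂`, given by its infinite presentation. -/
abbrev Vhat := PresentedGroup vhatRels

/-- The generator `λ_i` of `V̂`. -/
def lamV (i : ℕ) : Vhat := PresentedGroup.of (Sum.inl i)
/-- The generator `σ_i` of `V̂`. -/
def sigV (i : ℕ) : Vhat := PresentedGroup.of (Sum.inr i)

/-- The element `v_n = λ_0^{n+1} λ_1 λ_0^{-n-2}` of `V̂`. -/
def vV (n : ℕ) : Vhat := lamV 0 ^ (n+1) * lamV 1 * lamV 0 ^ (-((n : ℤ) + 2))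
/-- The element `π_n = λ_0^{n+2} σ_1 λ_0^{-n-2}` of `V̂`. -/
def piV (n : ℕ) : Vhat := lamV 0 ^ (n+2) * sigV 1 * lamV 0 ^ (-((n : ℤ) + 2))
/-- The element `π̄_n = λ_0^{n+1} σ_0 λ_0^{-n-1}` of `V̂`. -/
def opiV (n : ℕ) : Vhat := lamV 0 ^ (n+1) * sigV 0 * lamV 0 ^ (-((n : ℤ) + 1))


section Auxiliary

lemma mk_rel_one {r : FreeGroup (ℕ ⊕ ℕ)} (h : r ∈ vhatRels) :
    PresentedGroup.mk vhatRels r = 1 :=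
  (QuotientGroup.eq_one_iff r).2 (Subgroup.subset_normalClosure h)

lemma rel_eq {x y : FreeGroup (ℕ ⊕ ℕ)} (h : x * y⁻¹ ∈ vhatRels) :
    PresentedGroup.mk vhatRels x = PresentedGroup.mk vhatRels y := by
  have h1 := mk_rel_one h
  rwa [map_mul, map_inv, mul_inv_eq_one] at h1

lemma lamV_eq' (i : ℕ) : lamV i = PresentedGroup.mk vhatRels (lamF i) := rfl
lemma sigV_eq' (i : ℕ) : sigV i = PresentedGroup.mk vhatRels (sigF i) := rfl

lemma lam_lam {m q : ℕ} (h : m < q) : lamV q * lamV m = lamV m * lamV (q+1) := by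
  have := rel_eq (x := lamF q * lamF m) (y := lamF m * lamF (q+1))
    (Or.inl ⟨m, q, h, rfl⟩)
  simpa [map_mul, lamV_eq'] using this

lemma sig_sq (m : ℕ) : sigV m * sigV m = 1 := by
  have := mk_rel_one (r := sigF m * sigF m) (Or.inr (Or.inl ⟨m, rfl⟩))
  simpa [map_mul, sigV_eq'] using this

lemma sig_comm {m n : ℕ} (h : m + 2 ≤ n ∨ n + 2 ≤ m) :
    sigV m * sigV n = sigV n * sigV m := by
  have := rel_eq (x := sigF m * sigF n) (y := sigF n * sigF m)
    (Or.inr (Or.inr (Or.inl ⟨m, n, h, rfl⟩)))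
  simpa [map_mul, sigV_eq'] using this

lemma sig_braid (m : ℕ) :
    sigV m * sigV (m+1) * sigV m = sigV (m+1) * sigV m * sigV (m+1) := by
  have := rel_eq (x := sigF m * sigF (m+1) * sigF m)
    (y := sigF (m+1) * sigF m * sigF (m+1))
    (Or.inr (Or.inr (Or.inr (Or.inl ⟨m, rfl⟩))))
  simpa [map_mul, sigV_eq'] using this

lemma sig_lam_lt {m q : ℕ} (h : m < q) : sigV q * lamV m = lamV m * sigV (q+1) := by
  have := rel_eq (x := sigF q * lamF m) (y := lamF m * sigF (q+1))
    (Or.inr (Or.inr (Or.inr (Or.inr (Or.inl ⟨m, q, h, rfl⟩)))))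
  simpa [map_mul, sigV_eq', lamV_eq'] using this

lemma sig_lam_eq (m : ℕ) :
    sigV m * lamV m = lamV (m+1) * sigV m * sigV (m+1) := by
  have := rel_eq (x := sigF m * lamF m) (y := lamF (m+1) * sigF m * sigF (m+1))
    (Or.inr (Or.inr (Or.inr (Or.inr (Or.inr (Or.inl ⟨m, rfl⟩))))))
  simpa [map_mul, sigV_eq', lamV_eq'] using this

lemma sig_lam_succ (m : ℕ) :
    sigV m * lamV (m+1) = lamV m * sigV (m+1) * sigV m := by
  have := rel_eq (x := sigF m * lamF (m+1)) (y := lamF m * sigF (m+1) * sigF m)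
    (Or.inr (Or.inr (Or.inr (Or.inr (Or.inr (Or.inr (Or.inl ⟨m, rfl⟩)))))))
  simpa [map_mul, sigV_eq', lamV_eq'] using this

lemma sig_lam_gt {m q : ℕ} (h : q + 1 < m) : sigV q * lamV m = lamV m * sigV q := by
  have := rel_eq (x := sigF q * lamF m) (y := lamF m * sigF q)
    (Or.inr (Or.inr (Or.inr (Or.inr (Or.inr (Or.inr (Or.inr ⟨m, q, h, rfl⟩)))))))
  simpa [map_mul, sigV_eq', lamV_eq'] using this

lemma lconj (q k : ℕ) (h : 1 ≤ q) :
    (lamV 0 ^ k)⁻¹ * lamV q * lamV 0 ^ k = lamV (q + k) := by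
  induction k with
  | zero => simp
  | succ k ih =>
    have h1 : lamV (q+k) * lamV 0 = lamV 0 * lamV (q+k+1) := lam_lam (by omega)
    calc (lamV 0 ^ (k+1))⁻¹ * lamV q * lamV 0 ^ (k+1)
        = (lamV 0)⁻¹ * ((lamV 0 ^ k)⁻¹ * lamV q * lamV 0 ^ k) * lamV 0 := by group
      _ = (lamV 0)⁻¹ * (lamV (q+k) * lamV 0) := by rw [ih]; group
      _ = (lamV 0)⁻¹ * (lamV 0 * lamV (q+k+1)) := by rw [h1]
      _ = lamV (q + (k+1)) := by group

lemma sconj (q k : ℕ) (h : 1 ≤ q) :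
    (lamV 0 ^ k)⁻¹ * sigV q * lamV 0 ^ k = sigV (q + k) := by
  induction k with
  | zero => simp
  | succ k ih =>
    have h1 : sigV (q+k) * lamV 0 = lamV 0 * sigV (q+k+1) := sig_lam_lt (by omega)
    calc (lamV 0 ^ (k+1))⁻¹ * sigV q * lamV 0 ^ (k+1)
        = (lamV 0)⁻¹ * ((lamV 0 ^ k)⁻¹ * sigV q * lamV 0 ^ k) * lamV 0 := by group
      _ = (lamV 0)⁻¹ * (sigV (q+k) * lamV 0) := by rw [ih]; group
      _ = (lamV 0)⁻¹ * (lamV 0 * sigV (q+k+1)) := by rw [h1]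
      _ = sigV (q + (k+1)) := by group

/-- index-normalized variants -/
lemma lconj' (q k r : ℕ) (h : 1 ≤ q) (hr : q + k = r) :
    (lamV 0 ^ k)⁻¹ * lamV q * lamV 0 ^ k = lamV r := hr ▸ lconj q k h

lemma sconj' (q k r : ℕ) (h : 1 ≤ q) (hr : q + k = r) :
    (lamV 0 ^ k)⁻¹ * sigV q * lamV 0 ^ k = sigV r := hr ▸ sconj q k h

lemma lam_lam' (m q r : ℕ) (h : m < q) (hr : q + 1 = r) :
    lamV q * lamV m = lamV m * lamV r := hr ▸ lam_lam h

lemma sig_lam_lt' (m q r : ℕ) (h : m < q) (hr : q + 1 = r) :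
    sigV q * lamV m = lamV m * sigV r := hr ▸ sig_lam_lt h

-- (R1)
lemma R1 (m d : ℕ) : vV (m+d+1) * vV m = vV m * vV (m+d+2) := by
  calc vV (m+d+1) * vV m
      = lamV 0^(m+d+2) * (lamV 1 * ((lamV 0^(d+2))⁻¹ * lamV 1 * lamV 0^(d+2)))
          * (lamV 0^(m+d+4))⁻¹ := by simp only [vV]; push_cast; group
    _ = lamV 0^(m+d+2) * (lamV 1 * lamV (d+3)) * (lamV 0^(m+d+4))⁻¹ := by
          rw [lconj' 1 (d+2) (d+3) le_rfl (by omega)]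
    _ = lamV 0^(m+d+2) * (lamV (d+2) * lamV 1) * (lamV 0^(m+d+4))⁻¹ := by
          rw [lam_lam' 1 (d+2) (d+3) (by omega) (by omega)]
    _ = lamV 0^(m+d+2) * (((lamV 0^(d+1))⁻¹ * lamV 1 * lamV 0^(d+1)) * lamV 1)
          * (lamV 0^(m+d+4))⁻¹ := by
          rw [lconj' 1 (d+1) (d+2) le_rfl (by omega)]
    _ = vV m * vV (m+d+2) := by simp only [vV]; push_cast; group

-- (R2)
lemma R2 (m d : ℕ) : piV (m+d+1) * vV m = vV m * piV (m+d+2) := by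
  calc piV (m+d+1) * vV m
      = lamV 0^(m+d+3) * (sigV 1 * ((lamV 0^(d+2))⁻¹ * lamV 1 * lamV 0^(d+2)))
          * (lamV 0^(m+d+4))⁻¹ := by simp only [piV, vV]; push_cast; group
    _ = lamV 0^(m+d+3) * (sigV 1 * lamV (d+3)) * (lamV 0^(m+d+4))⁻¹ := by
          rw [lconj' 1 (d+2) (d+3) le_rfl (by omega)]
    _ = lamV 0^(m+d+3) * (lamV (d+3) * sigV 1) * (lamV 0^(m+d+4))⁻¹ := by
          rw [sig_lam_gt (by omega)]
    _ = lamV 0^(m+d+3) * (((lamV 0^(d+2))⁻¹ * lamV 1 * lamV 0^(d+2)) * sigV 1)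
          * (lamV 0^(m+d+4))⁻¹ := by
          rw [lconj' 1 (d+2) (d+3) le_rfl (by omega)]
    _ = vV m * piV (m+d+2) := by simp only [piV, vV]; push_cast; group

-- (R3), exponent 1 case
lemma R3 (m : ℕ) : piV m * vV m = vV (m+1) * (piV m * piV (m+1)) := by
  calc piV m * vV m
      = lamV 0^(m+2) * (sigV 1 * ((lamV 0^(1:ℕ))⁻¹ * lamV 1 * lamV 0^(1:ℕ)))
          * (lamV 0^(m+3))⁻¹ := by simp only [piV, vV]; push_cast; group
    _ = lamV 0^(m+2) * (sigV 1 * lamV 2) * (lamV 0^(m+3))⁻¹ := by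
          rw [lconj' 1 1 2 le_rfl (by omega)]
    _ = lamV 0^(m+2) * (lamV 1 * sigV 2 * sigV 1) * (lamV 0^(m+3))⁻¹ := by
          rw [sig_lam_succ 1]
    _ = lamV 0^(m+2) * (lamV 1 * ((lamV 0^(1:ℕ))⁻¹ * sigV 1 * lamV 0^(1:ℕ)) * sigV 1)
          * (lamV 0^(m+3))⁻¹ := by
          rw [sconj' 1 1 2 le_rfl (by omega)]
    _ = vV (m+1) * (piV m * piV (m+1)) := by simp only [piV, vV]; push_cast; group

-- (R4)
lemma R4 (q d : ℕ) : piV q * vV (q+d+2) = vV (q+d+2) * piV q := by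
  calc piV q * vV (q+d+2)
      = lamV 0^(q+d+3) * (((lamV 0^(d+1))⁻¹ * sigV 1 * lamV 0^(d+1)) * lamV 1)
          * (lamV 0^(q+d+4))⁻¹ := by simp only [piV, vV]; push_cast; group
    _ = lamV 0^(q+d+3) * (sigV (d+2) * lamV 1) * (lamV 0^(q+d+4))⁻¹ := by
          rw [sconj' 1 (d+1) (d+2) le_rfl (by omega)]
    _ = lamV 0^(q+d+3) * (lamV 1 * sigV (d+3)) * (lamV 0^(q+d+4))⁻¹ := by
          rw [sig_lam_lt' 1 (d+2) (d+3) (by omega) (by omega)]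
    _ = lamV 0^(q+d+3) * (lamV 1 * ((lamV 0^(d+2))⁻¹ * sigV 1 * lamV 0^(d+2)))
          * (lamV 0^(q+d+4))⁻¹ := by
          rw [sconj' 1 (d+2) (d+3) le_rfl (by omega)]
    _ = vV (q+d+2) * piV q := by simp only [piV, vV]; push_cast; group

-- (R5)
lemma R5 (m d : ℕ) : opiV (m+d+1) * vV m = vV m * opiV (m+d+2) := by
  calc opiV (m+d+1) * vV m
      = lamV 0^(m+d+2) * (sigV 0 * ((lamV 0^(d+1))⁻¹ * lamV 1 * lamV 0^(d+1)))
          * (lamV 0^(m+d+3))⁻¹ := by simp only [opiV, vV]; push_cast; group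
    _ = lamV 0^(m+d+2) * (sigV 0 * lamV (d+2)) * (lamV 0^(m+d+3))⁻¹ := by
          rw [lconj' 1 (d+1) (d+2) le_rfl (by omega)]
    _ = lamV 0^(m+d+2) * (lamV (d+2) * sigV 0) * (lamV 0^(m+d+3))⁻¹ := by
          rw [sig_lam_gt (by omega)]
    _ = lamV 0^(m+d+2) * (((lamV 0^(d+1))⁻¹ * lamV 1 * lamV 0^(d+1)) * sigV 0)
          * (lamV 0^(m+d+3))⁻¹ := by
          rw [lconj' 1 (d+1) (d+2) le_rfl (by omega)]
    _ = vV m * opiV (m+d+2) := by simp only [opiV, vV]; push_cast; group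

-- (R6), exponent 1 case
lemma R6 (m : ℕ) : opiV m * vV m = piV m * opiV (m+1) := by
  calc opiV m * vV m
      = lamV 0^(m+1) * (sigV 0 * lamV 1) * (lamV 0^(m+2))⁻¹ := by
          simp only [opiV, vV]; push_cast; group
    _ = lamV 0^(m+1) * (lamV 0 * sigV 1 * sigV 0) * (lamV 0^(m+2))⁻¹ := by
          rw [sig_lam_succ 0]
    _ = piV m * opiV (m+1) := by simp only [piV, opiV]; push_cast; group

-- (R7)
lemma R7 (m d : ℕ) : piV (m+d+2) * piV m = piV m * piV (m+d+2) := by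
  calc piV (m+d+2) * piV m
      = lamV 0^(m+d+4) * (sigV 1 * ((lamV 0^(d+2))⁻¹ * sigV 1 * lamV 0^(d+2)))
          * (lamV 0^(m+d+4))⁻¹ := by simp only [piV]; push_cast; group
    _ = lamV 0^(m+d+4) * (sigV 1 * sigV (d+3)) * (lamV 0^(m+d+4))⁻¹ := by
          rw [sconj' 1 (d+2) (d+3) le_rfl (by omega)]
    _ = lamV 0^(m+d+4) * (sigV (d+3) * sigV 1) * (lamV 0^(m+d+4))⁻¹ := by
          rw [sig_comm (Or.inl (by omega))]
    _ = lamV 0^(m+d+4) * (((lamV 0^(d+2))⁻¹ * sigV 1 * lamV 0^(d+2)) * sigV 1)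
          * (lamV 0^(m+d+4))⁻¹ := by
          rw [sconj' 1 (d+2) (d+3) le_rfl (by omega)]
    _ = piV m * piV (m+d+2) := by simp only [piV]; push_cast; group

-- (R8)
lemma R8 (m : ℕ) : piV m * piV (m+1) * piV m = piV (m+1) * piV m * piV (m+1) := by
  calc piV m * piV (m+1) * piV m
      = lamV 0^(m+3) * (((lamV 0^(1:ℕ))⁻¹ * sigV 1 * lamV 0^(1:ℕ)) * sigV 1
          * ((lamV 0^(1:ℕ))⁻¹ * sigV 1 * lamV 0^(1:ℕ))) * (lamV 0^(m+3))⁻¹ := by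
          simp only [piV]; push_cast; group
    _ = lamV 0^(m+3) * (sigV 2 * sigV 1 * sigV 2) * (lamV 0^(m+3))⁻¹ := by
          rw [sconj' 1 1 2 le_rfl (by omega)]
    _ = lamV 0^(m+3) * (sigV 1 * sigV 2 * sigV 1) * (lamV 0^(m+3))⁻¹ := by
          rw [← sig_braid 1]
    _ = lamV 0^(m+3) * (sigV 1 * ((lamV 0^(1:ℕ))⁻¹ * sigV 1 * lamV 0^(1:ℕ)) * sigV 1)
          * (lamV 0^(m+3))⁻¹ := by
          rw [sconj' 1 1 2 le_rfl (by omega)]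
    _ = piV (m+1) * piV m * piV (m+1) := by simp only [piV]; push_cast; group

-- (R9)
lemma R9 (m d : ℕ) : opiV (m+d+2) * piV m = piV m * opiV (m+d+2) := by
  calc opiV (m+d+2) * piV m
      = lamV 0^(m+d+3) * (sigV 0 * ((lamV 0^(d+1))⁻¹ * sigV 1 * lamV 0^(d+1)))
          * (lamV 0^(m+d+3))⁻¹ := by simp only [opiV, piV]; push_cast; group
    _ = lamV 0^(m+d+3) * (sigV 0 * sigV (d+2)) * (lamV 0^(m+d+3))⁻¹ := by
          rw [sconj' 1 (d+1) (d+2) le_rfl (by omega)]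
    _ = lamV 0^(m+d+3) * (sigV (d+2) * sigV 0) * (lamV 0^(m+d+3))⁻¹ := by
          rw [sig_comm (Or.inl (by omega))]
    _ = lamV 0^(m+d+3) * (((lamV 0^(d+1))⁻¹ * sigV 1 * lamV 0^(d+1)) * sigV 0)
          * (lamV 0^(m+d+3))⁻¹ := by
          rw [sconj' 1 (d+1) (d+2) le_rfl (by omega)]
    _ = piV m * opiV (m+d+2) := by simp only [opiV, piV]; push_cast; group

-- (R10)
lemma R10 (m : ℕ) :
    piV m * opiV (m+1) * piV m = opiV (m+1) * piV m * opiV (m+1) := by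
  calc piV m * opiV (m+1) * piV m
      = lamV 0^(m+2) * (sigV 1 * sigV 0 * sigV 1) * (lamV 0^(m+2))⁻¹ := by
          simp only [piV, opiV]; push_cast; group
    _ = lamV 0^(m+2) * (sigV 0 * sigV 1 * sigV 0) * (lamV 0^(m+2))⁻¹ := by
          rw [← sig_braid 0]
    _ = opiV (m+1) * piV m * opiV (m+1) := by simp only [piV, opiV]; push_cast; group

-- (R11)
lemma R11 (m : ℕ) : piV m * piV m = 1 := by
  calc piV m * piV m
      = lamV 0^(m+2) * (sigV 1 * sigV 1) * (lamV 0^(m+2))⁻¹ := by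
          simp only [piV]; push_cast; group
    _ = 1 := by rw [sig_sq]; group

-- (R12)
lemma R12 (m : ℕ) : opiV m * opiV m = 1 := by
  calc opiV m * opiV m
      = lamV 0^(m+1) * (sigV 0 * sigV 0) * (lamV 0^(m+1))⁻¹ := by
          simp only [opiV]; push_cast; group
    _ = 1 := by rw [sig_sq]; group

lemma zpow_pm {G : Type*} [Group G] {x : G} (hx : x * x = 1) {e : ℤ}
    (he : e = 1 ∨ e = -1) : x ^ e = x := by
  rcases he with rfl | rfl
  · exact zpow_one x
  · rw [zpow_neg, zpow_one]
    exact inv_eq_of_mul_eq_one_right hx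

end Auxiliary

/-- Lemma (relations in `V̂`): the elements `v_n`, `π_n`, `π̄_n` of `V̂`
satisfy relations (R1)–(R12). -/
theorem relations_in_Vhat :
    (∀ m q : ℕ, m < q → vV q * vV m = vV m * vV (q+1)) ∧
    (∀ m q : ℕ, m < q → piV q * vV m = vV m * piV (q+1)) ∧
    (∀ (m : ℕ) (e : ℤ), (e = 1 ∨ e = -1) →
      (piV m) ^ e * vV m = vV (m+1) * (piV m) ^ e * (piV (m+1)) ^ e) ∧
    (∀ m q : ℕ, q + 1 < m → piV q * vV m = vV m * piV q) ∧
    (∀ m q : ℕ, m < q → opiV q * vV m = vV m * opiV (q+1)) ∧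
    (∀ (m : ℕ) (e : ℤ), (e = 1 ∨ e = -1) →
      (opiV m) ^ e * vV m = (piV m) ^ e * (opiV (m+1)) ^ e) ∧
    (∀ m q : ℕ, m + 2 ≤ q ∨ q + 2 ≤ m → piV q * piV m = piV m * piV q) ∧
    (∀ m : ℕ, piV m * piV (m+1) * piV m = piV (m+1) * piV m * piV (m+1)) ∧
    (∀ m q : ℕ, m + 2 ≤ q → opiV q * piV m = piV m * opiV q) ∧
    (∀ m : ℕ, piV m * opiV (m+1) * piV m = opiV (m+1) * piV m * opiV (m+1)) ∧
    (∀ m : ℕ, piV m ^ 2 = 1) ∧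
    (∀ m : ℕ, opiV m ^ 2 = 1) := by
  have hpi : ∀ (m : ℕ) (e : ℤ), (e = 1 ∨ e = -1) → (piV m) ^ e = piV m :=
    fun m e he => zpow_pm (R11 m) he
  have hopi : ∀ (m : ℕ) (e : ℤ), (e = 1 ∨ e = -1) → (opiV m) ^ e = opiV m :=
    fun m e he => zpow_pm (R12 m) he
  refine ⟨?_, ?_, ?_, ?_, ?_, ?_, ?_, R8, ?_, R10, ?_, ?_⟩
  · intro m q h
    obtain ⟨d, rfl⟩ : ∃ d, q = m + d + 1 := ⟨q - m - 1, by omega⟩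
    exact R1 m d
  · intro m q h
    obtain ⟨d, rfl⟩ : ∃ d, q = m + d + 1 := ⟨q - m - 1, by omega⟩
    exact R2 m d
  · intro m e he
    rw [hpi m e he, hpi (m+1) e he, mul_assoc]
    exact R3 m
  · intro m q h
    obtain ⟨d, rfl⟩ : ∃ d, m = q + d + 2 := ⟨m - q - 2, by omega⟩
    exact R4 q d
  · intro m q h
    obtain ⟨d, rfl⟩ : ∃ d, q = m + d + 1 := ⟨q - m - 1, by omega⟩
    exact R5 m d
  · intro m e he
    rw [hpi m e he, hopi m e he, hopi (m+1) e he]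
    exact R6 m
  · intro m q h
    rcases h with h | h
    · obtain ⟨d, rfl⟩ : ∃ d, q = m + d + 2 := ⟨q - m - 2, by omega⟩
      exact R7 m d
    · obtain ⟨d, rfl⟩ : ∃ d, m = q + d + 2 := ⟨m - q - 2, by omega⟩
      exact (R7 q d).symm
  · intro m q h
    obtain ⟨d, rfl⟩ : ∃ d, q = m + d + 2 := ⟨q - m - 2, by omega⟩
    exact R9 m d
  · intro m
    rw [pow_two]; exact R11 m
  · intro m
    rw [pow_two]; exact R12 m


end BrinStmt4
end

section
/- The subgroup of BV̂ generated by the set {v_i : i ∈ ℕ} is isomorphic to Thompson's group F; more precisely, the homomorphism from F to BV̂ determined by sending the generator λ_i of F to v_i for each i ∈ ℕ is injective, so it gives an isomorphism of F onto the subgroup of BV̂ generated by {v_i : i ∈ ℕ}. -/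
/-!
`BV̂` acts on `ℕ × C`, countably many strands each carrying a copy of the Cantor space
`C = Stream' Bool`: `λ_i` merges strands `i` and `i + 1` into strand `i`, as its halves `0C` and
`1C`, and `σ_i` swaps strands `i` and `i + 1`. Under this action `v_n` fixes every strand but
strand `0`, on which it acts as the generator `x_n` of Thompson's group `F` acting on `C`.

Since the `v_n` satisfy the defining relations of `F`, `λ_i ↦ v_i` is a homomorphism `F → BV̂`,
and composed with the action it becomes the action of `F` on `C`, which is faithful: every
element of `F` is `p q⁻¹` with `p`, `q` positive words `x_{i₁} ⋯ x_{iₖ}`, `i₁ ≤ ⋯ ≤ iₖ`, and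
such a word is determined by the permutation of `C` it induces.
-/

namespace BrinStmt5

/-- The free-group generators for the infinite presentation of `BVhat`:
`Sum.inl i` is the generator `λ_i` and `Sum.inr i` is the generator `σ_i`. -/
def lamF (i : ℕ) : FreeGroup (ℕ ⊕ ℕ) := FreeGroup.of (Sum.inl i)
def sigF (i : ℕ) : FreeGroup (ℕ ⊕ ℕ) := FreeGroup.of (Sum.inr i)

/-- The relators of the infinite presentation of the group `BV̂`. -/
def bvhatRels : Set (FreeGroup (ℕ ⊕ ℕ)) :=
  { r | (∃ m q : ℕ, m < q ∧ r = lamF q * lamF m * (lamF m * lamF (q+1))⁻¹) ∨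
        (∃ m n : ℕ, (m + 2 ≤ n ∨ n + 2 ≤ m) ∧
            r = sigF m * sigF n * (sigF n * sigF m)⁻¹) ∨
        (∃ m : ℕ, r = sigF m * sigF (m+1) * sigF m *
            (sigF (m+1) * sigF m * sigF (m+1))⁻¹) ∨
        (∃ (m q : ℕ) (e : ℤ), (e = 1 ∨ e = -1) ∧ m < q ∧
            r = (sigF q) ^ e * lamF m * (lamF m * (sigF (q+1)) ^ e)⁻¹) ∨
        (∃ (m : ℕ) (e : ℤ), (e = 1 ∨ e = -1) ∧
            r = (sigF m) ^ e * lamF m *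
              (lamF (m+1) * (sigF m) ^ e * (sigF (m+1)) ^ e)⁻¹) ∨
        (∃ (m : ℕ) (e : ℤ), (e = 1 ∨ e = -1) ∧
            r = (sigF m) ^ e * lamF (m+1) *
              (lamF m * (sigF (m+1)) ^ e * (sigF m) ^ e)⁻¹) ∨
        (∃ (m q : ℕ) (e : ℤ), (e = 1 ∨ e = -1) ∧ q + 1 < m ∧
            r = (sigF q) ^ e * lamF m * (lamF m * (sigF q) ^ e)⁻¹) }

/-- The group `BV̂`, given by its infinite presentation. -/
abbrev BVhat := PresentedGroup bvhatRels

/-- The generator `λ_i` of `BV̂`. -/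
def lamB (i : ℕ) : BVhat := PresentedGroup.of (Sum.inl i)
/-- The generator `σ_i` of `BV̂`. -/
def sigB (i : ℕ) : BVhat := PresentedGroup.of (Sum.inr i)

/-- The element `v_n = λ_0^{n+1} λ_1 λ_0^{-n-2}` of `BV̂`. -/
def vB (n : ℕ) : BVhat := lamB 0 ^ (n+1) * lamB 1 * lamB 0 ^ (-((n : ℤ) + 2))
/-- The element `π_n = λ_0^{n+2} σ_1 λ_0^{-n-2}` of `BV̂`. -/
def piB (n : ℕ) : BVhat := lamB 0 ^ (n+2) * sigB 1 * lamB 0 ^ (-((n : ℤ) + 2))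
/-- The element `π̄_n = λ_0^{n+1} σ_0 λ_0^{-n-1}` of `BV̂`. -/
def opiB (n : ℕ) : BVhat := lamB 0 ^ (n+1) * sigB 0 * lamB 0 ^ (-((n : ℤ) + 1))

/-- The relators of the infinite presentation of Thompson's group `F`:
`λ_q λ_m = λ_m λ_{q+1}` for `m < q`. -/
def fRels : Set (FreeGroup ℕ) :=
  { r | ∃ m q : ℕ, m < q ∧
      r = FreeGroup.of q * FreeGroup.of m * (FreeGroup.of m * FreeGroup.of (q+1))⁻¹ }

/-- Thompson's group `F`, given by its infinite presentation. -/
abbrev FGrp := PresentedGroup fRels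

def shiftInsert (a : ℕ) : List ℕ → List ℕ
  | [] => [a]
  | b :: L => if a ≤ b then a :: b :: L else b :: shiftInsert (a + 1) L

def shiftSort : List ℕ → List ℕ := List.foldr shiftInsert []

lemma le_or_mem_of_mem_shiftInsert {a b : ℕ} {L : List ℕ} (h : b ∈ shiftInsert a L) :
    a ≤ b ∨ b ∈ L := by
  induction L generalizing a with
  | nil => simp_all [shiftInsert]
  | cons c L ih =>
    unfold shiftInsert at h
    split_ifs at h
    · rcases List.mem_cons.1 h with rfl | h
      exacts [Or.inl le_rfl, Or.inr h]
    · rcases List.mem_cons.1 h with rfl | h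
      · exact Or.inr List.mem_cons_self
      · rcases ih h with h | h
        · exact Or.inl (by omega)
        · exact Or.inr (List.mem_cons_of_mem _ h)

lemma pairwise_shiftInsert (a : ℕ) {L : List ℕ} (hL : L.Pairwise (· ≤ ·)) :
    (shiftInsert a L).Pairwise (· ≤ ·) := by
  induction L generalizing a with
  | nil => simp [shiftInsert]
  | cons b L ih =>
    rw [List.pairwise_cons] at hL
    unfold shiftInsert
    split_ifs
    · exact List.Pairwise.cons (by grind) (List.pairwise_cons.2 hL)
    · refine List.Pairwise.cons (fun c hc => ?_) (ih (a + 1) hL.2)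
      rcases le_or_mem_of_mem_shiftInsert hc with h | h
      · omega
      · exact hL.1 c h

lemma pairwise_shiftSort (L : List ℕ) : (shiftSort L).Pairwise (· ≤ ·) := by
  induction L with
  | nil => exact List.Pairwise.nil
  | cons a L ih => exact pairwise_shiftInsert a ih

section ThompsonRelations

variable {G : Type*} [Group G]

def SatisfiesThompsonRels (x : ℕ → G) : Prop :=
  ∀ ⦃m q : ℕ⦄, m < q → x q * x m = x m * x (q + 1)

def vWord (x : ℕ → G) (n : ℕ) : G := x 0 ^ (n + 1) * x 1 * x 0 ^ (-((n : ℤ) + 2))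

lemma vWord_succ (x : ℕ → G) (n : ℕ) : vWord x (n + 1) = x 0 * vWord x n * (x 0)⁻¹ := by
  simp only [vWord]
  push_cast
  group

lemma vWord_zero_mul (x : ℕ → G) : vWord x 0 * x 0 * x 0 = x 0 * x 1 := by
  simp only [vWord]
  group

namespace SatisfiesThompsonRels

variable {x : ℕ → G}

lemma lift_eq_one (hx : SatisfiesThompsonRels x) : ∀ r ∈ fRels, FreeGroup.lift x r = 1 := by
  rintro _ ⟨m, q, h, rfl⟩
  simpa only [map_mul, map_inv, FreeGroup.lift_apply_of, mul_inv_eq_one] using hx h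

lemma mul_pow_zero (hx : SatisfiesThompsonRels x) {j : ℕ} (hj : 0 < j) (k : ℕ) :
    x j * x 0 ^ k = x 0 ^ k * x (k + j) := by
  induction k with
  | zero => simp
  | succ k ih =>
    rw [pow_succ, ← mul_assoc, ih, mul_assoc, hx (by omega), ← mul_assoc, ← pow_succ,
      Nat.add_right_comm]

lemma vWord (hx : SatisfiesThompsonRels x) : SatisfiesThompsonRels (vWord x) := by
  intro m q h
  obtain ⟨d, rfl⟩ : ∃ d, q = m + d + 1 := ⟨q - m - 1, by omega⟩
  have key : x 0 ^ (d + 1) * x 1 * (x 0 ^ (d + 2))⁻¹ * x 1 * x 0 ^ (d + 2)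
      = x 1 * x 0 ^ (d + 1) * x 1 := by
    have h₁ : x 1 * x 0 ^ (d + 1) = x 0 ^ (d + 1) * x (d + 2) := hx.mul_pow_zero one_pos _
    have h₂ : x 1 * x 0 ^ (d + 2) = x 0 ^ (d + 2) * x (d + 3) := hx.mul_pow_zero one_pos _
    have h₃ : x (d + 2) * x 1 = x 1 * x (d + 3) := hx (by omega)
    calc x 0 ^ (d + 1) * x 1 * (x 0 ^ (d + 2))⁻¹ * x 1 * x 0 ^ (d + 2)
        = x 0 ^ (d + 1) * x 1 * ((x 0 ^ (d + 2))⁻¹ * (x 1 * x 0 ^ (d + 2))) := by group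
      _ = x 0 ^ (d + 1) * (x (d + 2) * x 1) := by rw [h₂, inv_mul_cancel_left, h₃, mul_assoc]
      _ = x 1 * x 0 ^ (d + 1) * x 1 := by rw [← mul_assoc, h₁]
  calc BrinStmt5.vWord x (m + d + 1) * BrinStmt5.vWord x m
      = x 0 ^ (m + 1) * (x 0 ^ (d + 1) * x 1 * (x 0 ^ (d + 2))⁻¹ * x 1 * x 0 ^ (d + 2))
          * (x 0 ^ (d + 3))⁻¹ * (x 0 ^ (m + 1))⁻¹ := by
        simp only [BrinStmt5.vWord]; push_cast; group
    _ = x 0 ^ (m + 1) * (x 1 * x 0 ^ (d + 1) * x 1) * (x 0 ^ (d + 3))⁻¹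
          * (x 0 ^ (m + 1))⁻¹ := by
        rw [key]
    _ = BrinStmt5.vWord x m * BrinStmt5.vWord x (m + d + 1 + 1) := by
        simp only [BrinStmt5.vWord]; push_cast; group

lemma prod_shiftInsert (hx : SatisfiesThompsonRels x) (a : ℕ) (L : List ℕ) :
    ((shiftInsert a L).map x).prod = x a * (L.map x).prod := by
  induction L generalizing a with
  | nil => simp [shiftInsert]
  | cons b L ih =>
    by_cases hab : a ≤ b
    · simp [shiftInsert, hab]
    · simp only [shiftInsert, hab, if_false, List.map_cons, List.prod_cons, ih, ← mul_assoc,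
        hx (not_le.1 hab)]

lemma prod_shiftSort (hx : SatisfiesThompsonRels x) (L : List ℕ) :
    ((shiftSort L).map x).prod = (L.map x).prod := by
  induction L with
  | nil => rfl
  | cons a L ih => rw [shiftSort, List.foldr_cons, hx.prod_shiftInsert, ← shiftSort, ih]; rfl

lemma exists_inv_mul_prod (hx : SatisfiesThompsonRels x) (a : ℕ) (L : List ℕ) :
    ∃ L' M' : List ℕ, (x a)⁻¹ * (L.map x).prod = (L'.map x).prod * ((M'.map x).prod)⁻¹ := by
  induction L generalizing a with
  | nil => exact ⟨[], [a], by simp⟩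
  | cons b L ih =>
    rcases lt_trichotomy a b with h | rfl | h
    · obtain ⟨L', M', hLM⟩ := ih a
      refine ⟨(b + 1) :: L', M', ?_⟩
      have : (x a)⁻¹ * x b = x (b + 1) * (x a)⁻¹ := by
        rw [inv_mul_eq_iff_eq_mul, ← mul_assoc, ← hx h, mul_inv_cancel_right]
      simp only [List.map_cons, List.prod_cons, ← mul_assoc, this]
      rw [mul_assoc, hLM, mul_assoc]
    · exact ⟨L, [], by simp⟩
    · obtain ⟨L', M', hLM⟩ := ih (a + 1)
      refine ⟨b :: L', M', ?_⟩
      have : (x a)⁻¹ * x b = x b * (x (a + 1))⁻¹ := by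
        rw [inv_mul_eq_iff_eq_mul, ← mul_assoc, hx h, mul_inv_cancel_right]
      simp only [List.map_cons, List.prod_cons, ← mul_assoc, this]
      rw [mul_assoc, hLM, mul_assoc]

lemma exists_prod_inv_mul_prod (hx : SatisfiesThompsonRels x) (M L : List ℕ) :
    ∃ L' M' : List ℕ,
      ((M.map x).prod)⁻¹ * (L.map x).prod = (L'.map x).prod * ((M'.map x).prod)⁻¹ := by
  induction M generalizing L with
  | nil => exact ⟨L, [], by simp⟩
  | cons a M ih =>
    obtain ⟨L₁, M₁, h₁⟩ := hx.exists_inv_mul_prod a L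
    obtain ⟨L₂, M₂, h₂⟩ := ih L₁
    refine ⟨L₂, M₁ ++ M₂, ?_⟩
    simp only [List.map_cons, List.prod_cons, List.map_append, List.prod_append, mul_inv_rev,
      mul_assoc, h₁]
    rw [← mul_assoc, h₂, mul_assoc]

lemma exists_eq_prod_mul_inv_prod (hx : SatisfiesThompsonRels x) {g : G}
    (hg : g ∈ Subgroup.closure (Set.range x)) :
    ∃ L M : List ℕ, g = (L.map x).prod * ((M.map x).prod)⁻¹ := by
  induction hg using Subgroup.closure_induction with
  | mem _ h => obtain ⟨i, rfl⟩ := h; exact ⟨[i], [], by simp⟩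
  | one => exact ⟨[], [], by simp⟩
  | mul _ _ _ _ ih₁ ih₂ =>
    obtain ⟨L₁, M₁, rfl⟩ := ih₁
    obtain ⟨L₂, M₂, rfl⟩ := ih₂
    obtain ⟨L₃, M₃, h₃⟩ := hx.exists_prod_inv_mul_prod M₁ L₂
    refine ⟨L₁ ++ L₃, M₂ ++ M₃, ?_⟩
    simp only [List.map_append, List.prod_append, mul_inv_rev]
    calc (L₁.map x).prod * ((M₁.map x).prod)⁻¹ * ((L₂.map x).prod * ((M₂.map x).prod)⁻¹)
        = (L₁.map x).prod * (((M₁.map x).prod)⁻¹ * (L₂.map x).prod)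
            * ((M₂.map x).prod)⁻¹ := by group
      _ = _ := by rw [h₃]; group
  | inv _ _ ih =>
    obtain ⟨L, M, rfl⟩ := ih
    exact ⟨M, L, by group⟩

end SatisfiesThompsonRels

end ThompsonRelations

lemma satisfiesThompsonRels_of : SatisfiesThompsonRels (PresentedGroup.of : ℕ → FGrp) := by
  intro m q h
  have := PresentedGroup.one_of_mem (rels := fRels) ⟨m, q, h, rfl⟩
  rwa [map_mul, map_mul, map_inv, map_mul, mul_inv_eq_one] at this

lemma satisfiesThompsonRels_lamB : SatisfiesThompsonRels lamB := by
  intro m q h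
  have := PresentedGroup.one_of_mem (rels := bvhatRels) (Or.inl ⟨m, q, h, rfl⟩)
  rwa [map_mul, map_mul, map_inv, map_mul, mul_inv_eq_one] at this

lemma FGrp.exists_eq_sorted_mul_inv_sorted (g : FGrp) :
    ∃ L M : List ℕ, L.Pairwise (· ≤ ·) ∧ M.Pairwise (· ≤ ·) ∧
      g = (L.map PresentedGroup.of).prod * ((M.map PresentedGroup.of).prod)⁻¹ := by
  obtain ⟨L, M, rfl⟩ := satisfiesThompsonRels_of.exists_eq_prod_mul_inv_prod
    (by rw [PresentedGroup.closure_range_of]; exact Subgroup.mem_top g)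
  exact ⟨shiftSort L, shiftSort M, pairwise_shiftSort L, pairwise_shiftSort M, by
    rw [satisfiesThompsonRels_of.prod_shiftSort, satisfiesThompsonRels_of.prod_shiftSort]⟩

lemma vB_eq_vWord : vB = vWord lamB := rfl

def vHom : FGrp →* BVhat := PresentedGroup.toGroup satisfiesThompsonRels_lamB.vWord.lift_eq_one

lemma vHom_of (i : ℕ) : vHom (PresentedGroup.of i) = vB i := PresentedGroup.toGroup.of _

abbrev Cantor := Stream' Bool

lemma _root_.Stream'.exists_eq_cons {α : Type*} (s : Stream' α) :
    ∃ a t, s = Stream'.cons a t :=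
  ⟨s.head, s.tail, (Stream'.eta s).symm⟩

def halves : Cantor ≃ Cantor ⊕ Cantor where
  toFun c := if c.head then .inr c.tail else .inl c.tail
  invFun := Sum.elim (Stream'.cons false) (Stream'.cons true)
  left_inv c := by obtain ⟨_ | _, w, rfl⟩ := c.exists_eq_cons <;> rfl
  right_inv := by rintro (w | w) <;> rfl

def onLeftHalf : Equiv.Perm Cantor →* Equiv.Perm Cantor :=
  halves.symm.permCongrHom.toMonoidHom.comp ((Equiv.Perm.sumCongrHom _ _).comp (.inl _ _))

@[simp] lemma onLeftHalf_cons_false (e : Equiv.Perm Cantor) (w : Cantor) :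
    onLeftHalf e (Stream'.cons false w) = Stream'.cons false (e w) := rfl

@[simp] lemma onLeftHalf_cons_true (e : Equiv.Perm Cantor) (w : Cantor) :
    onLeftHalf e (Stream'.cons true w) = Stream'.cons true w := rfl

lemma onLeftHalf_injective : Function.Injective onLeftHalf := fun e f h =>
  Equiv.ext fun w => Stream'.cons_injective_right false <| by
    simpa using congrArg (· (Stream'.cons false w)) h

/-- `x₀` is the reassociation `(00C ⊔ 01C) ⊔ 1C → 0C ⊔ (10C ⊔ 11C)` and `x_{n+1}` acts as `x_n`
on `0C`: the mirror image of the usual convention, since `λ_i` puts strand `i` on the left. -/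
def thompsonGen : ℕ → Equiv.Perm Cantor
  | 0 => halves.trans <| (halves.sumCongr (.refl _)).trans <| (Equiv.sumAssoc _ _ _).trans <|
      ((Equiv.refl _).sumCongr halves.symm).trans halves.symm
  | n + 1 => onLeftHalf (thompsonGen n)

section thompsonGen_apply

variable (w : Cantor)

@[simp] lemma thompsonGen_zero_cons_true :
    thompsonGen 0 (Stream'.cons true w) = Stream'.cons true (Stream'.cons true w) := rfl

@[simp] lemma thompsonGen_zero_cons_false_false :
    thompsonGen 0 (Stream'.cons false (Stream'.cons false w)) = Stream'.cons false w := rfl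

@[simp] lemma thompsonGen_zero_cons_false_true :
    thompsonGen 0 (Stream'.cons false (Stream'.cons true w))
      = Stream'.cons true (Stream'.cons false w) := rfl

@[simp] lemma thompsonGen_succ_cons_true (n : ℕ) :
    thompsonGen (n + 1) (Stream'.cons true w) = Stream'.cons true w := rfl

end thompsonGen_apply

lemma prod_map_succ_thompsonGen (L : List ℕ) :
    ((L.map (· + 1)).map thompsonGen).prod = onLeftHalf (L.map thompsonGen).prod := by
  simp [map_list_prod, Function.comp_def, thompsonGen]

def ones (r : ℕ) : Cantor := fun k => decide (k < r)

lemma ones_succ (r : ℕ) : ones (r + 1) = Stream'.cons true (ones r) := by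
  funext k
  cases k <;> simp [ones, Stream'.cons]

lemma ones_injective : Function.Injective ones := by
  intro a b h
  have ha : ¬ a < b := by simpa [ones] using congrFun h a
  have hb : ¬ b < a := by simpa [ones] using (congrFun h b).symm
  omega

lemma prod_thompsonGen_ones_one {L : List ℕ} (hL : L.Pairwise (· ≤ ·)) :
    (L.map thompsonGen).prod (ones 1) = ones (L.count 0 + 1) := by
  induction L with
  | nil => rfl
  | cons a L ih =>
    rw [List.pairwise_cons] at hL
    rw [List.map_cons, List.prod_cons, Equiv.Perm.mul_apply, ih hL.2]
    cases a with
    | zero => simp [ones_succ]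
    | succ a =>
      have : L.count 0 = 0 := List.count_eq_zero.2 fun h => by have := hL.1 0 h; omega
      simp [this, ones_succ]

lemma exists_eq_zero_cons {L : List ℕ} (hL : L.Pairwise (· ≤ ·)) (h : 0 ∈ L) :
    ∃ L', L = 0 :: L' := by
  obtain _ | ⟨a, L'⟩ := L
  · simp at h
  · obtain rfl | h := List.mem_cons.1 h
    · exact ⟨L', rfl⟩
    · exact ⟨L', by rw [Nat.le_zero.1 ((List.pairwise_cons.1 hL).1 0 h)]⟩

lemma exists_eq_map_succ {L : List ℕ} (h : 0 ∉ L) : ∃ L₀ : List ℕ, L = L₀.map (· + 1) := by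
  refine ⟨L.map (· - 1), ?_⟩
  rw [List.map_map]
  conv_lhs => rw [← List.map_id L]
  refine List.map_congr_left fun a ha => ?_
  have : a ≠ 0 := fun h' => h (h' ▸ ha)
  simp only [id, Function.comp_apply]
  omega

/-- The image of `1 0 0 ⋯` counts the letters `x₀`; once they are cancelled, all letters are
positive and the words act on `0C` only, as the words with every index lowered by one. -/
theorem eq_of_prod_thompsonGen_eq {L M : List ℕ} (hL : L.Pairwise (· ≤ ·))
    (hM : M.Pairwise (· ≤ ·)) (h : (L.map thompsonGen).prod = (M.map thompsonGen).prod) :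
    L = M := by
  have hcount : L.count 0 = M.count 0 := by
    have := congrArg (· (ones 1)) h
    simp only [prod_thompsonGen_ones_one hL, prod_thompsonGen_ones_one hM] at this
    exact Nat.add_right_cancel (ones_injective this)
  have hmem : 0 ∈ L ↔ 0 ∈ M := by simp only [← List.count_pos_iff, hcount]
  by_cases h0 : 0 ∈ L
  · obtain ⟨L', rfl⟩ := exists_eq_zero_cons hL h0
    obtain ⟨M', rfl⟩ := exists_eq_zero_cons hM (hmem.1 h0)
    simp only [List.map_cons, List.prod_cons, mul_right_inj] at h
    rw [eq_of_prod_thompsonGen_eq hL.of_cons hM.of_cons h]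
  · obtain ⟨L₀, rfl⟩ := exists_eq_map_succ h0
    obtain ⟨M₀, rfl⟩ := exists_eq_map_succ (mt hmem.2 h0)
    rw [prod_map_succ_thompsonGen, prod_map_succ_thompsonGen] at h
    by_cases hnil : L₀ = [] ∧ M₀ = []
    · rw [hnil.1, hnil.2]
    · have hL₀ : L₀.Pairwise (· ≤ ·) := by simpa [List.pairwise_map] using hL
      have hM₀ : M₀.Pairwise (· ≤ ·) := by simpa [List.pairwise_map] using hM
      rw [eq_of_prod_thompsonGen_eq hL₀ hM₀ (onLeftHalf_injective h)]
termination_by L.sum + M.sum + L.length + M.length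
decreasing_by
  · subst_vars
    simp only [List.sum_cons, List.length_cons]
    omega
  · subst_vars
    rw [← List.length_eq_zero_iff, ← List.length_eq_zero_iff] at hnil
    simp [List.sum_map_add]
    omega

abbrev Strands := ℕ × Cantor

def mergeStrands (i : ℕ) : Equiv.Perm Strands where
  toFun p := if p.1 < i then p else if p.1 = i then (i, Stream'.cons false p.2)
    else if p.1 = i + 1 then (i, Stream'.cons true p.2) else (p.1 - 1, p.2)
  invFun p := if p.1 < i then p else if p.1 = i then
      (if p.2.head then (i + 1, p.2.tail) else (i, p.2.tail)) else (p.1 + 1, p.2)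
  left_inv := by
    rintro ⟨n, c⟩
    dsimp only
    split_ifs <;> simp_all [Stream'.tail_cons] <;> omega
  right_inv := by
    rintro ⟨n, c⟩
    obtain ⟨b, w, rfl⟩ := c.exists_eq_cons
    dsimp only
    split_ifs <;> simp_all <;> omega

def swapStrands (i : ℕ) : Equiv.Perm Strands :=
  (Equiv.swap i (i + 1)).prodCongr (.refl Cantor)

section pointwise

variable {i n : ℕ} (c : Cantor)

@[simp] lemma mergeStrands_of_lt (h : n < i) : mergeStrands i (n, c) = (n, c) := if_pos h

@[simp] lemma mergeStrands_of_eq (h : n = i) :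
    mergeStrands i (n, c) = (i, Stream'.cons false c) := by
  simp [mergeStrands, h]

@[simp] lemma mergeStrands_of_eq_succ (h : n = i + 1) :
    mergeStrands i (n, c) = (i, Stream'.cons true c) := by
  simp [mergeStrands, h]

@[simp] lemma mergeStrands_of_gt (h : i + 1 < n) : mergeStrands i (n, c) = (n - 1, c) := by
  simp only [mergeStrands, Equiv.coe_fn_mk]
  rw [if_neg (by omega), if_neg (by omega), if_neg (by omega)]

@[simp] lemma swapStrands_of_eq (h : n = i) : swapStrands i (n, c) = (i + 1, c) := by
  simp [swapStrands, h]

@[simp] lemma swapStrands_of_eq_succ (h : n = i + 1) : swapStrands i (n, c) = (i, c) := by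
  simp [swapStrands, h]

@[simp] lemma swapStrands_of_ne (h₁ : n ≠ i) (h₂ : n ≠ i + 1) :
    swapStrands i (n, c) = (n, c) := by
  simp [swapStrands, Equiv.swap_apply_of_ne_of_ne h₁ h₂]

end pointwise

lemma swapStrands_zpow (i : ℕ) {e : ℤ} (he : e = 1 ∨ e = -1) :
    swapStrands i ^ e = swapStrands i := by
  obtain rfl | rfl := he
  · exact zpow_one _
  · rw [zpow_neg_one, inv_eq_iff_mul_eq_one]
    ext1 ⟨n, c⟩
    simp [swapStrands, Equiv.swap_apply_self]

section relations

variable {m n q : ℕ}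

lemma mergeStrands_mul_mergeStrands (h : m < q) :
    mergeStrands q * mergeStrands m = mergeStrands m * mergeStrands (q + 1) := by
  ext1 ⟨n, c⟩
  rcases show n < m ∨ n = m ∨ n = m + 1 ∨ (m + 1 < n ∧ n ≤ q) ∨ n = q + 1 ∨ n = q + 2 ∨
      q + 2 < n by omega with h | h | h | h | h | h | h
  all_goals simp (disch := omega)

lemma swapStrands_mul_swapStrands_comm (h : m + 2 ≤ n ∨ n + 2 ≤ m) :
    swapStrands m * swapStrands n = swapStrands n * swapStrands m := by
  ext1 ⟨k, c⟩
  rcases show k = m ∨ k = m + 1 ∨ k = n ∨ k = n + 1 ∨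
      (k ≠ m ∧ k ≠ m + 1 ∧ k ≠ n ∧ k ≠ n + 1) by omega with h | h | h | h | h
  all_goals simp (disch := omega)

lemma swapStrands_braid :
    swapStrands m * swapStrands (m + 1) * swapStrands m
      = swapStrands (m + 1) * swapStrands m * swapStrands (m + 1) := by
  ext1 ⟨k, c⟩
  rcases show k = m ∨ k = m + 1 ∨ k = m + 2 ∨ (k ≠ m ∧ k ≠ m + 1 ∧ k ≠ m + 2) by omega
    with h | h | h | h
  all_goals simp (disch := omega)

lemma swapStrands_mul_mergeStrands_of_lt (h : m < q) :
    swapStrands q * mergeStrands m = mergeStrands m * swapStrands (q + 1) := by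
  ext1 ⟨n, c⟩
  rcases show n < m ∨ n = m ∨ n = m + 1 ∨ (m + 1 < n ∧ n ≠ q + 1 ∧ n ≠ q + 2) ∨ n = q + 1 ∨
      n = q + 2 by omega with h | h | h | h | h | h
  all_goals simp (disch := omega)

lemma swapStrands_mul_mergeStrands_self :
    swapStrands m * mergeStrands m
      = mergeStrands (m + 1) * swapStrands m * swapStrands (m + 1) := by
  ext1 ⟨n, c⟩
  rcases show n < m ∨ n = m ∨ n = m + 1 ∨ n = m + 2 ∨ m + 2 < n by omega with h | h | h | h | h
  all_goals simp (disch := omega)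

lemma swapStrands_mul_mergeStrands_succ :
    swapStrands m * mergeStrands (m + 1)
      = mergeStrands m * swapStrands (m + 1) * swapStrands m := by
  ext1 ⟨n, c⟩
  rcases show n < m ∨ n = m ∨ n = m + 1 ∨ n = m + 2 ∨ m + 2 < n by omega with h | h | h | h | h
  all_goals simp (disch := omega)

lemma swapStrands_mul_mergeStrands_comm (h : q + 1 < m) :
    swapStrands q * mergeStrands m = mergeStrands m * swapStrands q := by
  ext1 ⟨n, c⟩
  rcases show n = q ∨ n = q + 1 ∨ (n < m ∧ n ≠ q ∧ n ≠ q + 1) ∨ n = m ∨ n = m + 1 ∨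
      m + 1 < n by omega with h | h | h | h | h | h
  all_goals simp (disch := omega)

end relations

lemma bvhatRels_lift_eq_one :
    ∀ r ∈ bvhatRels, FreeGroup.lift (Sum.elim mergeStrands swapStrands) r = 1 := by
  rintro r (⟨m, q, h, rfl⟩ | ⟨m, n, h, rfl⟩ | ⟨m, rfl⟩ | ⟨m, q, e, he, h, rfl⟩ | ⟨m, e, he, rfl⟩ |
      ⟨m, e, he, rfl⟩ | ⟨m, q, e, he, h, rfl⟩) <;>
    simp (disch := assumption) only [lamF, sigF, map_mul, map_inv, map_zpow,
      FreeGroup.lift_apply_of, Sum.elim_inl, Sum.elim_inr, swapStrands_zpow, mul_inv_eq_one]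
  · exact mergeStrands_mul_mergeStrands h
  · exact swapStrands_mul_swapStrands_comm h
  · exact swapStrands_braid
  · exact swapStrands_mul_mergeStrands_of_lt h
  · exact swapStrands_mul_mergeStrands_self
  · exact swapStrands_mul_mergeStrands_succ
  · exact swapStrands_mul_mergeStrands_comm h

def strandAction : BVhat →* Equiv.Perm Strands := PresentedGroup.toGroup bvhatRels_lift_eq_one

lemma strandAction_lamB (i : ℕ) : strandAction (lamB i) = mergeStrands i :=
  PresentedGroup.toGroup.of _

def onStrandZero : Equiv.Perm Cantor →* Equiv.Perm Strands where
  toFun := Equiv.Perm.prodExtendRight 0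
  map_one' := by ext ⟨_ | n, c⟩ <;> simp [Equiv.Perm.prodExtendRight]
  map_mul' e f := by ext ⟨_ | n, c⟩ <;> simp [Equiv.Perm.prodExtendRight]

@[simp] lemma onStrandZero_apply_of_eq (e : Equiv.Perm Cantor) {n : ℕ} (hn : n = 0)
    (c : Cantor) : onStrandZero e (n, c) = (0, e c) := by
  subst hn
  exact Equiv.Perm.prodExtendRight_apply_eq _ _ _

@[simp] lemma onStrandZero_apply_of_ne (e : Equiv.Perm Cantor) {n : ℕ} (hn : n ≠ 0)
    (c : Cantor) : onStrandZero e (n, c) = (n, c) :=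
  Equiv.Perm.prodExtendRight_apply_ne _ hn _

lemma onStrandZero_injective : Function.Injective onStrandZero := fun e f h =>
  Equiv.ext fun c => by simpa using congrArg (· (0, c)) h

lemma onStrandZero_thompsonGen_zero_mul :
    onStrandZero (thompsonGen 0) * mergeStrands 0 * mergeStrands 0
      = mergeStrands 0 * mergeStrands 1 := by
  ext1 ⟨n, c⟩
  rcases show n = 0 ∨ n = 1 ∨ n = 2 ∨ 2 < n by omega with h | h | h | h
  all_goals simp (disch := omega)

lemma onStrandZero_onLeftHalf_mul (e : Equiv.Perm Cantor) :
    onStrandZero (onLeftHalf e) * mergeStrands 0 = mergeStrands 0 * onStrandZero e := by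
  ext1 ⟨n, c⟩
  rcases show n = 0 ∨ n = 1 ∨ 1 < n by omega with h | h | h
  all_goals simp (disch := omega)

lemma strandAction_vB (n : ℕ) : strandAction (vB n) = onStrandZero (thompsonGen n) := by
  rw [vB_eq_vWord]
  induction n with
  | zero =>
    have h := congrArg strandAction (vWord_zero_mul lamB)
    rw [map_mul, map_mul, map_mul, strandAction_lamB, strandAction_lamB,
      ← onStrandZero_thompsonGen_zero_mul] at h
    exact mul_right_cancel (mul_right_cancel h)
  | succ n ih =>
    rw [vWord_succ, map_mul, map_mul, map_inv, strandAction_lamB, ih, thompsonGen,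
      mul_inv_eq_iff_eq_mul, onStrandZero_onLeftHalf_mul]

lemma strandAction_vHom_prod (L : List ℕ) :
    strandAction (vHom (L.map PresentedGroup.of).prod) = onStrandZero (L.map thompsonGen).prod := by
  simp [map_list_prod, Function.comp_def, vHom_of, strandAction_vB]

lemma vHom_injective : Function.Injective vHom := by
  rw [injective_iff_map_eq_one]
  intro g hg
  obtain ⟨L, M, hL, hM, rfl⟩ := FGrp.exists_eq_sorted_mul_inv_sorted g
  rw [map_mul, map_inv, mul_inv_eq_one] at hg
  have h := congrArg strandAction hg
  rw [strandAction_vHom_prod, strandAction_vHom_prod] at h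
  rw [eq_of_prod_thompsonGen_eq hL hM (onStrandZero_injective h), mul_inv_cancel]

/-- Lemma: the homomorphism `F → BV̂` determined by `λ_i ↦ v_i` is injective,
hence gives an isomorphism of `F` onto the subgroup of `BV̂` generated by
`{v_i : i ∈ ℕ}`. -/
theorem F_embeds_in_BVhat :
    ∃ φ : FGrp →* BVhat,
      (∀ i : ℕ, φ (PresentedGroup.of i) = vB i) ∧
      Function.Injective φ ∧
      φ.range = Subgroup.closure {x : BVhat | ∃ i, x = vB i} := by
  refine ⟨vHom, vHom_of, vHom_injective, ?_⟩
  rw [MonoidHom.range_eq_map, ← PresentedGroup.closure_range_of, MonoidHom.map_closure,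
    ← Set.range_comp]
  congr 1
  ext
  simp [vHom_of, eq_comm]

end BrinStmt5
end

section
/- Let ψ : FreeGroup(ℕ) → G_BV be the homomorphism sending the free generator indexed by i to π_i, let P denote the subgroup of G_BV generated by {π_i : i ∈ ℕ}, and let φ : FreeGroup(ℕ) → Perm(ℕ) be the homomorphism sending the free generator indexed by i to the transposition swapping i and i+1. Then for every w ∈ FreeGroup(ℕ) and every m ∈ ℕ: (1) there exists w' ∈ P with ψ(w)·v_m = v_{φ(w)(m)}·w'; (2) there exists w'' ∈ P with v_m^{-1}·ψ(w) = w''·v_{φ(w)^{-1}(m)}^{-1}. Moreover, if w lies in the subgroup of FreeGroup(ℕ) generated by the free generators indexed by 0, 1, …, k, then w' and w'' above can be taken in the subgroup of G_BV generated by {π_0, π_1, …, π_{k+1}}, and φ(w)(m) = m for m > k+1 while φ(w)(m) ≤ k+1 for m ≤ k+1. -/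
namespace BrinStmt6

/-- The free-group generators for the presentation of `G_BV`:
`Sum.inl n` is `v_n`, `Sum.inr (Sum.inl n)` is `π_n`, and
`Sum.inr (Sum.inr n)` is `π̄_n`. -/
def vF (n : ℕ) : FreeGroup (ℕ ⊕ ℕ ⊕ ℕ) := FreeGroup.of (Sum.inl n)
def piF (n : ℕ) : FreeGroup (ℕ ⊕ ℕ ⊕ ℕ) := FreeGroup.of (Sum.inr (Sum.inl n))
def opiF (n : ℕ) : FreeGroup (ℕ ⊕ ℕ ⊕ ℕ) := FreeGroup.of (Sum.inr (Sum.inr n))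

/-- The relators (R1)–(R10) of the presentation of the group `G_BV`. -/
def gbvRels : Set (FreeGroup (ℕ ⊕ ℕ ⊕ ℕ)) :=
  { r | (∃ m q : ℕ, m < q ∧ r = vF q * vF m * (vF m * vF (q+1))⁻¹) ∨
        (∃ m q : ℕ, m < q ∧ r = piF q * vF m * (vF m * piF (q+1))⁻¹) ∨
        (∃ (m : ℕ) (e : ℤ), (e = 1 ∨ e = -1) ∧
            r = (piF m) ^ e * vF m *
              (vF (m+1) * (piF m) ^ e * (piF (m+1)) ^ e)⁻¹) ∨
        (∃ m q : ℕ, q + 1 < m ∧ r = piF q * vF m * (vF m * piF q)⁻¹) ∨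
        (∃ m q : ℕ, m < q ∧ r = opiF q * vF m * (vF m * opiF (q+1))⁻¹) ∨
        (∃ (m : ℕ) (e : ℤ), (e = 1 ∨ e = -1) ∧
            r = (opiF m) ^ e * vF m * ((piF m) ^ e * (opiF (m+1)) ^ e)⁻¹) ∨
        (∃ m q : ℕ, (m + 2 ≤ q ∨ q + 2 ≤ m) ∧
            r = piF q * piF m * (piF m * piF q)⁻¹) ∨
        (∃ m : ℕ, r = piF m * piF (m+1) * piF m *
            (piF (m+1) * piF m * piF (m+1))⁻¹) ∨
        (∃ m q : ℕ, m + 2 ≤ q ∧ r = opiF q * piF m * (piF m * opiF q)⁻¹) ∨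
        (∃ m : ℕ, r = piF m * opiF (m+1) * piF m *
            (opiF (m+1) * piF m * opiF (m+1))⁻¹) }

/-- The group `G_BV`, presented by generators `v_n, π_n, π̄_n` and relations (R1)–(R10). -/
abbrev GBV := PresentedGroup gbvRels

/-- The generator `v_n` of `G_BV`. -/
def vG (n : ℕ) : GBV := PresentedGroup.of (Sum.inl n)
/-- The generator `π_n` of `G_BV`. -/
def piG (n : ℕ) : GBV := PresentedGroup.of (Sum.inr (Sum.inl n))
/-- The generator `π̄_n` of `G_BV`. -/
def opiG (n : ℕ) : GBV := PresentedGroup.of (Sum.inr (Sum.inr n))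

/-- The homomorphism `ψ : FreeGroup ℕ → G_BV` sending the `i`-th free generator to `π_i`. -/
def ψ : FreeGroup ℕ →* GBV := FreeGroup.lift piG

/-- The subgroup `P` of `G_BV` generated by `{π_i : i ∈ ℕ}`. -/
def P : Subgroup GBV := Subgroup.closure {x : GBV | ∃ i, x = piG i}

/-- The homomorphism `φ : FreeGroup ℕ → Perm ℕ` sending the `i`-th free generator
to the transposition `(i, i+1)`. -/
def φ : FreeGroup ℕ →* Equiv.Perm ℕ := FreeGroup.lift fun i => Equiv.swap i (i+1)


/-! Each generator `π_i` moves past `v_m` by one of (R2), (R3) with `ε = ±1`, or (R4): it turns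
`v_m` into `v_{(i i+1) m}` and leaves behind a word in `π_i, π_{i+1}`. The words of the free group
for which such an exchange is possible form a subgroup, so it contains every word in the
generators involved. -/

open Subgroup

theorem _root_.Equiv.Perm.apply_mem_of_forall_notMem_apply_eq {α : Type*} {σ : Equiv.Perm α}
    {s : Set α} (h : ∀ x ∉ s, σ x = x) {x : α} (hx : x ∈ s) : σ x ∈ s := by
  by_contra hσx
  exact hσx (by rwa [σ.injective (h _ hσx)])

lemma piG_mul_vG_of_lt {m q : ℕ} (h : m < q) : piG q * vG m = vG m * piG (q + 1) :=
  PresentedGroup.mk_eq_mk_of_mul_inv_mem (Or.inr (Or.inl ⟨m, q, h, rfl⟩))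

lemma piG_zpow_mul_vG_self (m : ℕ) {e : ℤ} (he : e = 1 ∨ e = -1) :
    piG m ^ e * vG m = vG (m + 1) * piG m ^ e * piG (m + 1) ^ e := by
  have h := PresentedGroup.mk_eq_mk_of_mul_inv_mem (rels := gbvRels)
    (x := piF m ^ e * vF m) (y := vF (m + 1) * piF m ^ e * piF (m + 1) ^ e)
    (Or.inr (Or.inr (Or.inl ⟨m, e, he, rfl⟩)))
  simp only [map_mul, map_zpow] at h
  exact h

lemma piG_mul_vG_of_succ_lt {m q : ℕ} (h : q + 1 < m) : piG q * vG m = vG m * piG q :=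
  PresentedGroup.mk_eq_mk_of_mul_inv_mem (Or.inr (Or.inr (Or.inr (Or.inl ⟨m, q, h, rfl⟩))))

lemma piG_mul_vG_self (m : ℕ) : piG m * vG m = vG (m + 1) * (piG m * piG (m + 1)) := by
  simpa [mul_assoc] using piG_zpow_mul_vG_self m (Or.inl rfl)

lemma piG_mul_vG_succ_self (m : ℕ) : piG m * vG (m + 1) = vG m * (piG (m + 1) * piG m) := by
  have h := piG_zpow_mul_vG_self m (Or.inr rfl)
  simp only [zpow_neg, zpow_one] at h
  rw [inv_mul_eq_iff_eq_mul] at h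
  rw [h]
  group

lemma piG_mul_vG (i m : ℕ) {S : Subgroup GBV} (hS : ∀ j ≤ i + 1, piG j ∈ S) :
    ∃ c ∈ S, piG i * vG m = vG (Equiv.swap i (i + 1) m) * c := by
  rcases lt_trichotomy m i with h | rfl | h
  · rw [Equiv.swap_apply_of_ne_of_ne h.ne (by omega)]
    exact ⟨piG (i + 1), hS _ le_rfl, piG_mul_vG_of_lt h⟩
  · rw [Equiv.swap_apply_left]
    exact ⟨_, S.mul_mem (hS _ (by omega)) (hS _ le_rfl), piG_mul_vG_self m⟩
  · obtain rfl | h' := (Nat.succ_le_of_lt h).eq_or_lt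
    · rw [Equiv.swap_apply_right]
      exact ⟨_, S.mul_mem (hS _ le_rfl) (hS _ (by omega)), piG_mul_vG_succ_self i⟩
    · rw [Equiv.swap_apply_of_ne_of_ne h.ne' h'.ne']
      exact ⟨piG i, hS _ (by omega), piG_mul_vG_of_succ_lt h'⟩

def exchangeSubgroup (S : Subgroup GBV) : Subgroup (FreeGroup ℕ) where
  carrier := {w | ∀ m, ∃ c ∈ S, ψ w * vG m = vG (φ w m) * c}
  one_mem' m := ⟨1, S.one_mem, by simp⟩
  mul_mem' {x y} hx hy m := by
    obtain ⟨cy, hcy, hy⟩ := hy m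
    obtain ⟨cx, hcx, hx⟩ := hx (φ y m)
    refine ⟨cx * cy, S.mul_mem hcx hcy, ?_⟩
    rw [map_mul, map_mul, Equiv.Perm.mul_apply, mul_assoc, hy, ← mul_assoc, hx, mul_assoc]
  inv_mem' {x} hx m := by
    obtain ⟨c, hc, h⟩ := hx ((φ x)⁻¹ m)
    rw [← Equiv.Perm.mul_apply, mul_inv_cancel, Equiv.Perm.one_apply] at h
    refine ⟨c⁻¹, S.inv_mem hc, ?_⟩
    rw [map_inv, map_inv, inv_mul_eq_iff_eq_mul, ← mul_assoc, eq_mul_inv_iff_mul_eq, h]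

lemma of_mem_exchangeSubgroup {S : Subgroup GBV} {i : ℕ} (hS : ∀ j ≤ i + 1, piG j ∈ S) :
    FreeGroup.of i ∈ exchangeSubgroup S := fun m => by
  simpa [ψ, φ] using piG_mul_vG i m hS

lemma exists_inv_vG_mul_eq {S : Subgroup GBV} {w : FreeGroup ℕ}
    (hw : w ∈ exchangeSubgroup S) (m : ℕ) :
    ∃ c ∈ S, (vG m)⁻¹ * ψ w = c * (vG ((φ w)⁻¹ m))⁻¹ := by
  obtain ⟨c, hc, h⟩ := hw ((φ w)⁻¹ m)
  rw [← Equiv.Perm.mul_apply, mul_inv_cancel, Equiv.Perm.one_apply] at h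
  exact ⟨c, hc, by rw [inv_mul_eq_iff_eq_mul, ← mul_assoc, eq_mul_inv_iff_mul_eq, h]⟩

lemma exchangeSubgroup_P : exchangeSubgroup P = ⊤ := by
  rw [eq_top_iff, ← FreeGroup.closure_range_of, closure_le]
  rintro _ ⟨i, rfl⟩
  exact of_mem_exchangeSubgroup fun j _ => subset_closure ⟨j, rfl⟩

lemma closure_of_le_exchangeSubgroup (k : ℕ) :
    closure (FreeGroup.of '' {i : ℕ | i ≤ k}) ≤
      exchangeSubgroup (closure {x : GBV | ∃ i, i ≤ k + 1 ∧ x = piG i}) := by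
  rw [closure_le]
  rintro _ ⟨i, hi : i ≤ k, rfl⟩
  exact of_mem_exchangeSubgroup fun j hj => subset_closure ⟨j, by omega, rfl⟩

lemma closure_of_le_comap_fixingSubgroup (k : ℕ) :
    closure (FreeGroup.of '' {i : ℕ | i ≤ k}) ≤
      (fixingSubgroup (Equiv.Perm ℕ) (Set.Ioi (k + 1))).comap φ := by
  rw [closure_le]
  rintro _ ⟨i, hi : i ≤ k, rfl⟩ ⟨m, hm : k + 1 < m⟩
  simp [φ, Equiv.Perm.smul_def,
    Equiv.swap_apply_of_ne_of_ne (show m ≠ i by omega) (show m ≠ i + 1 by omega)]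

/-- Lemma: for every word `w` and every `m`: (1) `ψ(w)·v_m = v_{φ(w)(m)}·w'` for some
`w' ∈ P`; (2) `v_m⁻¹·ψ(w) = w''·v_{φ(w)⁻¹(m)}⁻¹` for some `w'' ∈ P`.  Moreover if `w`
lies in the subgroup generated by the free generators indexed by `0, …, k`, then `w'`
and `w''` can be taken in the subgroup generated by `{π_0, …, π_{k+1}}`, and
`φ(w)(m) = m` for `m > k+1` while `φ(w)(m) ≤ k+1` for `m ≤ k+1`. -/
theorem pi_v_interaction (w : FreeGroup ℕ) (m : ℕ) :
    (∃ w' ∈ P, ψ w * vG m = vG (φ w m) * w') ∧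
    (∃ w'' ∈ P, (vG m)⁻¹ * ψ w = w'' * (vG ((φ w)⁻¹ m))⁻¹) ∧
    (∀ k : ℕ, w ∈ Subgroup.closure (FreeGroup.of '' {i : ℕ | i ≤ k}) →
      (∃ w' ∈ Subgroup.closure {x : GBV | ∃ i, i ≤ k + 1 ∧ x = piG i},
          ψ w * vG m = vG (φ w m) * w') ∧
      (∃ w'' ∈ Subgroup.closure {x : GBV | ∃ i, i ≤ k + 1 ∧ x = piG i},
          (vG m)⁻¹ * ψ w = w'' * (vG ((φ w)⁻¹ m))⁻¹) ∧
      (k + 1 < m → φ w m = m) ∧ (m ≤ k + 1 → φ w m ≤ k + 1)) := by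
  have hP : w ∈ exchangeSubgroup P := exchangeSubgroup_P ▸ mem_top w
  refine ⟨hP m, exists_inv_vG_mul_eq hP m, fun k hw => ?_⟩
  have hS := closure_of_le_exchangeSubgroup k hw
  have hfix : ∀ n, k + 1 < n → φ w n = n :=
    (mem_fixingSubgroup_iff _).1 (closure_of_le_comap_fixingSubgroup k hw)
  refine ⟨hS m, exists_inv_vG_mul_eq hS m, hfix m, fun hm => ?_⟩
  exact Equiv.Perm.apply_mem_of_forall_notMem_apply_eq (s := Set.Iic (k + 1))
    (fun n hn => hfix n (not_le.1 hn)) hm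

end BrinStmt6
end

section
/- In G_BV, for all m ≥ 0, all k > 0, and ε = ±1, the following identities hold: π̄_m^ε v_{m+k} = (v_m v_{m+1} ⋯ v_{m+k-2} v_{m+k-1}^2) π̄_{m+k+1}^ε (π_{m+k}^ε π_{m+k-1}^ε ⋯ π_m^ε), and v_{m+k}^{-1} π̄_m^ε = (π_m^ε π_{m+1}^ε ⋯ π_{m+k}^ε) π̄_{m+k+1}^ε (v_m v_{m+1} ⋯ v_{m+k-2} v_{m+k-1}^2)^{-1}. -/
namespace BrinStmt7

/-- The free-group generators for the presentation of `G_BV`: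
`Sum.inl n` is `v_n`, `Sum.inr (Sum.inl n)` is `π_n`, and
`Sum.inr (Sum.inr n)` is `π̄_n`. -/
def vF (n : ℕ) : FreeGroup (ℕ ⊕ ℕ ⊕ ℕ) := FreeGroup.of (Sum.inl n)
def piF (n : ℕ) : FreeGroup (ℕ ⊕ ℕ ⊕ ℕ) := FreeGroup.of (Sum.inr (Sum.inl n))
def opiF (n : ℕ) : FreeGroup (ℕ ⊕ ℕ ⊕ ℕ) := FreeGroup.of (Sum.inr (Sum.inr n))

/-- The relators (R1)–(R10) of the presentation of the group `G_BV`. -/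
def gbvRels : Set (FreeGroup (ℕ ⊕ ℕ ⊕ ℕ)) :=
  { r | (∃ m q : ℕ, m < q ∧ r = vF q * vF m * (vF m * vF (q+1))⁻¹) ∨
        (∃ m q : ℕ, m < q ∧ r = piF q * vF m * (vF m * piF (q+1))⁻¹) ∨
        (∃ (m : ℕ) (e : ℤ), (e = 1 ∨ e = -1) ∧
            r = (piF m) ^ e * vF m *
              (vF (m+1) * (piF m) ^ e * (piF (m+1)) ^ e)⁻¹) ∨
        (∃ m q : ℕ, q + 1 < m ∧ r = piF q * vF m * (vF m * piF q)⁻¹) ∨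
        (∃ m q : ℕ, m < q ∧ r = opiF q * vF m * (vF m * opiF (q+1))⁻¹) ∨
        (∃ (m : ℕ) (e : ℤ), (e = 1 ∨ e = -1) ∧
            r = (opiF m) ^ e * vF m * ((piF m) ^ e * (opiF (m+1)) ^ e)⁻¹) ∨
        (∃ m q : ℕ, (m + 2 ≤ q ∨ q + 2 ≤ m) ∧
            r = piF q * piF m * (piF m * piF q)⁻¹) ∨
        (∃ m : ℕ, r = piF m * piF (m+1) * piF m *
            (piF (m+1) * piF m * piF (m+1))⁻¹) ∨
        (∃ m q : ℕ, m + 2 ≤ q ∧ r = opiF q * piF m * (piF m * opiF q)⁻¹) ∨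
        (∃ m : ℕ, r = piF m * opiF (m+1) * piF m *
            (opiF (m+1) * piF m * opiF (m+1))⁻¹) }

/-- The group `G_BV`, presented by generators `v_n, π_n, π̄_n` and relations (R1)–(R10). -/
abbrev GBV := PresentedGroup gbvRels

/-- The generator `v_n` of `G_BV`. -/
def vG (n : ℕ) : GBV := PresentedGroup.of (Sum.inl n)
/-- The generator `π_n` of `G_BV`. -/
def piG (n : ℕ) : GBV := PresentedGroup.of (Sum.inr (Sum.inl n))
/-- The generator `π̄_n` of `G_BV`. -/
def opiG (n : ℕ) : GBV := PresentedGroup.of (Sum.inr (Sum.inr n))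

section Helpers

/-- From `a * v = v * b` conclude `a ^ e * v = v * b ^ e`. -/
lemma conj_zpow_rel {G : Type*} [Group G] {a v b : G} (h : a * v = v * b) (e : ℤ) :
    a ^ e * v = v * b ^ e := by
  have hb : b = v⁻¹ * (a * v) := by rw [h, inv_mul_cancel_left]
  have key : (v⁻¹ * (a * v)) ^ e = v⁻¹ * (a ^ e * v) := by
    simpa [MulAut.conj_apply, mul_assoc] using (map_zpow (MulAut.conj v⁻¹) a e).symm
  rw [hb, key]
  group

end Helpers

def mkH : FreeGroup (ℕ ⊕ ℕ ⊕ ℕ) →* GBV := QuotientGroup.mk' _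

lemma mkH_rel {r : FreeGroup (ℕ ⊕ ℕ ⊕ ℕ)} (h : r ∈ gbvRels) : mkH r = 1 :=
  (QuotientGroup.eq_one_iff r).mpr (Subgroup.subset_normalClosure h)

lemma mk_vF (n : ℕ) : mkH (vF n) = vG n := rfl
lemma mk_piF (n : ℕ) : mkH (piF n) = piG n := rfl
lemma mk_opiF (n : ℕ) : mkH (opiF n) = opiG n := rfl

/-! ### The defining relations, in `GBV` -/

lemma hr1 {m q : ℕ} (h : m < q) : vG q * vG m = vG m * vG (q+1) := by
  have h1 := mkH_rel (Or.inl ⟨m, q, h, rfl⟩)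
  simp only [map_mul, map_inv, mk_vF] at h1
  exact mul_inv_eq_one.mp h1

lemma hr2 {m q : ℕ} (h : m < q) (e : ℤ) : piG q ^ e * vG m = vG m * piG (q+1) ^ e := by
  have h1 := mkH_rel (Or.inr (Or.inl ⟨m, q, h, rfl⟩))
  simp only [map_mul, map_inv, mk_vF, mk_piF] at h1
  exact conj_zpow_rel (mul_inv_eq_one.mp h1) e

lemma hr3 (m : ℕ) (e : ℤ) (he : e = 1 ∨ e = -1) :
    piG m ^ e * vG m = vG (m+1) * piG m ^ e * piG (m+1) ^ e := by
  have h1 := mkH_rel (Or.inr (Or.inr (Or.inl ⟨m, e, he, rfl⟩)))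
  simp only [map_mul, map_inv, map_zpow, mk_vF, mk_piF] at h1
  exact mul_inv_eq_one.mp h1

lemma hr4 {m q : ℕ} (h : q + 1 < m) (e : ℤ) : Commute (vG m) (piG q ^ e) := by
  have h1 := mkH_rel (Or.inr (Or.inr (Or.inr (Or.inl ⟨m, q, h, rfl⟩))))
  simp only [map_mul, map_inv, mk_vF, mk_piF] at h1
  have hc : Commute (piG q) (vG m) := mul_inv_eq_one.mp h1
  exact (hc.zpow_left e).symm

lemma hr5 {m q : ℕ} (h : m < q) (e : ℤ) : opiG q ^ e * vG m = vG m * opiG (q+1) ^ e := by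
  have h1 := mkH_rel (Or.inr (Or.inr (Or.inr (Or.inr (Or.inl ⟨m, q, h, rfl⟩)))))
  simp only [map_mul, map_inv, mk_vF, mk_opiF] at h1
  exact conj_zpow_rel (mul_inv_eq_one.mp h1) e

lemma hr6 (m : ℕ) (e : ℤ) (he : e = 1 ∨ e = -1) :
    opiG m ^ e * vG m = piG m ^ e * opiG (m+1) ^ e := by
  have h1 := mkH_rel (Or.inr (Or.inr (Or.inr (Or.inr (Or.inr (Or.inl ⟨m, e, he, rfl⟩))))))
  simp only [map_mul, map_inv, map_zpow, mk_vF, mk_piF, mk_opiF] at h1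
  exact mul_inv_eq_one.mp h1

/-! ### Derived relations -/

lemma neg_pm {e : ℤ} (he : e = 1 ∨ e = -1) : -e = 1 ∨ -e = -1 := by
  rcases he with rfl | rfl
  · right; rfl
  · left; rfl

/-- `π_p^e v_{p+1} = v_p π_{p+1}^e π_p^e`. -/
lemma hC (p : ℕ) (e : ℤ) (he : e = 1 ∨ e = -1) :
    piG p ^ e * vG (p+1) = vG p * piG (p+1) ^ e * piG p ^ e := by
  have h3 := hr3 p (-e) (neg_pm he)
  simp only [zpow_neg] at h3
  calc piG p ^ e * vG (p+1)
      = piG p ^ e * (vG (p+1) * (piG p ^ e)⁻¹ * (piG (p+1) ^ e)⁻¹) * (piG (p+1) ^ e * piG p ^ e) := by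
        group
    _ = piG p ^ e * ((piG p ^ e)⁻¹ * vG p) * (piG (p+1) ^ e * piG p ^ e) := by rw [← h3]
    _ = vG p * piG (p+1) ^ e * piG p ^ e := by group

/-- `π̄_m^e π_m^{-e} = v_m π̄_{m+1}^e`. -/
lemma hK (m : ℕ) (e : ℤ) (he : e = 1 ∨ e = -1) :
    opiG m ^ e * (piG m ^ e)⁻¹ = vG m * opiG (m+1) ^ e := by
  have h6 := hr6 m (-e) (neg_pm he)
  simp only [zpow_neg] at h6
  calc opiG m ^ e * (piG m ^ e)⁻¹
      = opiG m ^ e * ((piG m ^ e)⁻¹ * (opiG (m+1) ^ e)⁻¹) * opiG (m+1) ^ e := by group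
    _ = opiG m ^ e * ((opiG m ^ e)⁻¹ * vG m) * opiG (m+1) ^ e := by rw [← h6]
    _ = vG m * opiG (m+1) ^ e := by group

/-- Base case: `π̄_m^e v_{m+1} = v_m v_m π̄_{m+2}^e π_{m+1}^e π_m^e`. -/
lemma hA1 (m : ℕ) (e : ℤ) (he : e = 1 ∨ e = -1) :
    opiG m ^ e * vG (m+1) =
      vG m * vG m * opiG (m+2) ^ e * (piG (m+1) ^ e * piG m ^ e) := by
  calc opiG m ^ e * vG (m+1)
      = opiG m ^ e * (piG m ^ e)⁻¹ * (piG m ^ e * vG (m+1)) := by group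
    _ = opiG m ^ e * (piG m ^ e)⁻¹ * (vG m * piG (m+1) ^ e * piG m ^ e) := by rw [hC m e he]
    _ = (opiG m ^ e * (piG m ^ e)⁻¹) * vG m * (piG (m+1) ^ e * piG m ^ e) := by group
    _ = vG m * opiG (m+1) ^ e * vG m * (piG (m+1) ^ e * piG m ^ e) := by rw [hK m e he]
    _ = vG m * (opiG (m+1) ^ e * vG m) * (piG (m+1) ^ e * piG m ^ e) := by group
    _ = vG m * (vG m * opiG (m+2) ^ e) * (piG (m+1) ^ e * piG m ^ e) := by
        rw [hr5 (Nat.lt_succ_self m) e]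
    _ = vG m * vG m * opiG (m+2) ^ e * (piG (m+1) ^ e * piG m ^ e) := by group

/-! ### Products -/

def Vp (m k : ℕ) : GBV := ((List.range k).map fun j => vG (m + j)).prod
def Pd (e : ℤ) (m k : ℕ) : GBV := ((List.range (k+1)).map fun j => piG (m + k - j) ^ e).prod
def Pa (e : ℤ) (m k : ℕ) : GBV := ((List.range k).map fun j => piG (m + j) ^ e).prod

lemma Vp_zero (m : ℕ) : Vp m 0 = 1 := rfl
lemma Pa_zero (e : ℤ) (m : ℕ) : Pa e m 0 = 1 := rfl

lemma Vp_succ (m k : ℕ) : Vp m (k+1) = Vp m k * vG (m + k) := by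
  rw [Vp, Vp, List.range_succ, List.map_append, List.prod_append]
  simp

lemma Pa_succ (e : ℤ) (m k : ℕ) : Pa e m (k+1) = Pa e m k * piG (m + k) ^ e := by
  rw [Pa, Pa, List.range_succ, List.map_append, List.prod_append]
  simp

lemma Pd_zero (e : ℤ) (m : ℕ) : Pd e m 0 = piG m ^ e := by
  simp [Pd, List.range_succ]

lemma Pd_succ (e : ℤ) (m k : ℕ) : Pd e m (k+1) = piG (m + k + 1) ^ e * Pd e m k := by
  rw [Pd, Pd, List.range_succ_eq_map, List.map_cons, List.prod_cons, List.map_map]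
  have hfun : ((fun j => piG (m + (k+1) - j) ^ e) ∘ Nat.succ) =
      (fun j => piG (m + k - j) ^ e) := by
    funext j
    simp only [Function.comp_apply]
    congr 2
    omega
  rw [hfun, show m + (k+1) - 0 = m + k + 1 from by omega]

lemma comm_v_Pd {e : ℤ} {m k t : ℕ} (h : m + k + 1 < t) : Commute (vG t) (Pd e m k) := by
  apply Commute.list_prod_right
  intro x hx
  simp only [List.mem_map, List.mem_range] at hx
  obtain ⟨j, hj, rfl⟩ := hx
  exact hr4 (by omega) e

lemma comm_v_Pa {e : ℤ} {m k t : ℕ} (h : m + k < t) : Commute (vG t) (Pa e m k) := by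
  apply Commute.list_prod_right
  intro x hx
  simp only [List.mem_map, List.mem_range] at hx
  obtain ⟨j, hj, rfl⟩ := hx
  exact hr4 (by omega) e

/-! ### Lemma D: moving `v_{m+k}` through the descending product -/

lemma lemD (e : ℤ) (he : e = 1 ∨ e = -1) (m k' : ℕ) :
    Pd e m (k'+1) * vG (m + k' + 1) =
      vG (m + k') * (piG (m + k' + 2) ^ e * Pd e m (k'+1)) := by
  induction k' with
  | zero =>
    show Pd e m 1 * vG (m + 1) = vG m * (piG (m + 2) ^ e * Pd e m 1)
    have h1 : Pd e m 1 = piG (m + 1) ^ e * piG m ^ e := by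
      rw [show Pd e m 1 = piG (m + 0 + 1) ^ e * Pd e m 0 from Pd_succ e m 0, Pd_zero]
    rw [h1]
    calc piG (m + 1) ^ e * piG m ^ e * vG (m + 1)
        = piG (m + 1) ^ e * (piG m ^ e * vG (m + 1)) := by group
      _ = piG (m + 1) ^ e * (vG m * piG (m + 1) ^ e * piG m ^ e) := by rw [hC m e he]
      _ = (piG (m + 1) ^ e * vG m) * (piG (m + 1) ^ e * piG m ^ e) := by group
      _ = vG m * piG (m + 2) ^ e * (piG (m + 1) ^ e * piG m ^ e) := by
          rw [hr2 (Nat.lt_succ_self m) e]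
      _ = vG m * (piG (m + 2) ^ e * (piG (m + 1) ^ e * piG m ^ e)) := by group
  | succ j _ =>
    show Pd e m (j+2) * vG (m + j + 2) = vG (m + j + 1) * (piG (m + j + 3) ^ e * Pd e m (j+2))
    have hsplit : Pd e m (j+2) = piG (m + j + 2) ^ e * (piG (m + j + 1) ^ e * Pd e m j) := by
      have h2 : Pd e m (j+2) = piG (m + j + 2) ^ e * Pd e m (j+1) := Pd_succ e m (j+1)
      rw [h2, Pd_succ e m j]
    have hcomm : Pd e m j * vG (m + j + 2) = vG (m + j + 2) * Pd e m j :=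
      (comm_v_Pd (by omega)).symm.eq
    rw [hsplit]
    calc piG (m + j + 2) ^ e * (piG (m + j + 1) ^ e * Pd e m j) * vG (m + j + 2)
        = piG (m + j + 2) ^ e * piG (m + j + 1) ^ e * (Pd e m j * vG (m + j + 2)) := by group
      _ = piG (m + j + 2) ^ e * piG (m + j + 1) ^ e * (vG (m + j + 2) * Pd e m j) := by
          rw [hcomm]
      _ = piG (m + j + 2) ^ e * (piG (m + j + 1) ^ e * vG (m + j + 2)) * Pd e m j := by group
      _ = piG (m + j + 2) ^ e * (vG (m + j + 1) * piG (m + j + 2) ^ e * piG (m + j + 1) ^ e) *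
            Pd e m j := by rw [hC (m + j + 1) e he]
      _ = (piG (m + j + 2) ^ e * vG (m + j + 1)) *
            (piG (m + j + 2) ^ e * (piG (m + j + 1) ^ e * Pd e m j)) := by group
      _ = (vG (m + j + 1) * piG (m + j + 3) ^ e) *
            (piG (m + j + 2) ^ e * (piG (m + j + 1) ^ e * Pd e m j)) := by
          rw [hr2 (by omega : m + j + 1 < m + j + 2) e]
      _ = vG (m + j + 1) * (piG (m + j + 3) ^ e *
            (piG (m + j + 2) ^ e * (piG (m + j + 1) ^ e * Pd e m j))) := by group

/-! ### Main lemma A -/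

lemma lemA (e : ℤ) (he : e = 1 ∨ e = -1) (m k' : ℕ) :
    opiG m ^ e * vG (m + k' + 1) =
      (Vp m (k'+1) * vG (m + k')) * opiG (m + k' + 2) ^ e * Pd e m (k'+1) := by
  induction k' with
  | zero =>
    show opiG m ^ e * vG (m + 1) = (Vp m 1 * vG m) * opiG (m + 2) ^ e * Pd e m 1
    have h1 : Vp m 1 = vG m := by
      simp [Vp, List.range_succ]
    have h2 : Pd e m 1 = piG (m + 1) ^ e * piG m ^ e := by
      rw [show Pd e m 1 = piG (m + 0 + 1) ^ e * Pd e m 0 from Pd_succ e m 0, Pd_zero]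
    rw [h1, h2]
    exact hA1 m e he
  | succ j ih =>
    show opiG m ^ e * vG (m + j + 2) =
      (Vp m (j+2) * vG (m + j + 1)) * opiG (m + j + 3) ^ e * Pd e m (j+2)
    have hv1 : (vG (m + j + 1))⁻¹ * vG (m + j + 2) = vG (m + j + 3) * (vG (m + j + 1))⁻¹ := by
      have h : vG (m + j + 2) * vG (m + j + 1) = vG (m + j + 1) * vG (m + j + 3) := by
        have := hr1 (by omega : m + j + 1 < m + j + 2)
        convert this using 3
      calc (vG (m + j + 1))⁻¹ * vG (m + j + 2)
          = (vG (m + j + 1))⁻¹ * (vG (m + j + 2) * vG (m + j + 1)) * (vG (m + j + 1))⁻¹ := by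
            group
        _ = (vG (m + j + 1))⁻¹ * (vG (m + j + 1) * vG (m + j + 3)) * (vG (m + j + 1))⁻¹ := by
            rw [h]
        _ = vG (m + j + 3) * (vG (m + j + 1))⁻¹ := by group
    have hstep : vG (m + j) * vG (m + j + 2) = vG (m + j + 1) * vG (m + j) := by
      have := hr1 (by omega : m + j < m + j + 1)
      exact this.symm
    have hvv : vG (m + j) * (vG (m + j + 2) * vG (m + j + 2)) =
        vG (m + j + 1) * vG (m + j + 1) * vG (m + j) := by
      calc vG (m + j) * (vG (m + j + 2) * vG (m + j + 2))
          = (vG (m + j) * vG (m + j + 2)) * vG (m + j + 2) := by group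
        _ = (vG (m + j + 1) * vG (m + j)) * vG (m + j + 2) := by rw [hstep]
        _ = vG (m + j + 1) * (vG (m + j) * vG (m + j + 2)) := by group
        _ = vG (m + j + 1) * (vG (m + j + 1) * vG (m + j)) := by rw [hstep]
        _ = vG (m + j + 1) * vG (m + j + 1) * vG (m + j) := by group
    have hsub : vG (m + j) * opiG (m + j + 4) ^ e *
          (piG (m + j + 3) ^ e * piG (m + j + 2) ^ e) * Pd e m (j+1) =
        opiG (m + j + 3) ^ e * piG (m + j + 2) ^ e * Pd e m (j+1) * vG (m + j + 1) := by
      calc vG (m + j) * opiG (m + j + 4) ^ e *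
              (piG (m + j + 3) ^ e * piG (m + j + 2) ^ e) * Pd e m (j+1)
          = (vG (m + j) * opiG (m + j + 4) ^ e) * piG (m + j + 3) ^ e *
              piG (m + j + 2) ^ e * Pd e m (j+1) := by group
        _ = (opiG (m + j + 3) ^ e * vG (m + j)) * piG (m + j + 3) ^ e *
              piG (m + j + 2) ^ e * Pd e m (j+1) := by
            rw [hr5 (by omega : m + j < m + j + 3) e]
        _ = opiG (m + j + 3) ^ e * (vG (m + j) * piG (m + j + 3) ^ e) *
              piG (m + j + 2) ^ e * Pd e m (j+1) := by group
        _ = opiG (m + j + 3) ^ e * (piG (m + j + 2) ^ e * vG (m + j)) *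
              piG (m + j + 2) ^ e * Pd e m (j+1) := by
            rw [← hr2 (by omega : m + j < m + j + 2) e]
        _ = opiG (m + j + 3) ^ e * piG (m + j + 2) ^ e *
              (vG (m + j) * (piG (m + j + 2) ^ e * Pd e m (j+1))) := by group
        _ = opiG (m + j + 3) ^ e * piG (m + j + 2) ^ e *
              (Pd e m (j+1) * vG (m + j + 1)) := by rw [← lemD e he m j]
        _ = opiG (m + j + 3) ^ e * piG (m + j + 2) ^ e * Pd e m (j+1) * vG (m + j + 1) := by
            group
    have hcPd : Pd e m (j+1) * vG (m + j + 3) = vG (m + j + 3) * Pd e m (j+1) :=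
      (comm_v_Pd (by omega)).symm.eq
    have hVp : Vp m (j+2) = Vp m (j+1) * vG (m + j + 1) := Vp_succ m (j+1)
    have hPd : Pd e m (j+2) = piG (m + j + 2) ^ e * Pd e m (j+1) := Pd_succ e m (j+1)
    calc opiG m ^ e * vG (m + j + 2)
        = (opiG m ^ e * vG (m + j + 1)) * ((vG (m + j + 1))⁻¹ * vG (m + j + 2)) := by group
      _ = ((Vp m (j+1) * vG (m + j)) * opiG (m + j + 2) ^ e * Pd e m (j+1)) *
            ((vG (m + j + 1))⁻¹ * vG (m + j + 2)) := by rw [ih]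
      _ = ((Vp m (j+1) * vG (m + j)) * opiG (m + j + 2) ^ e * Pd e m (j+1)) *
            (vG (m + j + 3) * (vG (m + j + 1))⁻¹) := by rw [hv1]
      _ = (Vp m (j+1) * vG (m + j)) * opiG (m + j + 2) ^ e *
            (Pd e m (j+1) * vG (m + j + 3)) * (vG (m + j + 1))⁻¹ := by group
      _ = (Vp m (j+1) * vG (m + j)) * opiG (m + j + 2) ^ e *
            (vG (m + j + 3) * Pd e m (j+1)) * (vG (m + j + 1))⁻¹ := by rw [hcPd]
      _ = Vp m (j+1) * vG (m + j) * (opiG (m + j + 2) ^ e * vG (m + j + 3)) *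
            Pd e m (j+1) * (vG (m + j + 1))⁻¹ := by group
      _ = Vp m (j+1) * vG (m + j) * (vG (m + j + 2) * vG (m + j + 2) * opiG (m + j + 4) ^ e *
            (piG (m + j + 3) ^ e * piG (m + j + 2) ^ e)) * Pd e m (j+1) *
            (vG (m + j + 1))⁻¹ := by
          have hA := hA1 (m + j + 2) e he
          rw [show vG (m + j + 2 + 1) = vG (m + j + 3) from rfl,
            show opiG (m + j + 2 + 2) = opiG (m + j + 4) from rfl,
            show piG (m + j + 2 + 1) = piG (m + j + 3) from rfl] at hA
          rw [hA]
      _ = Vp m (j+1) * (vG (m + j) * (vG (m + j + 2) * vG (m + j + 2))) *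
            (opiG (m + j + 4) ^ e * (piG (m + j + 3) ^ e * piG (m + j + 2) ^ e) *
              Pd e m (j+1)) * (vG (m + j + 1))⁻¹ := by group
      _ = Vp m (j+1) * (vG (m + j + 1) * vG (m + j + 1) * vG (m + j)) *
            (opiG (m + j + 4) ^ e * (piG (m + j + 3) ^ e * piG (m + j + 2) ^ e) *
              Pd e m (j+1)) * (vG (m + j + 1))⁻¹ := by rw [hvv]
      _ = Vp m (j+1) * vG (m + j + 1) * vG (m + j + 1) *
            (vG (m + j) * opiG (m + j + 4) ^ e *
              (piG (m + j + 3) ^ e * piG (m + j + 2) ^ e) * Pd e m (j+1)) *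
            (vG (m + j + 1))⁻¹ := by group
      _ = Vp m (j+1) * vG (m + j + 1) * vG (m + j + 1) *
            (opiG (m + j + 3) ^ e * piG (m + j + 2) ^ e * Pd e m (j+1) * vG (m + j + 1)) *
            (vG (m + j + 1))⁻¹ := by rw [hsub]
      _ = (Vp m (j+1) * vG (m + j + 1)) * vG (m + j + 1) * opiG (m + j + 3) ^ e *
            (piG (m + j + 2) ^ e * Pd e m (j+1)) := by group
      _ = (Vp m (j+2) * vG (m + j + 1)) * opiG (m + j + 3) ^ e * Pd e m (j+2) := by
            rw [hVp, hPd]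

/-! ### Main lemma B -/

lemma lemE (e : ℤ) (he : e = 1 ∨ e = -1) (m k : ℕ) :
    opiG m ^ e * Vp m k = Pa e m k * opiG (m + k) ^ e := by
  induction k with
  | zero => simp [Vp_zero, Pa_zero]
  | succ j ih =>
    show opiG m ^ e * Vp m (j+1) = Pa e m (j+1) * opiG (m + j + 1) ^ e
    have hVp : Vp m (j+1) = Vp m j * vG (m + j) := Vp_succ m j
    have hPa : Pa e m (j+1) = Pa e m j * piG (m + j) ^ e := Pa_succ e m j
    calc opiG m ^ e * Vp m (j+1)
        = (opiG m ^ e * Vp m j) * vG (m + j) := by rw [hVp]; group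
      _ = Pa e m j * opiG (m + j) ^ e * vG (m + j) := by rw [ih]
      _ = Pa e m j * (opiG (m + j) ^ e * vG (m + j)) := by group
      _ = Pa e m j * (piG (m + j) ^ e * opiG (m + j + 1) ^ e) := by rw [hr6 (m + j) e he]
      _ = Pa e m (j+1) * opiG (m + j + 1) ^ e := by rw [hPa]; group

lemma lemF (e : ℤ) (he : e = 1 ∨ e = -1) (m k : ℕ) :
    Pa e m (k+1) * vG (m + k) =
      vG (m + k + 1) * Pa e m (k+1) * piG (m + k + 1) ^ e := by
  have hcomm : Pa e m k * vG (m + k + 1) = vG (m + k + 1) * Pa e m k :=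
    (comm_v_Pa (by omega)).symm.eq
  have hPa : Pa e m (k+1) = Pa e m k * piG (m + k) ^ e := Pa_succ e m k
  calc Pa e m (k+1) * vG (m + k)
      = Pa e m k * (piG (m + k) ^ e * vG (m + k)) := by rw [hPa]; group
    _ = Pa e m k * (vG (m + k + 1) * piG (m + k) ^ e * piG (m + k + 1) ^ e) := by
        rw [hr3 (m + k) e he]
    _ = (Pa e m k * vG (m + k + 1)) * piG (m + k) ^ e * piG (m + k + 1) ^ e := by group
    _ = (vG (m + k + 1) * Pa e m k) * piG (m + k) ^ e * piG (m + k + 1) ^ e := by rw [hcomm]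
    _ = vG (m + k + 1) * (Pa e m k * piG (m + k) ^ e) * piG (m + k + 1) ^ e := by group
    _ = vG (m + k + 1) * Pa e m (k+1) * piG (m + k + 1) ^ e := by rw [hPa]

lemma lemB (e : ℤ) (he : e = 1 ∨ e = -1) (m k' : ℕ) :
    (vG (m + k' + 1))⁻¹ * opiG m ^ e =
      Pa e m (k'+2) * opiG (m + k' + 2) ^ e * (Vp m (k'+1) * vG (m + k'))⁻¹ := by
  have hE : opiG m ^ e * Vp m (k'+1) = Pa e m (k'+1) * opiG (m + k' + 1) ^ e :=
    lemE e he m (k'+1)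
  have hF : Pa e m (k'+1) * vG (m + k') =
      vG (m + k' + 1) * Pa e m (k'+1) * piG (m + k' + 1) ^ e := lemF e he m k'
  have hPa : Pa e m (k'+2) = Pa e m (k'+1) * piG (m + k' + 1) ^ e := Pa_succ e m (k'+1)
  have key : opiG m ^ e * (Vp m (k'+1) * vG (m + k')) =
      vG (m + k' + 1) * (Pa e m (k'+2) * opiG (m + k' + 2) ^ e) := by
    calc opiG m ^ e * (Vp m (k'+1) * vG (m + k'))
        = (opiG m ^ e * Vp m (k'+1)) * vG (m + k') := by group
      _ = Pa e m (k'+1) * opiG (m + k' + 1) ^ e * vG (m + k') := by rw [hE]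
      _ = Pa e m (k'+1) * (opiG (m + k' + 1) ^ e * vG (m + k')) := by group
      _ = Pa e m (k'+1) * (vG (m + k') * opiG (m + k' + 2) ^ e) := by
          rw [hr5 (by omega : m + k' < m + k' + 1) e]
      _ = (Pa e m (k'+1) * vG (m + k')) * opiG (m + k' + 2) ^ e := by group
      _ = vG (m + k' + 1) * Pa e m (k'+1) * piG (m + k' + 1) ^ e * opiG (m + k' + 2) ^ e := by
          rw [hF]
      _ = vG (m + k' + 1) * ((Pa e m (k'+1) * piG (m + k' + 1) ^ e) * opiG (m + k' + 2) ^ e) := by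
          group
      _ = vG (m + k' + 1) * (Pa e m (k'+2) * opiG (m + k' + 2) ^ e) := by rw [hPa]
  calc (vG (m + k' + 1))⁻¹ * opiG m ^ e
      = (vG (m + k' + 1))⁻¹ * (opiG m ^ e * (Vp m (k'+1) * vG (m + k'))) *
          (Vp m (k'+1) * vG (m + k'))⁻¹ := by group
    _ = (vG (m + k' + 1))⁻¹ * (vG (m + k' + 1) * (Pa e m (k'+2) * opiG (m + k' + 2) ^ e)) *
          (Vp m (k'+1) * vG (m + k'))⁻¹ := by rw [key]
    _ = Pa e m (k'+2) * opiG (m + k' + 2) ^ e * (Vp m (k'+1) * vG (m + k'))⁻¹ := by group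

/-- Lemma: for all `m ≥ 0`, `k > 0` and `ε = ±1`,
`π̄_m^ε v_{m+k} = (v_m v_{m+1} ⋯ v_{m+k-2} v_{m+k-1}²) π̄_{m+k+1}^ε (π_{m+k} π_{m+k-1} ⋯ π_m)^ε`
and
`v_{m+k}⁻¹ π̄_m^ε = (π_m π_{m+1} ⋯ π_{m+k})^ε π̄_{m+k+1}^ε (v_m v_{m+1} ⋯ v_{m+k-2} v_{m+k-1}²)⁻¹`.
Here `v_m ⋯ v_{m+k-2} v_{m+k-1}²` is written as `(v_m ⋯ v_{m+k-1}) * v_{m+k-1}`. -/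
theorem opi_v_interaction (m k : ℕ) (hk : 0 < k) (e : ℤ) (he : e = 1 ∨ e = -1) :
    (opiG m) ^ e * vG (m + k) =
      (((List.range k).map fun j => vG (m + j)).prod * vG (m + k - 1)) *
        (opiG (m + k + 1)) ^ e *
        ((List.range (k + 1)).map fun j => (piG (m + k - j)) ^ e).prod ∧
    (vG (m + k))⁻¹ * (opiG m) ^ e =
      ((List.range (k + 1)).map fun j => (piG (m + j)) ^ e).prod *
        (opiG (m + k + 1)) ^ e *
        (((List.range k).map fun j => vG (m + j)).prod * vG (m + k - 1))⁻¹ := by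
  obtain ⟨k', rfl⟩ : ∃ k', k = k' + 1 := ⟨k - 1, by omega⟩
  exact ⟨lemA e he m k', lemB e he m k'⟩

end BrinStmt7
end

section
/- Let M be a monosyllable of height h in G_BV and let 0 ≤ m < h. Then: (a) there exist a monosyllable M' of height h+1 and j < h with M = M'·v_j^{-1}; (b) there exist a monosyllable M' of height h+1 and j < h with M = v_j·M'; (c) either there exists a monosyllable M' of height h+1 with M·v_m = M', or there exist a monosyllable M' of height h+1 and j < h with M·v_m = v_j·M'; (d) either there exists a monosyllable M' of height h+1 with v_m^{-1}·M = M', or there exist a monosyllable M' of height h+1 and j < h with v_m^{-1}·M = M'·v_j^{-1}. -/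
namespace BrinStmt9

/-- The free-group generators for the presentation of `G_BV`:
`Sum.inl n` is `v_n`, `Sum.inr (Sum.inl n)` is `π_n`, and
`Sum.inr (Sum.inr n)` is `π̄_n`. -/
def vF (n : ℕ) : FreeGroup (ℕ ⊕ ℕ ⊕ ℕ) := FreeGroup.of (Sum.inl n)
def piF (n : ℕ) : FreeGroup (ℕ ⊕ ℕ ⊕ ℕ) := FreeGroup.of (Sum.inr (Sum.inl n))
def opiF (n : ℕ) : FreeGroup (ℕ ⊕ ℕ ⊕ ℕ) := FreeGroup.of (Sum.inr (Sum.inr n))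

/-- The relators (R1)–(R10) of the presentation of the group `G_BV`. -/
def gbvRels : Set (FreeGroup (ℕ ⊕ ℕ ⊕ ℕ)) :=
  { r | (∃ m q : ℕ, m < q ∧ r = vF q * vF m * (vF m * vF (q+1))⁻¹) ∨
        (∃ m q : ℕ, m < q ∧ r = piF q * vF m * (vF m * piF (q+1))⁻¹) ∨
        (∃ (m : ℕ) (e : ℤ), (e = 1 ∨ e = -1) ∧
            r = (piF m) ^ e * vF m *
              (vF (m+1) * (piF m) ^ e * (piF (m+1)) ^ e)⁻¹) ∨
        (∃ m q : ℕ, q + 1 < m ∧ r = piF q * vF m * (vF m * piF q)⁻¹) ∨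
        (∃ m q : ℕ, m < q ∧ r = opiF q * vF m * (vF m * opiF (q+1))⁻¹) ∨
        (∃ (m : ℕ) (e : ℤ), (e = 1 ∨ e = -1) ∧
            r = (opiF m) ^ e * vF m * ((piF m) ^ e * (opiF (m+1)) ^ e)⁻¹) ∨
        (∃ m q : ℕ, (m + 2 ≤ q ∨ q + 2 ≤ m) ∧
            r = piF q * piF m * (piF m * piF q)⁻¹) ∨
        (∃ m : ℕ, r = piF m * piF (m+1) * piF m *
            (piF (m+1) * piF m * piF (m+1))⁻¹) ∨
        (∃ m q : ℕ, m + 2 ≤ q ∧ r = opiF q * piF m * (piF m * opiF q)⁻¹) ∨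
        (∃ m : ℕ, r = piF m * opiF (m+1) * piF m *
            (opiF (m+1) * piF m * opiF (m+1))⁻¹) }

/-- The group `G_BV`, presented by generators `v_n, π_n, π̄_n` and relations (R1)–(R10). -/
abbrev GBV := PresentedGroup gbvRels

/-- The generator `v_n` of `G_BV`. -/
def vG (n : ℕ) : GBV := PresentedGroup.of (Sum.inl n)
/-- The generator `π_n` of `G_BV`. -/
def piG (n : ℕ) : GBV := PresentedGroup.of (Sum.inr (Sum.inl n))
/-- The generator `π̄_n` of `G_BV`. -/
def opiG (n : ℕ) : GBV := PresentedGroup.of (Sum.inr (Sum.inr n))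

/-- `M` is a monosyllable of height `h` in `G_BV`:  `h ≥ 1` and
`M = Σ₁ * π̄_{h-1}^γ * Σ₂` where `γ = ±1` and `Σ₁, Σ₂` lie in the subgroup
generated by `{π_i : 0 ≤ i ≤ h-2}` (i.e. those `π_i` with `i + 2 ≤ h`). -/
def IsMonosyllable (h : ℕ) (M : GBV) : Prop :=
  1 ≤ h ∧ ∃ (S₁ S₂ : GBV) (γ : ℤ), (γ = 1 ∨ γ = -1) ∧
    S₁ ∈ Subgroup.closure {x : GBV | ∃ i, i + 2 ≤ h ∧ x = piG i} ∧
    S₂ ∈ Subgroup.closure {x : GBV | ∃ i, i + 2 ≤ h ∧ x = piG i} ∧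
    M = S₁ * (opiG (h-1)) ^ γ * S₂

-- quotient map
def fQ : FreeGroup (ℕ ⊕ ℕ ⊕ ℕ) →* GBV := QuotientGroup.mk' _

lemma fQ_v (n : ℕ) : fQ (vF n) = vG n := rfl
lemma fQ_pi (n : ℕ) : fQ (piF n) = piG n := rfl
lemma fQ_opi (n : ℕ) : fQ (opiF n) = opiG n := rfl

lemma rel_one {r : FreeGroup (ℕ ⊕ ℕ ⊕ ℕ)} (hr : r ∈ gbvRels) : fQ r = 1 := by
  exact (QuotientGroup.eq_one_iff r).mpr (Subgroup.subset_normalClosure hr)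

lemma of_rel {a b : FreeGroup (ℕ ⊕ ℕ ⊕ ℕ)} (hr : a * b⁻¹ ∈ gbvRels) :
    fQ a = fQ b := by
  have h1 := rel_one hr
  rw [map_mul, map_inv, mul_inv_eq_one] at h1
  exact h1

lemma rel_pow {a b c : GBV} (h : a * c = c * b) {e : ℤ} (he : e = 1 ∨ e = -1) :
    a ^ e * c = c * b ^ e := by
  rcases he with rfl | rfl
  · simpa using h
  · have h2 : a⁻¹ * c = c * b⁻¹ := by
      calc a⁻¹ * c = a⁻¹ * (c * b) * b⁻¹ := by group
        _ = a⁻¹ * (a * c) * b⁻¹ := by rw [h]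
        _ = c * b⁻¹ := by group
    simpa [zpow_neg] using h2

lemma relR2 {m q : ℕ} (h : m < q) {e : ℤ} (he : e = 1 ∨ e = -1) :
    piG q ^ e * vG m = vG m * piG (q+1) ^ e := by
  refine rel_pow ?_ he
  have := of_rel (a := piF q * vF m) (b := vF m * piF (q+1))
      (Or.inr (Or.inl ⟨m, q, h, rfl⟩))
  simpa [fQ_v, fQ_pi] using this

lemma relR3 (m : ℕ) {e : ℤ} (he : e = 1 ∨ e = -1) :
    piG m ^ e * vG m = vG (m+1) * piG m ^ e * piG (m+1) ^ e := by
  have := of_rel (a := (piF m) ^ e * vF m)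
      (b := vF (m+1) * (piF m) ^ e * (piF (m+1)) ^ e)
      (Or.inr (Or.inr (Or.inl ⟨m, e, he, rfl⟩)))
  simpa [fQ_v, fQ_pi, map_zpow] using this

lemma relR4 {m q : ℕ} (h : q + 1 < m) {e : ℤ} (he : e = 1 ∨ e = -1) :
    piG q ^ e * vG m = vG m * piG q ^ e := by
  refine rel_pow ?_ he
  have := of_rel (a := piF q * vF m) (b := vF m * piF q)
      (Or.inr (Or.inr (Or.inr (Or.inl ⟨m, q, h, rfl⟩))))
  simpa [fQ_v, fQ_pi] using this

lemma relR5 {m q : ℕ} (h : m < q) {e : ℤ} (he : e = 1 ∨ e = -1) :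
    opiG q ^ e * vG m = vG m * opiG (q+1) ^ e := by
  refine rel_pow ?_ he
  have := of_rel (a := opiF q * vF m) (b := vF m * opiF (q+1))
      (Or.inr (Or.inr (Or.inr (Or.inr (Or.inl ⟨m, q, h, rfl⟩)))))
  simpa [fQ_v, fQ_opi] using this

lemma relR6 (m : ℕ) {e : ℤ} (he : e = 1 ∨ e = -1) :
    opiG m ^ e * vG m = piG m ^ e * opiG (m+1) ^ e := by
  have := of_rel (a := (opiF m) ^ e * vF m)
      (b := (piF m) ^ e * (opiF (m+1)) ^ e)
      (Or.inr (Or.inr (Or.inr (Or.inr (Or.inr (Or.inl ⟨m, e, he, rfl⟩))))))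
  simpa [fQ_v, fQ_pi, fQ_opi, map_zpow] using this

lemma neg_pm {e : ℤ} (he : e = 1 ∨ e = -1) : -e = 1 ∨ -e = -1 := by
  rcases he with rfl | rfl
  · right; rfl
  · left; rfl

/-- Derived: `π_m^e v_{m+1} = v_m π_{m+1}^e π_m^e`. -/
lemma relD1 (m : ℕ) {e : ℤ} (he : e = 1 ∨ e = -1) :
    piG m ^ e * vG (m+1) = vG m * piG (m+1) ^ e * piG m ^ e := by
  have h3 := relR3 m (neg_pm he)
  calc piG m ^ e * vG (m+1)
      = piG m ^ e * (vG (m+1) * piG m ^ (-e) * piG (m+1) ^ (-e)) *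
        piG (m+1) ^ e * piG m ^ e := by group
    _ = piG m ^ e * (piG m ^ (-e) * vG m) * piG (m+1) ^ e * piG m ^ e := by rw [h3]
    _ = vG m * piG (m+1) ^ e * piG m ^ e := by group

/-- Derived: `v_m⁻¹ π̄_m^e = π̄_{m+1}^e π_m^e`. -/
lemma relD2 (m : ℕ) {e : ℤ} (he : e = 1 ∨ e = -1) :
    (vG m)⁻¹ * opiG m ^ e = opiG (m+1) ^ e * piG m ^ e := by
  have h6 := relR6 m (neg_pm he)
  calc (vG m)⁻¹ * opiG m ^ e = (opiG m ^ (-e) * vG m)⁻¹ := by group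
    _ = (piG m ^ (-e) * opiG (m+1) ^ (-e))⁻¹ := by rw [h6]
    _ = opiG (m+1) ^ e * piG m ^ e := by group

def Hh (h : ℕ) : Subgroup GBV :=
  Subgroup.closure {x : GBV | ∃ i, i + 2 ≤ h ∧ x = piG i}

lemma Hh_mono {h : ℕ} : Hh h ≤ Hh (h+1) :=
  Subgroup.closure_mono (fun x hx => by
    obtain ⟨i, hi, hxe⟩ := hx; exact ⟨i, by omega, hxe⟩)

lemma piG_mem {i h : ℕ} (hi : i + 2 ≤ h) : piG i ∈ Hh h :=
  Subgroup.subset_closure ⟨i, hi, rfl⟩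

/-- Pushing `v_m` through an element of the subgroup generated by
`π_0, …, π_{h-2}` (both the forward and the "targeted" version). -/
lemma push {h : ℕ} {S : GBV} (hS : S ∈ Hh h) :
    (∀ m, m < h → ∃ m' S', m' < h ∧ S' ∈ Hh (h+1) ∧ S * vG m = vG m' * S') ∧
    (∀ b, b < h → ∃ a S', a < h ∧ S' ∈ Hh (h+1) ∧ S * vG a = vG b * S') := by
  refine Subgroup.closure_induction ?_ ?_ ?_ ?_ hS
  · -- generators
    rintro x ⟨i, hi, rfl⟩
    have h1 : (1 : ℤ) = 1 ∨ (1 : ℤ) = -1 := Or.inl rfl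
    constructor
    · intro m hm
      rcases Nat.lt_trichotomy m i with hlt | rfl | hgt
      · exact ⟨m, piG (i+1), hm, piG_mem (by omega),
          by simpa using relR2 hlt h1⟩
      · exact ⟨m+1, piG m * piG (m+1), by omega,
          mul_mem (piG_mem (by omega)) (piG_mem (by omega)),
          by simpa [mul_assoc] using relR3 m h1⟩
      · rcases Nat.lt_or_ge (i+1) m with hgt2 | hle
        · exact ⟨m, piG i, hm, piG_mem (by omega),
            by simpa using relR4 hgt2 h1⟩
        · have hmeq : m = i + 1 := by omega
          subst hmeq
          exact ⟨i, piG (i+1) * piG i, by omega,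
            mul_mem (piG_mem (by omega)) (piG_mem (by omega)),
            by simpa [mul_assoc] using relD1 i h1⟩
    · intro b hb
      rcases Nat.lt_trichotomy b i with hlt | rfl | hgt
      · exact ⟨b, piG (i+1), hb, piG_mem (by omega),
          by simpa using relR2 hlt h1⟩
      · exact ⟨b+1, piG (b+1) * piG b, by omega,
          mul_mem (piG_mem (by omega)) (piG_mem (by omega)),
          by simpa [mul_assoc] using relD1 b h1⟩
      · rcases Nat.lt_or_ge (i+1) b with hgt2 | hle
        · exact ⟨b, piG i, hb, piG_mem (by omega),
            by simpa using relR4 hgt2 h1⟩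
        · have hbeq : b = i + 1 := by omega
          subst hbeq
          exact ⟨i, piG i * piG (i+1), by omega,
            mul_mem (piG_mem (by omega)) (piG_mem (by omega)),
            by simpa [mul_assoc] using relR3 i h1⟩
  · -- one
    exact ⟨fun m hm => ⟨m, 1, hm, one_mem _, by simp⟩,
           fun b hb => ⟨b, 1, hb, one_mem _, by simp⟩⟩
  · -- mul
    rintro x y hx hy ⟨fx, rx⟩ ⟨fy, ry⟩
    constructor
    · intro m hm
      obtain ⟨m1, Y', hm1, hY, hyv⟩ := fy m hm
      obtain ⟨m2, X', hm2, hX, hxv⟩ := fx m1 hm1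
      exact ⟨m2, X' * Y', hm2, mul_mem hX hY,
        by rw [mul_assoc, hyv, ← mul_assoc, hxv, mul_assoc]⟩
    · intro b hb
      obtain ⟨a1, X', ha1, hX, hxv⟩ := rx b hb
      obtain ⟨a, Y', ha, hY, hyv⟩ := ry a1 ha1
      exact ⟨a, X' * Y', ha, mul_mem hX hY,
        by rw [mul_assoc, hyv, ← mul_assoc, hxv, mul_assoc]⟩
  · -- inv
    rintro x hx ⟨fx, rx⟩
    constructor
    · intro m hm
      obtain ⟨a, S', ha, hS', hxv⟩ := rx m hm
      refine ⟨a, S'⁻¹, ha, inv_mem hS', ?_⟩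
      have h2 : vG m = (x * vG a) * S'⁻¹ := by rw [hxv]; group
      rw [h2]; group
    · intro b hb
      obtain ⟨m', S', hm', hS', hxv⟩ := fx b hb
      refine ⟨m', S'⁻¹, hm', inv_mem hS', ?_⟩
      have h2 : vG m' = (x * vG b) * S'⁻¹ := by rw [hxv]; group
      rw [h2]; group

lemma mono_mk {h : ℕ} {S₁ S₂ : GBV} {γ : ℤ} (hγ : γ = 1 ∨ γ = -1)
    (h1 : S₁ ∈ Hh (h+1)) (h2 : S₂ ∈ Hh (h+1)) :
    IsMonosyllable (h+1) (S₁ * (opiG h) ^ γ * S₂) :=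
  ⟨by omega, S₁, S₂, γ, hγ, h1, h2, rfl⟩

/-- Lemma: if `M` is a monosyllable of height `h` and `0 ≤ m < h`, then
(a) `M = M'·v_j⁻¹`, (b) `M = v_j·M'`, (c) `M·v_m = M'` or `M·v_m = v_j·M'`,
(d) `v_m⁻¹·M = M'` or `v_m⁻¹·M = M'·v_j⁻¹`, where in each case `M'` is some
monosyllable of height `h+1` and `0 ≤ j < h` (the various `M'` and `j` need
not be equal). -/
theorem monosyllable_height_raising (h m : ℕ) (M : GBV)
    (hM : IsMonosyllable h M) (hm : m < h) :
    (∃ M' j, IsMonosyllable (h+1) M' ∧ j < h ∧ M = M' * (vG j)⁻¹) ∧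
    (∃ M' j, IsMonosyllable (h+1) M' ∧ j < h ∧ M = vG j * M') ∧
    ((∃ M', IsMonosyllable (h+1) M' ∧ M * vG m = M') ∨
      (∃ M' j, IsMonosyllable (h+1) M' ∧ j < h ∧ M * vG m = vG j * M')) ∧
    ((∃ M', IsMonosyllable (h+1) M' ∧ (vG m)⁻¹ * M = M') ∨
      (∃ M' j, IsMonosyllable (h+1) M' ∧ j < h ∧ (vG m)⁻¹ * M = M' * (vG j)⁻¹)) := by
  obtain ⟨hh, S₁, S₂, γ, hγ, hS₁, hS₂, rfl⟩ := hM
  have hS₁' : S₁ ∈ Hh h := hS₁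
  have hS₂' : S₂ ∈ Hh h := hS₂
  have hh1 : h - 1 + 1 = h := Nat.succ_pred_eq_of_pos hh
  have hpm : piG (h-1) ^ γ ∈ Hh (h+1) :=
    Subgroup.zpow_mem _ (piG_mem (by omega)) γ
  have hR6 : opiG (h-1) ^ γ * vG (h-1) = piG (h-1) ^ γ * opiG h ^ γ := by
    have := relR6 (h-1) hγ; rwa [hh1] at this
  have hD2 : (vG (h-1))⁻¹ * opiG (h-1) ^ γ = opiG h ^ γ * piG (h-1) ^ γ := by
    have := relD2 (h-1) hγ; rwa [hh1] at this
  refine ⟨?_, ?_, ?_, ?_⟩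
  · -- (a)
    obtain ⟨a, S₂'', ha, hS₂'', hrw⟩ := (push hS₂').2 (h-1) (by omega)
    refine ⟨S₁ * piG (h-1) ^ γ * opiG h ^ γ * S₂'', a,
      mono_mk hγ (mul_mem (Hh_mono hS₁') hpm) hS₂'', ha, ?_⟩
    have key : S₁ * opiG (h-1) ^ γ * S₂ * vG a
        = S₁ * piG (h-1) ^ γ * opiG h ^ γ * S₂'' := by
      calc S₁ * opiG (h-1) ^ γ * S₂ * vG a
          = S₁ * opiG (h-1) ^ γ * (S₂ * vG a) := by group
        _ = S₁ * opiG (h-1) ^ γ * (vG (h-1) * S₂'') := by rw [hrw]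
        _ = S₁ * (opiG (h-1) ^ γ * vG (h-1)) * S₂'' := by group
        _ = S₁ * (piG (h-1) ^ γ * opiG h ^ γ) * S₂'' := by rw [hR6]
        _ = S₁ * piG (h-1) ^ γ * opiG h ^ γ * S₂'' := by group
    rw [← key]; group
  · -- (b)
    obtain ⟨b, S₁'', hb, hS₁'', hrw⟩ := (push hS₁').1 (h-1) (by omega)
    refine ⟨S₁'' * opiG h ^ γ * (piG (h-1) ^ γ * S₂), b,
      mono_mk hγ hS₁'' (mul_mem hpm (Hh_mono hS₂')), hb, ?_⟩
    have hS1eq : S₁ = vG b * S₁'' * (vG (h-1))⁻¹ := by rw [← hrw]; group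
    calc S₁ * opiG (h-1) ^ γ * S₂
        = vG b * S₁'' * ((vG (h-1))⁻¹ * opiG (h-1) ^ γ) * S₂ := by
          rw [hS1eq]; group
      _ = vG b * S₁'' * (opiG h ^ γ * piG (h-1) ^ γ) * S₂ := by rw [hD2]
      _ = vG b * (S₁'' * opiG h ^ γ * (piG (h-1) ^ γ * S₂)) := by group
  · -- (c)
    obtain ⟨m', S₂'', hm', hS₂'', hrw⟩ := (push hS₂').1 m hm
    by_cases hcase : m' = h - 1
    · subst hcase
      refine Or.inl ⟨S₁ * piG (h-1) ^ γ * opiG h ^ γ * S₂'',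
        mono_mk hγ (mul_mem (Hh_mono hS₁') hpm) hS₂'', ?_⟩
      calc S₁ * opiG (h-1) ^ γ * S₂ * vG m
          = S₁ * opiG (h-1) ^ γ * (S₂ * vG m) := by group
        _ = S₁ * opiG (h-1) ^ γ * (vG (h-1) * S₂'') := by rw [hrw]
        _ = S₁ * (opiG (h-1) ^ γ * vG (h-1)) * S₂'' := by group
        _ = S₁ * (piG (h-1) ^ γ * opiG h ^ γ) * S₂'' := by rw [hR6]
        _ = S₁ * piG (h-1) ^ γ * opiG h ^ γ * S₂'' := by group
    · have hm'lt : m' < h - 1 := by omega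
      have hR5 : opiG (h-1) ^ γ * vG m' = vG m' * opiG h ^ γ := by
        have := relR5 hm'lt hγ; rwa [hh1] at this
      obtain ⟨j, S₁'', hj, hS₁'', hrw2⟩ := (push hS₁').1 m' (by omega)
      refine Or.inr ⟨S₁'' * opiG h ^ γ * S₂'', j,
        mono_mk hγ hS₁'' hS₂'', hj, ?_⟩
      calc S₁ * opiG (h-1) ^ γ * S₂ * vG m
          = S₁ * opiG (h-1) ^ γ * (S₂ * vG m) := by group
        _ = S₁ * (opiG (h-1) ^ γ * vG m') * S₂'' := by rw [hrw]; group
        _ = S₁ * (vG m' * opiG h ^ γ) * S₂'' := by rw [hR5]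
        _ = (S₁ * vG m') * opiG h ^ γ * S₂'' := by group
        _ = vG j * (S₁'' * opiG h ^ γ * S₂'') := by rw [hrw2]; group
  · -- (d)
    obtain ⟨a, S₁'', ha, hS₁'', hrw⟩ := (push hS₁').2 m hm
    have inv1 : (vG m)⁻¹ * S₁ = S₁'' * (vG a)⁻¹ := by
      calc (vG m)⁻¹ * S₁ = (vG m)⁻¹ * (S₁ * vG a) * (vG a)⁻¹ := by group
        _ = (vG m)⁻¹ * (vG m * S₁'') * (vG a)⁻¹ := by rw [hrw]
        _ = S₁'' * (vG a)⁻¹ := by group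
    by_cases hcase : a = h - 1
    · subst hcase
      refine Or.inl ⟨S₁'' * opiG h ^ γ * (piG (h-1) ^ γ * S₂),
        mono_mk hγ hS₁'' (mul_mem hpm (Hh_mono hS₂')), ?_⟩
      calc (vG m)⁻¹ * (S₁ * opiG (h-1) ^ γ * S₂)
          = ((vG m)⁻¹ * S₁) * opiG (h-1) ^ γ * S₂ := by group
        _ = (S₁'' * (vG (h-1))⁻¹) * opiG (h-1) ^ γ * S₂ := by rw [inv1]
        _ = S₁'' * ((vG (h-1))⁻¹ * opiG (h-1) ^ γ) * S₂ := by group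
        _ = S₁'' * (opiG h ^ γ * piG (h-1) ^ γ) * S₂ := by rw [hD2]
        _ = S₁'' * opiG h ^ γ * (piG (h-1) ^ γ * S₂) := by group
    · have halt : a < h - 1 := by omega
      have hR5 : opiG (h-1) ^ γ * vG a = vG a * opiG h ^ γ := by
        have := relR5 halt hγ; rwa [hh1] at this
      have hR5' : (vG a)⁻¹ * opiG (h-1) ^ γ = opiG h ^ γ * (vG a)⁻¹ := by
        calc (vG a)⁻¹ * opiG (h-1) ^ γ
            = (vG a)⁻¹ * (opiG (h-1) ^ γ * vG a) * (vG a)⁻¹ := by group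
          _ = (vG a)⁻¹ * (vG a * opiG h ^ γ) * (vG a)⁻¹ := by rw [hR5]
          _ = opiG h ^ γ * (vG a)⁻¹ := by group
      obtain ⟨c, S₂'', hc, hS₂'', hrw2⟩ := (push hS₂').2 a (by omega)
      have inv2 : (vG a)⁻¹ * S₂ = S₂'' * (vG c)⁻¹ := by
        calc (vG a)⁻¹ * S₂ = (vG a)⁻¹ * (S₂ * vG c) * (vG c)⁻¹ := by group
          _ = (vG a)⁻¹ * (vG a * S₂'') * (vG c)⁻¹ := by rw [hrw2]
          _ = S₂'' * (vG c)⁻¹ := by group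
      refine Or.inr ⟨S₁'' * opiG h ^ γ * S₂'', c,
        mono_mk hγ hS₁'' hS₂'', hc, ?_⟩
      calc (vG m)⁻¹ * (S₁ * opiG (h-1) ^ γ * S₂)
          = ((vG m)⁻¹ * S₁) * opiG (h-1) ^ γ * S₂ := by group
        _ = (S₁'' * (vG a)⁻¹) * opiG (h-1) ^ γ * S₂ := by rw [inv1]
        _ = S₁'' * ((vG a)⁻¹ * opiG (h-1) ^ γ) * S₂ := by group
        _ = S₁'' * (opiG h ^ γ * (vG a)⁻¹) * S₂ := by rw [hR5']
        _ = S₁'' * opiG h ^ γ * ((vG a)⁻¹ * S₂) := by group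
        _ = S₁'' * opiG h ^ γ * (S₂'' * (vG c)⁻¹) := by rw [inv2]
        _ = S₁'' * opiG h ^ γ * S₂'' * (vG c)⁻¹ := by group


end BrinStmt9
end

section
/- Let W = M_1·M_2·⋯·M_t in G_BV, where each M_i is a monosyllable of height h_i and h_1 ≤ h_2 ≤ ⋯ ≤ h_t. Then either there exist monosyllables M'_1, …, M'_t, with M'_i of height h_i+1 for each i, and some j < h_t, such that W = M'_1·M'_2·⋯·M'_t·v_j^{-1}, or there exist monosyllables M'_1, …, M'_t, with M'_i of height h_i+1 for each i, such that W = M'_1·M'_2·⋯·M'_t. -/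
namespace BrinStmt10

/-- The free-group generators for the presentation of `G_BV`:
`Sum.inl n` is `v_n`, `Sum.inr (Sum.inl n)` is `π_n`, and
`Sum.inr (Sum.inr n)` is `π̄_n`. -/
def vF (n : ℕ) : FreeGroup (ℕ ⊕ ℕ ⊕ ℕ) := FreeGroup.of (Sum.inl n)
def piF (n : ℕ) : FreeGroup (ℕ ⊕ ℕ ⊕ ℕ) := FreeGroup.of (Sum.inr (Sum.inl n))
def opiF (n : ℕ) : FreeGroup (ℕ ⊕ ℕ ⊕ ℕ) := FreeGroup.of (Sum.inr (Sum.inr n))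

/-- The relators (R1)–(R10) of the presentation of the group `G_BV`. -/
def gbvRels : Set (FreeGroup (ℕ ⊕ ℕ ⊕ ℕ)) :=
  { r | (∃ m q : ℕ, m < q ∧ r = vF q * vF m * (vF m * vF (q+1))⁻¹) ∨
        (∃ m q : ℕ, m < q ∧ r = piF q * vF m * (vF m * piF (q+1))⁻¹) ∨
        (∃ (m : ℕ) (e : ℤ), (e = 1 ∨ e = -1) ∧
            r = (piF m) ^ e * vF m *
              (vF (m+1) * (piF m) ^ e * (piF (m+1)) ^ e)⁻¹) ∨
        (∃ m q : ℕ, q + 1 < m ∧ r = piF q * vF m * (vF m * piF q)⁻¹) ∨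
        (∃ m q : ℕ, m < q ∧ r = opiF q * vF m * (vF m * opiF (q+1))⁻¹) ∨
        (∃ (m : ℕ) (e : ℤ), (e = 1 ∨ e = -1) ∧
            r = (opiF m) ^ e * vF m * ((piF m) ^ e * (opiF (m+1)) ^ e)⁻¹) ∨
        (∃ m q : ℕ, (m + 2 ≤ q ∨ q + 2 ≤ m) ∧
            r = piF q * piF m * (piF m * piF q)⁻¹) ∨
        (∃ m : ℕ, r = piF m * piF (m+1) * piF m *
            (piF (m+1) * piF m * piF (m+1))⁻¹) ∨
        (∃ m q : ℕ, m + 2 ≤ q ∧ r = opiF q * piF m * (piF m * opiF q)⁻¹) ∨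
        (∃ m : ℕ, r = piF m * opiF (m+1) * piF m *
            (opiF (m+1) * piF m * opiF (m+1))⁻¹) }

/-- The group `G_BV`, presented by generators `v_n, π_n, π̄_n` and relations (R1)–(R10). -/
abbrev GBV := PresentedGroup gbvRels

/-- The generator `v_n` of `G_BV`. -/
def vG (n : ℕ) : GBV := PresentedGroup.of (Sum.inl n)
/-- The generator `π_n` of `G_BV`. -/
def piG (n : ℕ) : GBV := PresentedGroup.of (Sum.inr (Sum.inl n))
/-- The generator `π̄_n` of `G_BV`. -/
def opiG (n : ℕ) : GBV := PresentedGroup.of (Sum.inr (Sum.inr n))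

/-- `M` is a monosyllable of height `h` in `G_BV`:  `h ≥ 1` and
`M = Σ₁ * π̄_{h-1}^γ * Σ₂` where `γ = ±1` and `Σ₁, Σ₂` lie in the subgroup
generated by `{π_i : 0 ≤ i ≤ h-2}` (i.e. those `π_i` with `i + 2 ≤ h`). -/
def IsMonosyllable (h : ℕ) (M : GBV) : Prop :=
  1 ≤ h ∧ ∃ (S₁ S₂ : GBV) (γ : ℤ), (γ = 1 ∨ γ = -1) ∧
    S₁ ∈ Subgroup.closure {x : GBV | ∃ i, i + 2 ≤ h ∧ x = piG i} ∧
    S₂ ∈ Subgroup.closure {x : GBV | ∃ i, i + 2 ≤ h ∧ x = piG i} ∧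
    M = S₁ * (opiG (h-1)) ^ γ * S₂

/-! Relation (R6) rewrites `π̄_m^γ` as `π_m^γ π̄_{m+1}^γ v_m⁻¹`, which raises the height of a
monosyllable by one at the price of a trailing `v_m⁻¹`. Relations (R2)–(R4) move a `v_m⁻¹` with
`m < h` to the right through the subgroup generated by `π_0, …, π_{h-2}`, raising indices on the
way and leaving some `v_j⁻¹` with `j < h`. At the `π̄_{h-1}` of a monosyllable of height `h`,
(R5) lets `v_j⁻¹` pass (raising `π̄`) when `j < h - 1`, and (R6) absorbs it when `j = h - 1`.
Since the heights are non-decreasing, the bound `j < h_i` left behind by one monosyllable is the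
entry bound needed by the next, so at most one `v_j⁻¹` travels through the whole product. -/

lemma piG_mul_vG_of_lt {m q : ℕ} (hmq : m < q) : piG q * vG m = vG m * piG (q + 1) := by
  have h := PresentedGroup.mk_eq_mk_of_mul_inv_mem (rels := gbvRels)
    (Or.inr (Or.inl ⟨m, q, hmq, rfl⟩))
  simp only [map_mul] at h
  exact h

lemma piG_zpow_mul_vG (m : ℕ) {e : ℤ} (he : e = 1 ∨ e = -1) :
    piG m ^ e * vG m = vG (m + 1) * piG m ^ e * piG (m + 1) ^ e := by
  have h := PresentedGroup.mk_eq_mk_of_mul_inv_mem (rels := gbvRels)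
    (Or.inr (Or.inr (Or.inl ⟨m, e, he, rfl⟩)))
  simp only [map_mul, map_zpow] at h
  exact h

lemma piG_mul_vG_of_add_one_lt {m q : ℕ} (hqm : q + 1 < m) : piG q * vG m = vG m * piG q := by
  have h := PresentedGroup.mk_eq_mk_of_mul_inv_mem (rels := gbvRels)
    (Or.inr (Or.inr (Or.inr (Or.inl ⟨m, q, hqm, rfl⟩))))
  simp only [map_mul] at h
  exact h

lemma opiG_mul_vG_of_lt {m q : ℕ} (hmq : m < q) : opiG q * vG m = vG m * opiG (q + 1) := by
  have h := PresentedGroup.mk_eq_mk_of_mul_inv_mem (rels := gbvRels)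
    (Or.inr (Or.inr (Or.inr (Or.inr (Or.inl ⟨m, q, hmq, rfl⟩)))))
  simp only [map_mul] at h
  exact h

lemma opiG_zpow_mul_vG (m : ℕ) {e : ℤ} (he : e = 1 ∨ e = -1) :
    opiG m ^ e * vG m = piG m ^ e * opiG (m + 1) ^ e := by
  have h := PresentedGroup.mk_eq_mk_of_mul_inv_mem (rels := gbvRels)
    (Or.inr (Or.inr (Or.inr (Or.inr (Or.inr (Or.inl ⟨m, e, he, rfl⟩))))))
  simp only [map_mul, map_zpow] at h
  exact h

lemma inv_mul_zpow_of_mul_eq_mul {G : Type*} [Group G] {g x y : G} (hxy : x * g = g * y)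
    (e : ℤ) : g⁻¹ * x ^ e = y ^ e * g⁻¹ :=
  (SemiconjBy.inv_symm_left (SemiconjBy.zpow_right hxy.symm e) :)

lemma vG_inv_mul_piG_zpow_of_add_one_lt {i m : ℕ} (him : i + 1 < m) (e : ℤ) :
    (vG m)⁻¹ * piG i ^ e = piG i ^ e * (vG m)⁻¹ :=
  inv_mul_zpow_of_mul_eq_mul (piG_mul_vG_of_add_one_lt him) e

lemma vG_inv_mul_piG_zpow_of_lt {i m : ℕ} (hmi : m < i) (e : ℤ) :
    (vG m)⁻¹ * piG i ^ e = piG (i + 1) ^ e * (vG m)⁻¹ :=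
  inv_mul_zpow_of_mul_eq_mul (piG_mul_vG_of_lt hmi) e

lemma vG_inv_mul_opiG_zpow_of_lt {k m : ℕ} (hmk : m < k) (e : ℤ) :
    (vG m)⁻¹ * opiG k ^ e = opiG (k + 1) ^ e * (vG m)⁻¹ :=
  inv_mul_zpow_of_mul_eq_mul (opiG_mul_vG_of_lt hmk) e

lemma vG_succ_inv_mul_piG_zpow (i : ℕ) {e : ℤ} (he : e = 1 ∨ e = -1) :
    (vG (i + 1))⁻¹ * piG i ^ e = piG i ^ e * piG (i + 1) ^ e * (vG i)⁻¹ := by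
  rw [inv_mul_eq_iff_eq_mul]
  simp only [← mul_assoc]
  rw [← piG_zpow_mul_vG i he, mul_inv_cancel_right]

lemma vG_inv_mul_piG_zpow (i : ℕ) {e : ℤ} (he : e = 1 ∨ e = -1) :
    (vG i)⁻¹ * piG i ^ e = piG (i + 1) ^ e * piG i ^ e * (vG (i + 1))⁻¹ := by
  have h := congrArg (·⁻¹) (piG_zpow_mul_vG i (e := -e) (by omega))
  simpa only [mul_inv_rev, zpow_neg, inv_inv, mul_assoc] using h

lemma vG_inv_mul_opiG_zpow (m : ℕ) {γ : ℤ} (hγ : γ = 1 ∨ γ = -1) :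
    (vG m)⁻¹ * opiG m ^ γ = opiG (m + 1) ^ γ * piG m ^ γ := by
  have h := congrArg (·⁻¹) (opiG_zpow_mul_vG m (e := -γ) (by omega))
  simpa only [mul_inv_rev, zpow_neg, inv_inv] using h

lemma opiG_zpow_eq (m : ℕ) {γ : ℤ} (hγ : γ = 1 ∨ γ = -1) :
    opiG m ^ γ = piG m ^ γ * opiG (m + 1) ^ γ * (vG m)⁻¹ := by
  rw [eq_mul_inv_iff_mul_eq, opiG_zpow_mul_vG m hγ]

abbrev lowPiSubgroup (h : ℕ) : Subgroup GBV := Subgroup.closure {x | ∃ i, i + 2 ≤ h ∧ x = piG i}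

lemma piG_zpow_mem_lowPiSubgroup {i h : ℕ} (hi : i + 2 ≤ h) (e : ℤ) :
    piG i ^ e ∈ lowPiSubgroup h :=
  Subgroup.zpow_mem _ (Subgroup.subset_closure (by exact ⟨i, hi, rfl⟩)) e

lemma lowPiSubgroup_mono : Monotone lowPiSubgroup :=
  fun _ _ hhh' => Subgroup.closure_mono <| by rintro _ ⟨i, hi, rfl⟩; exact ⟨i, by omega, rfl⟩

/-- The optional trailing letter `v_j⁻¹`; `none` stands for the empty word. -/
def vInvOpt (o : Option ℕ) : GBV := o.elim 1 fun j => (vG j)⁻¹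

lemma exists_vInvOpt_mul_piG_zpow {h i : ℕ} (hi : i + 2 ≤ h) {e : ℤ} (he : e = 1 ∨ e = -1)
    {o : Option ℕ} (ho : ∀ m ∈ o, m < h) :
    ∃ y ∈ lowPiSubgroup (h + 1), ∃ o' : Option ℕ, (∀ j ∈ o', j < h) ∧
      vInvOpt o * piG i ^ e = y * vInvOpt o' := by
  have mem := fun {i : ℕ} (hi : i + 2 ≤ h + 1) => piG_zpow_mem_lowPiSubgroup hi e
  cases o with
  | none => exact ⟨piG i ^ e, mem (by omega), none, by simp, by simp [vInvOpt]⟩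
  | some m =>
    have hm : m < h := ho m rfl
    rcases lt_trichotomy (i + 1) m with him | rfl | hmi
    · exact ⟨piG i ^ e, mem (by omega), some m, by simpa using hm,
        vG_inv_mul_piG_zpow_of_add_one_lt him e⟩
    · exact ⟨piG i ^ e * piG (i + 1) ^ e, mul_mem (mem (by omega)) (mem (by omega)), some i,
        by rintro _ ⟨⟩; omega, vG_succ_inv_mul_piG_zpow i he⟩
    · rcases (Nat.lt_succ_iff.mp hmi).eq_or_lt with rfl | hmi
      · exact ⟨piG (m + 1) ^ e * piG m ^ e, mul_mem (mem (by omega)) (mem (by omega)),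
          some (m + 1), by rintro _ ⟨⟩; omega, vG_inv_mul_piG_zpow m he⟩
      · exact ⟨piG (i + 1) ^ e, mem (by omega), some m, by simpa using hm,
          vG_inv_mul_piG_zpow_of_lt hmi e⟩

lemma exists_vInvOpt_mul_of_mem_lowPiSubgroup {h : ℕ} {S : GBV} (hS : S ∈ lowPiSubgroup h)
    {o : Option ℕ} (ho : ∀ m ∈ o, m < h) :
    ∃ S' ∈ lowPiSubgroup (h + 1), ∃ o' : Option ℕ, (∀ j ∈ o', j < h) ∧
      vInvOpt o * S = S' * vInvOpt o' := by
  induction hS using Subgroup.closure_induction'' generalizing o with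
  | mem x hx =>
    obtain ⟨i, hi, rfl⟩ := hx
    simpa only [zpow_one] using exists_vInvOpt_mul_piG_zpow hi (e := 1) (Or.inl rfl) ho
  | inv_mem x hx =>
    obtain ⟨i, hi, rfl⟩ := hx
    simpa only [zpow_neg_one] using exists_vInvOpt_mul_piG_zpow hi (e := -1) (Or.inr rfl) ho
  | one => exact ⟨1, one_mem _, o, ho, by simp⟩
  | mul x y _ _ hx hy =>
    obtain ⟨x', hx', o₁, ho₁, ex⟩ := hx ho
    obtain ⟨y', hy', o₂, ho₂, ey⟩ := hy ho₁
    exact ⟨x' * y', mul_mem hx' hy', o₂, ho₂, by rw [← mul_assoc, ex, mul_assoc, ey, mul_assoc]⟩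

lemma exists_vInvOpt_mul_opiG_zpow (k : ℕ) {γ : ℤ} (hγ : γ = 1 ∨ γ = -1) {o : Option ℕ}
    (ho : ∀ m ∈ o, m < k + 1) :
    ∃ A ∈ lowPiSubgroup (k + 2), ∃ B ∈ lowPiSubgroup (k + 2), ∃ o' : Option ℕ,
      (∀ j ∈ o', j < k + 1) ∧ vInvOpt o * opiG k ^ γ = A * opiG (k + 1) ^ γ * B * vInvOpt o' := by
  have mem : piG k ^ γ ∈ lowPiSubgroup (k + 2) := piG_zpow_mem_lowPiSubgroup le_rfl γ
  cases o with
  | none =>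
    exact ⟨piG k ^ γ, mem, 1, one_mem _, some k, by simp,
      by simp only [vInvOpt, Option.elim, one_mul, mul_one, opiG_zpow_eq k hγ]⟩
  | some m =>
    rcases (Nat.lt_succ_iff.mp (ho m rfl)).eq_or_lt with rfl | hmk
    · exact ⟨1, one_mem _, piG m ^ γ, mem, none, by simp,
        by simp only [vInvOpt, Option.elim, one_mul, mul_one, vG_inv_mul_opiG_zpow m hγ]⟩
    · exact ⟨1, one_mem _, 1, one_mem _, some m, by rintro _ ⟨⟩; omega,
        by simp only [vInvOpt, Option.elim, one_mul, mul_one, vG_inv_mul_opiG_zpow_of_lt hmk]⟩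

lemma IsMonosyllable.exists_vInvOpt_mul {h : ℕ} {M : GBV} (hM : IsMonosyllable h M)
    {o : Option ℕ} (ho : ∀ m ∈ o, m < h) :
    ∃ M', IsMonosyllable (h + 1) M' ∧ ∃ o' : Option ℕ, (∀ j ∈ o', j < h) ∧
      vInvOpt o * M = M' * vInvOpt o' := by
  obtain ⟨hh, S₁, S₂, γ, hγ, hS₁, hS₂, rfl⟩ := hM
  obtain ⟨k, rfl⟩ : ∃ k, h = k + 1 := ⟨h - 1, by omega⟩
  obtain ⟨S₁', hS₁', o₁, ho₁, e₁⟩ := exists_vInvOpt_mul_of_mem_lowPiSubgroup hS₁ ho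
  obtain ⟨A, hA, B, hB, o₂, ho₂, e₂⟩ := exists_vInvOpt_mul_opiG_zpow k hγ ho₁
  obtain ⟨S₂', hS₂', o₃, ho₃, e₃⟩ := exists_vInvOpt_mul_of_mem_lowPiSubgroup hS₂ ho₂
  refine ⟨S₁' * A * opiG (k + 1) ^ γ * (B * S₂'), ⟨by omega, S₁' * A, B * S₂', γ, hγ,
    mul_mem hS₁' hA, mul_mem (lowPiSubgroup_mono le_rfl hB) hS₂', rfl⟩, o₃, ho₃, ?_⟩
  calc vInvOpt o * (S₁ * opiG (k + 1 - 1) ^ γ * S₂)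
      = vInvOpt o * S₁ * opiG k ^ γ * S₂ := by simp only [Nat.add_sub_cancel, mul_assoc]
    _ = S₁' * (vInvOpt o₁ * opiG k ^ γ) * S₂ := by rw [e₁, mul_assoc S₁']
    _ = S₁' * A * opiG (k + 1) ^ γ * B * (vInvOpt o₂ * S₂) := by rw [e₂]; simp only [mul_assoc]
    _ = S₁' * A * opiG (k + 1) ^ γ * (B * S₂') * vInvOpt o₃ := by rw [e₃]; simp only [mul_assoc]

lemma exists_vInvOpt_mul_prod_ofFn (t : ℕ) (M : Fin (t + 1) → GBV) (h : Fin (t + 1) → ℕ)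
    (hM : ∀ i, IsMonosyllable (h i) (M i)) (hh : Monotone h) {o : Option ℕ}
    (ho : ∀ m ∈ o, m < h 0) :
    ∃ M' : Fin (t + 1) → GBV, (∀ i, IsMonosyllable (h i + 1) (M' i)) ∧
      ∃ o' : Option ℕ, (∀ j ∈ o', j < h (Fin.last t)) ∧
        vInvOpt o * (List.ofFn M).prod = (List.ofFn M').prod * vInvOpt o' := by
  induction t generalizing o with
  | zero =>
    obtain ⟨N, hN, o₁, ho₁, e₁⟩ := (hM 0).exists_vInvOpt_mul ho
    refine ⟨fun _ => N, fun i => by rwa [Fin.fin_one_eq_zero i], o₁, ho₁, ?_⟩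
    simpa only [List.ofFn_succ, List.ofFn_zero, List.prod_cons, List.prod_nil, mul_one] using e₁
  | succ t ih =>
    obtain ⟨N, hN, o₁, ho₁, e₁⟩ := (hM 0).exists_vInvOpt_mul ho
    obtain ⟨T, hT, o₂, ho₂, e₂⟩ := ih (fun i => M i.succ) (fun i => h i.succ) (fun i => hM i.succ)
      (hh.comp Fin.strictMono_succ.monotone) (o := o₁)
      (fun j hj => (ho₁ j hj).trans_le (hh (Fin.zero_le _)))
    refine ⟨Fin.cons N T, Fin.forall_fin_succ.2 ⟨hN, hT⟩, o₂, ho₂, ?_⟩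
    rw [List.ofFn_succ, List.ofFn_cons, List.prod_cons, List.prod_cons, ← mul_assoc, e₁,
      mul_assoc, e₂, mul_assoc]

/-- Lemma: if `W = M_1 M_2 ⋯ M_t` where each `M_i` is a monosyllable of height `h_i`
and `h_1 ≤ h_2 ≤ ⋯ ≤ h_t`, then either `W = M'_1 M'_2 ⋯ M'_t · v_j⁻¹` for some
`j < h_t`, or `W = M'_1 M'_2 ⋯ M'_t`, where each `M'_i` is a monosyllable of
height `h_i + 1`. -/
theorem monosyllable_product_height_raising (t : ℕ) (ht : 0 < t)
    (M : Fin t → GBV) (h : Fin t → ℕ)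
    (hmono : ∀ i, IsMonosyllable (h i) (M i))
    (hsorted : ∀ i j : Fin t, i ≤ j → h i ≤ h j) :
    ∃ M' : Fin t → GBV, (∀ i, IsMonosyllable (h i + 1) (M' i)) ∧
      ((∃ j, j < h ⟨t - 1, Nat.sub_lt ht Nat.one_pos⟩ ∧
          (List.ofFn M).prod = (List.ofFn M').prod * (vG j)⁻¹) ∨
        (List.ofFn M).prod = (List.ofFn M').prod) := by
  obtain ⟨n, rfl⟩ : ∃ n, t = n + 1 := ⟨t - 1, by omega⟩
  obtain ⟨M', hM', o, ho, e⟩ :=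
    exists_vInvOpt_mul_prod_ofFn n M h hmono hsorted (o := none) (by simp)
  refine ⟨M', hM', ?_⟩
  cases o with
  | none => exact Or.inr (by simpa [vInvOpt] using e)
  | some j => exact Or.inl ⟨j, ho j rfl, by simpa [vInvOpt] using e⟩

end BrinStmt10
end
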